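/- arXiv:2605.17941 — 8 statements merged into one kernel-verified Lean document; each statement's English description precedes it below -/
import Mathlib

section
/- Let d ≥ 1, let A be a d×d complex matrix having d pairwise distinct eigenvalues λ_1,…,λ_d with a corresponding eigenvector basis φ_1,…,φ_d, and let B ∈ ℂ^d whose coordinates b_k in the basis (φ_k) are all nonzero. Let λ > 0 satisfy λ_i − λ_j − λ ≠ 0 for all 1 ≤ i, j ≤ d. Then there exist a unique invertible d×d complex matrix T and a unique linear form K : ℂ^d → ℂ (a 1×d row vector) such that T·A + B·K = (A − λ·I)·T and T·B = B. -/
open Matrix Polynomial Finset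

namespace Statement0Aux

lemma cauchy_inj {d : ℕ} (x y : Fin d → ℂ) (hx : Function.Injective x)
    (hy : Function.Injective y) (hxy : ∀ i j, x i ≠ y j) (c : Fin d → ℂ)
    (h : ∀ k, ∑ j, c j / (x k - y j) = 0) : ∀ j, c j = 0 := by
  rcases Nat.eq_zero_or_pos d with h0 | h0
  · subst h0; exact fun j => j.elim0
  set p : ℂ[X] := ∑ j, Polynomial.C (c j) * ∏ l ∈ Finset.univ.erase j, (X - Polynomial.C (y l))
    with hp
  have hdeg : p.natDegree < d := by
    have : p.natDegree ≤ d - 1 := by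
      apply Polynomial.natDegree_sum_le_of_forall_le
      intro j _
      calc (Polynomial.C (c j) * ∏ l ∈ Finset.univ.erase j, (X - Polynomial.C (y l))).natDegree
          ≤ (Polynomial.C (c j)).natDegree
            + (∏ l ∈ Finset.univ.erase j, (X - Polynomial.C (y l))).natDegree :=
            Polynomial.natDegree_mul_le
        _ ≤ 0 + ∑ l ∈ Finset.univ.erase j, (X - Polynomial.C (y l)).natDegree := by
            gcongr
            · simp
            · exact Polynomial.natDegree_prod_le _ _
        _ ≤ d - 1 := by
            simp [Polynomial.natDegree_X_sub_C, Finset.card_erase_of_mem]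
    omega
  have hev : ∀ k, p.eval (x k) = 0 := by
    intro k
    have : p.eval (x k) = (∑ j, c j / (x k - y j)) * ∏ l, (x k - y l) := by
      rw [Finset.sum_mul, hp]
      simp only [Polynomial.eval_finset_sum, Polynomial.eval_mul, Polynomial.eval_C,
        Polynomial.eval_prod, Polynomial.eval_sub, Polynomial.eval_X]
      refine Finset.sum_congr rfl fun j _ => ?_
      rw [← Finset.mul_prod_erase _ _ (Finset.mem_univ j)]
      have hne : x k - y j ≠ 0 := sub_ne_zero.mpr (hxy k j)
      field_simp
    rw [this, h k, zero_mul]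
  have hp0 : p = 0 :=
    p.eq_zero_of_natDegree_lt_card_of_eval_eq_zero hx hev (by simpa using hdeg)
  intro j
  have h1 : p.eval (y j) = c j * ∏ l ∈ Finset.univ.erase j, (y j - y l) := by
    rw [hp]
    simp only [Polynomial.eval_finset_sum, Polynomial.eval_mul, Polynomial.eval_C,
      Polynomial.eval_prod, Polynomial.eval_sub, Polynomial.eval_X]
    rw [Finset.sum_eq_single j]
    · intro i _ hij
      apply mul_eq_zero_of_right
      exact Finset.prod_eq_zero (Finset.mem_erase.mpr ⟨Ne.symm hij, Finset.mem_univ j⟩)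
        (by simp)
    · intro hj; exact absurd (Finset.mem_univ j) hj
  have h2 : (∏ l ∈ Finset.univ.erase j, (y j - y l)) ≠ 0 := by
    apply Finset.prod_ne_zero_iff.mpr
    intro l hl
    exact sub_ne_zero.mpr fun e => (Finset.mem_erase.mp hl).1 (hy e.symm)
  have h3 : c j * ∏ l ∈ Finset.univ.erase j, (y j - y l) = 0 := by
    rw [← h1, hp0, Polynomial.eval_zero]
  exact (mul_eq_zero.mp h3).resolve_right h2

end Statement0Aux

namespace Statement0Aux

lemma mulVec_finset_sum {d m : ℕ} {ι : Type*} (M : Matrix (Fin m) (Fin d) ℂ) (s : Finset ι)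
    (f : ι → Fin d → ℂ) : M.mulVec (∑ i ∈ s, f i) = ∑ i ∈ s, M.mulVec (f i) := by
  simp only [← Matrix.mulVecLin_apply]
  exact map_sum M.mulVecLin f s

lemma vecMulVec_mulVec {d : ℕ} (B K v : Fin d → ℂ) :
    (Matrix.vecMulVec B K).mulVec v = (K ⬝ᵥ v) • B := by
  ext i
  simp [Matrix.mulVec, dotProduct, Matrix.vecMulVec_apply, Finset.sum_mul, Finset.mul_sum,
    mul_comm, mul_left_comm]

lemma dp_sum {d : ℕ} {ι : Type*} (K : Fin d → ℂ) (s : Finset ι) (f : ι → Fin d → ℂ) :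
    K ⬝ᵥ (∑ j ∈ s, f j) = ∑ j ∈ s, K ⬝ᵥ f j := by
  simp only [dotProduct, Finset.sum_apply, Finset.mul_sum]
  exact Finset.sum_comm

lemma key_inj {d : ℕ} (hd : 1 ≤ d) (A : Matrix (Fin d) (Fin d) ℂ)
    (eig : Fin d → ℂ) (heig : Function.Injective eig)
    (φ : Fin d → (Fin d → ℂ)) (hφ : LinearIndependent ℂ φ)
    (hAφ : ∀ i, A.mulVec (φ i) = eig i • φ i)
    (B : Fin d → ℂ) (b : Fin d → ℂ)
    (hB : B = ∑ k, b k • φ k) (hb : ∀ k, b k ≠ 0)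
    (lam : ℝ)
    (hres : ∀ i j, eig i - eig j - (lam : ℂ) ≠ 0)
    (T : Matrix (Fin d) (Fin d) ℂ) (K : Fin d → ℂ)
    (hTK : T * A + Matrix.vecMulVec B K = (A - (lam : ℂ) • 1) * T)
    (hTB : T.mulVec B = 0) : T = 0 ∧ K = 0 := by
  haveI : Nonempty (Fin d) := ⟨⟨0, hd⟩⟩
  have hcard : Fintype.card (Fin d) = Module.finrank ℂ (Fin d → ℂ) := by simp
  set bas : Module.Basis (Fin d) ℂ (Fin d → ℂ) := basisOfLinearIndependentOfCardEqFinrank hφ hcard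
    with hbasdef
  have hbas : ⇑bas = φ := coe_basisOfLinearIndependentOfCardEqFinrank _ _
  set u : Fin d → (Fin d → ℂ) := fun j => T.mulVec (φ j) with hudef
  set t : Fin d → Fin d → ℂ := fun k j => bas.repr (u j) k with htdef
  have hu : ∀ j, u j = ∑ k, t k j • φ k := by
    intro j
    conv_lhs => rw [← bas.sum_repr (u j)]
    simp [htdef, hbas]
  -- the key coordinate relation
  have star : ∀ j, eig j • u j + (K ⬝ᵥ φ j) • B = A.mulVec (u j) - (lam : ℂ) • u j := by
    intro j
    have h1 := congrArg (fun M : Matrix (Fin d) (Fin d) ℂ => M.mulVec (φ j)) hTK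
    simp only [Matrix.add_mulVec, Matrix.sub_mul, Matrix.smul_mul, Matrix.one_mul,
      ← Matrix.mulVec_mulVec, Matrix.sub_mulVec, Matrix.smul_mulVec] at h1
    rw [hAφ j, Matrix.mulVec_smul, vecMulVec_mulVec] at h1
    exact h1
  have hAu : ∀ j, A.mulVec (u j) = ∑ k, (t k j * eig k) • φ k := by
    intro j
    rw [hu j, mulVec_finset_sum]
    refine Finset.sum_congr rfl fun k _ => ?_
    rw [Matrix.mulVec_smul, hAφ k, smul_smul]
  have hrel : ∀ j k, eig j * t k j + (K ⬝ᵥ φ j) * b k = t k j * eig k - (lam : ℂ) * t k j := by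
    intro j k
    have h2 := congrArg (fun v => bas.repr v k) (star j)
    simp only [map_add, map_sub, _root_.map_smul, Finsupp.coe_add, Finsupp.coe_sub, Finsupp.coe_smul,
      Pi.add_apply, Pi.sub_apply, Pi.smul_apply, smul_eq_mul] at h2
    have e1 : bas.repr (u j) k = t k j := rfl
    have e2 : bas.repr B k = b k := by
      rw [hB, show (∑ k, b k • φ k) = ∑ k, b k • bas k by rw [hbas], bas.repr_sum_self]
    have e3 : bas.repr (A.mulVec (u j)) k = t k j * eig k := by
      rw [hAu j, show (∑ k, (t k j * eig k) • φ k) = ∑ k, (t k j * eig k) • bas k by rw [hbas],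
        bas.repr_sum_self]
    rw [e1, e2, e3] at h2
    exact h2
  have ht : ∀ k j, t k j = (K ⬝ᵥ φ j) * b k / (eig k - eig j - (lam : ℂ)) := by
    intro k j
    rw [eq_div_iff (hres k j)]
    linear_combination -(hrel j k)
  -- use T B = 0
  have hTB2 : ∑ j, b j • u j = 0 := by
    rw [← hTB, hB, mulVec_finset_sum]
    exact Finset.sum_congr rfl fun j _ => (Matrix.mulVec_smul _ _ _).symm
  have hsum : ∀ k, ∑ j, b j * t k j = 0 := by
    intro k
    have h3 := congrArg (fun v => bas.repr v k) hTB2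
    simp only [map_sum, _root_.map_smul, map_zero, Finsupp.coe_smul, Finsupp.coe_finset_sum, Finsupp.coe_zero,
      Finset.sum_apply, Pi.smul_apply, Pi.zero_apply, smul_eq_mul] at h3
    exact h3
  have hc : ∀ k, ∑ j, (b j * (K ⬝ᵥ φ j)) / (eig k - (eig j + (lam : ℂ))) = 0 := by
    intro k
    have h4 : b k * ∑ j, (b j * (K ⬝ᵥ φ j)) / (eig k - (eig j + (lam : ℂ)))
        = ∑ j, b j * t k j := by
      rw [Finset.mul_sum]
      refine Finset.sum_congr rfl fun j _ => ?_
      rw [ht k j, show eig k - (eig j + (lam : ℂ)) = eig k - eig j - (lam : ℂ) by ring]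
      field_simp
    rw [hsum k] at h4
    exact (mul_eq_zero.mp h4).resolve_left (hb k)
  have hKφ : ∀ j, K ⬝ᵥ φ j = 0 := by
    have hy : Function.Injective (fun j => eig j + (lam : ℂ)) := by
      intro a c h; exact heig (by simpa using h)
    have hxy : ∀ i j, eig i ≠ eig j + (lam : ℂ) := by
      intro i j e
      exact hres i j (by rw [e]; ring)
    have := cauchy_inj eig (fun j => eig j + (lam : ℂ)) heig hy hxy
      (fun j => b j * (K ⬝ᵥ φ j)) hc
    intro j
    have := this j
    exact (mul_eq_zero.mp this).resolve_left (hb j)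
  have hK : K = 0 := by
    have hKv : ∀ v : Fin d → ℂ, K ⬝ᵥ v = 0 := by
      intro v
      conv_lhs => rw [← bas.sum_repr v]
      rw [dp_sum]
      refine Finset.sum_eq_zero fun j _ => ?_
      rw [dotProduct_smul, show bas j = φ j by rw [← hbas], hKφ j, smul_zero]
    funext i
    have := hKv (Pi.single i 1)
    rwa [dotProduct_single, mul_one] at this
  have hu0 : ∀ j, u j = 0 := by
    intro j
    rw [hu j]
    refine Finset.sum_eq_zero fun k _ => ?_
    rw [ht k j, hKφ j, zero_mul, zero_div, zero_smul]
  have hT : T = 0 := by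
    have hTv : ∀ v : Fin d → ℂ, T.mulVec v = 0 := by
      intro v
      conv_lhs => rw [← bas.sum_repr v]
      rw [mulVec_finset_sum]
      refine Finset.sum_eq_zero fun j _ => ?_
      rw [Matrix.mulVec_smul, show bas j = φ j by rw [← hbas], show T.mulVec (φ j) = u j from rfl,
        hu0 j, smul_zero]
    ext i j
    have := congrFun (hTv (Pi.single j 1)) i
    simpa using this
  exact ⟨hT, hK⟩

end Statement0Aux


namespace Statement0Aux

lemma krylov_indep {d : ℕ} (hd : 1 ≤ d) (A : Matrix (Fin d) (Fin d) ℂ)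
    (eig : Fin d → ℂ) (heig : Function.Injective eig)
    (φ : Fin d → (Fin d → ℂ)) (hφ : LinearIndependent ℂ φ)
    (hAφ : ∀ i, A.mulVec (φ i) = eig i • φ i)
    (B : Fin d → ℂ) (b : Fin d → ℂ)
    (hB : B = ∑ k, b k • φ k) (hb : ∀ k, b k ≠ 0) :
    LinearIndependent ℂ (fun n : Fin d => (A ^ (n : ℕ)).mulVec B) := by
  have hpow : ∀ (n : ℕ) (k : Fin d), (A ^ n).mulVec (φ k) = (eig k ^ n) • φ k := by
    intro n k
    induction n with
    | zero => simp [Matrix.one_mulVec]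
    | succ n ih =>
      rw [pow_succ', ← Matrix.mulVec_mulVec, ih, Matrix.mulVec_smul, hAφ k, smul_smul, pow_succ]
  have hψ : ∀ n : ℕ, (A ^ n).mulVec B = ∑ k, (b k * eig k ^ n) • φ k := by
    intro n
    rw [hB, mulVec_finset_sum]
    refine Finset.sum_congr rfl fun k _ => ?_
    rw [Matrix.mulVec_smul, hpow n k, smul_smul]
  rw [Fintype.linearIndependent_iff]
  intro g hg
  have hswap : ∑ k, (b k * ∑ n : Fin d, g n * eig k ^ (n : ℕ)) • φ k = 0 := by
    calc ∑ k, (b k * ∑ n : Fin d, g n * eig k ^ (n : ℕ)) • φ k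
        = ∑ k, ∑ n : Fin d, (g n * (b k * eig k ^ (n : ℕ))) • φ k := by
          refine Finset.sum_congr rfl fun k _ => ?_
          rw [← Finset.sum_smul]
          congr 1
          rw [Finset.mul_sum]
          exact Finset.sum_congr rfl fun n _ => by ring
      _ = ∑ n : Fin d, ∑ k, (g n * (b k * eig k ^ (n : ℕ))) • φ k := Finset.sum_comm
      _ = ∑ n : Fin d, g n • (A ^ (n : ℕ)).mulVec B := by
          refine Finset.sum_congr rfl fun n _ => ?_
          rw [hψ, Finset.smul_sum]
          exact Finset.sum_congr rfl fun k _ => (smul_smul _ _ _).symm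
      _ = 0 := hg
  have hS : ∀ k, ∑ n : Fin d, g n * eig k ^ (n : ℕ) = 0 := by
    intro k
    have := Fintype.linearIndependent_iff.mp hφ
      (fun k => b k * ∑ n : Fin d, g n * eig k ^ (n : ℕ)) hswap k
    exact (mul_eq_zero.mp this).resolve_left (hb k)
  set p : ℂ[X] := ∑ n : Fin d, Polynomial.C (g n) * X ^ (n : ℕ) with hp
  have hdeg : p.natDegree < d := by
    have h1 : p.natDegree ≤ d - 1 := by
      apply Polynomial.natDegree_sum_le_of_forall_le
      intro n _
      calc (Polynomial.C (g n) * X ^ (n : ℕ)).natDegree ≤ (n : ℕ) :=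
            Polynomial.natDegree_C_mul_X_pow_le _ _
        _ ≤ d - 1 := by omega
    omega
  have hev : ∀ k, p.eval (eig k) = 0 := by
    intro k
    rw [hp]
    simp only [Polynomial.eval_finset_sum, Polynomial.eval_mul, Polynomial.eval_C,
      Polynomial.eval_pow, Polynomial.eval_X]
    exact hS k
  have hp0 : p = 0 :=
    p.eq_zero_of_natDegree_lt_card_of_eval_eq_zero heig hev (by simpa using hdeg)
  intro n
  have hco : g n = p.coeff (n : ℕ) := by
    rw [hp]
    rw [Polynomial.finset_sum_coeff]
    simp only [Polynomial.coeff_C_mul, Polynomial.coeff_X_pow]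
    rw [Finset.sum_eq_single n]
    · simp
    · intro m _ hmn
      rw [if_neg (fun e => hmn (Fin.val_injective e.symm)), mul_zero]
    · intro h; exact absurd (Finset.mem_univ n) h
  rw [hco, hp0, Polynomial.coeff_zero]

end Statement0Aux
namespace Statement0Aux

lemma krylov_range {d : ℕ} (A T : Matrix (Fin d) (Fin d) ℂ) (B K : Fin d → ℂ) (lam : ℂ)
    (hTK : T * A + Matrix.vecMulVec B K = (A - lam • 1) * T)
    (hTB : T.mulVec B = B) :
    ∀ n : ℕ, (A ^ n).mulVec B ∈ LinearMap.range T.mulVecLin := by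
  set ψ : ℕ → (Fin d → ℂ) := fun n => (A ^ n).mulVec B with hψdef
  have hψ0 : ψ 0 = B := by simp [hψdef, Matrix.one_mulVec]
  have hψs : ∀ n, ψ (n + 1) = A.mulVec (ψ n) := by
    intro n
    rw [hψdef]
    simp only [pow_succ', ← Matrix.mulVec_mulVec]
  have hstep : ∀ v, T.mulVec (A.mulVec v) = (A - lam • 1).mulVec (T.mulVec v) - (K ⬝ᵥ v) • B := by
    intro v
    have h := congrArg (fun M : Matrix (Fin d) (Fin d) ℂ => M.mulVec v) hTK
    simp only [Matrix.add_mulVec, ← Matrix.mulVec_mulVec] at h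
    rw [vecMulVec_mulVec] at h
    exact eq_sub_of_add_eq h
  have hdiff : ∀ n : ℕ,
      T.mulVec (ψ n) - ψ n ∈ Submodule.span ℂ (ψ '' Set.Iio n) := by
    intro n
    induction n with
    | zero => rw [hψ0, hTB, sub_self]; exact Submodule.zero_mem _
    | succ n ih =>
      have key : T.mulVec (ψ (n + 1)) - ψ (n + 1) =
          (A - lam • 1).mulVecLin (T.mulVec (ψ n) - ψ n) + (-lam) • ψ n
            - (K ⬝ᵥ ψ n) • ψ 0 := by
        rw [hψs n, hstep (ψ n), hψ0, Matrix.mulVecLin_apply, Matrix.mulVec_sub,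
          Matrix.sub_mulVec, Matrix.smul_mulVec, Matrix.one_mulVec,
          Matrix.sub_mulVec, Matrix.smul_mulVec, Matrix.one_mulVec]
        module
      rw [key]
      refine Submodule.sub_mem _ (Submodule.add_mem _ ?_ ?_) ?_
      · have hmap : Submodule.map (A - lam • 1).mulVecLin
            (Submodule.span ℂ (ψ '' Set.Iio n)) ≤ Submodule.span ℂ (ψ '' Set.Iio (n + 1)) := by
          rw [Submodule.map_span]
          apply Submodule.span_le.mpr
          rintro _ ⟨_, ⟨m, hm, rfl⟩, rfl⟩
          have e : (A - lam • 1).mulVecLin (ψ m) = ψ (m + 1) - lam • ψ m := by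
            rw [Matrix.mulVecLin_apply, Matrix.sub_mulVec, Matrix.smul_mulVec,
              Matrix.one_mulVec, ← hψs m]
          rw [e]
          refine Submodule.sub_mem _ ?_ (Submodule.smul_mem _ _ ?_)
          · exact Submodule.subset_span
              ⟨m + 1, Set.mem_Iio.mpr (Nat.succ_lt_succ (Set.mem_Iio.mp hm)), rfl⟩
          · exact Submodule.subset_span
              ⟨m, Set.mem_Iio.mpr (Nat.lt_succ_of_lt (Set.mem_Iio.mp hm)), rfl⟩
        exact hmap ⟨_, ih, rfl⟩
      · exact Submodule.smul_mem _ _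
          (Submodule.subset_span ⟨n, by simp [Set.mem_Iio], rfl⟩)
      · exact Submodule.smul_mem _ _
          (Submodule.subset_span ⟨0, by simp [Set.mem_Iio], rfl⟩)
  intro n
  induction n using Nat.strong_induction_on with
  | _ n ih =>
    have h1 : T.mulVec (ψ n) ∈ LinearMap.range T.mulVecLin :=
      ⟨ψ n, Matrix.mulVecLin_apply _ _⟩
    have h2 : T.mulVec (ψ n) - ψ n ∈ LinearMap.range T.mulVecLin := by
      refine Submodule.span_le.mpr ?_ (hdiff n)
      rintro _ ⟨m, hm, rfl⟩
      exact ih m hm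
    have e : A ^ n *ᵥ B = T.mulVec (ψ n) - (T.mulVec (ψ n) - ψ n) := by
      rw [sub_sub_cancel]
    rw [e]
    exact Submodule.sub_mem _ h1 h2

end Statement0Aux
namespace Statement0Aux

lemma vecMulVec_add {d : ℕ} (B K K' : Fin d → ℂ) :
    Matrix.vecMulVec B (K + K') = Matrix.vecMulVec B K + Matrix.vecMulVec B K' := by
  ext i j; simp [Matrix.vecMulVec_apply, mul_add]

lemma vecMulVec_smul {d : ℕ} (B K : Fin d → ℂ) (a : ℂ) :
    Matrix.vecMulVec B (a • K) = a • Matrix.vecMulVec B K := by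
  ext i j; simp [Matrix.vecMulVec_apply]; ring

end Statement0Aux

/-- Finite-dimensional backstepping: existence and uniqueness of an
invertible transformation `T` and a feedback row vector `K` with
`T·A + B·K = (A - λ·I)·T` and `T·B = B`, for a diagonalizable matrix `A` with
simple eigenvalues and a controllable vector `B`. -/
theorem statement0 (d : ℕ) (hd : 1 ≤ d)
    (A : Matrix (Fin d) (Fin d) ℂ)
    (eig : Fin d → ℂ) (heig : Function.Injective eig)
    (φ : Fin d → (Fin d → ℂ)) (hφ : LinearIndependent ℂ φ)
    (hAφ : ∀ i, A.mulVec (φ i) = eig i • φ i)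
    (B : Fin d → ℂ) (b : Fin d → ℂ)
    (hB : B = ∑ k, b k • φ k) (hb : ∀ k, b k ≠ 0)
    (lam : ℝ) (hlam : 0 < lam)
    (hres : ∀ i j, eig i - eig j - (lam : ℂ) ≠ 0) :
    ∃! TK : Matrix (Fin d) (Fin d) ℂ × (Fin d → ℂ),
      IsUnit TK.1 ∧
      TK.1 * A + Matrix.vecMulVec B TK.2 = (A - (lam : ℂ) • 1) * TK.1 ∧
      TK.1.mulVec B = B := by
  classical
  haveI : Nonempty (Fin d) := ⟨⟨0, hd⟩⟩
  -- the linear map whose bijectivity encodes the problem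
  let Φ : (Matrix (Fin d) (Fin d) ℂ × (Fin d → ℂ)) →ₗ[ℂ]
      (Matrix (Fin d) (Fin d) ℂ × (Fin d → ℂ)) :=
    { toFun := fun TK => ((A - (lam : ℂ) • 1) * TK.1 - TK.1 * A - Matrix.vecMulVec B TK.2,
        TK.1.mulVec B)
      map_add' := by
        rintro ⟨T, K⟩ ⟨T', K'⟩
        refine Prod.ext ?_ ?_
        · simp only [Prod.fst_add, Prod.snd_add, Matrix.mul_add, Matrix.add_mul,
            Statement0Aux.vecMulVec_add]
          abel
        · simp [Prod.fst_add, Prod.snd_add, Matrix.add_mulVec]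
      map_smul' := by
        rintro a ⟨T, K⟩
        refine Prod.ext ?_ ?_
        · simp only [Prod.smul_fst, Prod.smul_snd, Matrix.mul_smul, Matrix.smul_mul,
            Statement0Aux.vecMulVec_smul, RingHom.id_apply, smul_sub]
        · simp [Prod.smul_fst, Prod.smul_snd, Matrix.smul_mulVec] }
  have hker : ∀ TK : Matrix (Fin d) (Fin d) ℂ × (Fin d → ℂ), Φ TK = 0 → TK = 0 := by
    rintro ⟨T, K⟩ h
    have h1 : (A - (lam : ℂ) • 1) * T - T * A - Matrix.vecMulVec B K = 0 :=
      congrArg Prod.fst h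
    have h2 : T.mulVec B = 0 := congrArg Prod.snd h
    have hTK : T * A + Matrix.vecMulVec B K = (A - (lam : ℂ) • 1) * T := by
      rw [sub_sub, sub_eq_zero] at h1
      exact h1.symm
    obtain ⟨hT, hK⟩ := Statement0Aux.key_inj hd A eig heig φ hφ hAφ B b hB hb lam hres T K hTK h2
    simp [hT, hK, Prod.ext_iff]
  have hinj : Function.Injective Φ := by
    intro p q hpq
    have h0 : Φ (p - q) = 0 := by rw [map_sub, hpq, sub_self]
    exact sub_eq_zero.mp (hker _ h0)
  have hsurj : Function.Surjective Φ := LinearMap.injective_iff_surjective.mp hinj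
  obtain ⟨⟨T, K⟩, hTK0⟩ := hsurj (0, B)
  have h1 : (A - (lam : ℂ) • 1) * T - T * A - Matrix.vecMulVec B K = 0 :=
    congrArg Prod.fst hTK0
  have h2 : T.mulVec B = B := congrArg Prod.snd hTK0
  have heq : T * A + Matrix.vecMulVec B K = (A - (lam : ℂ) • 1) * T := by
    rw [sub_sub, sub_eq_zero] at h1
    exact h1.symm
  -- invertibility of T via the Krylov argument
  have hisunit : IsUnit T := by
    have hindep := Statement0Aux.krylov_indep hd A eig heig φ hφ hAφ B b hB hb
    have hcard : Fintype.card (Fin d) = Module.finrank ℂ (Fin d → ℂ) := by simp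
    let bas2 : Module.Basis (Fin d) ℂ (Fin d → ℂ) :=
      basisOfLinearIndependentOfCardEqFinrank hindep hcard
    have hbas2 : ⇑bas2 = fun n : Fin d => (A ^ (n : ℕ)).mulVec B :=
      coe_basisOfLinearIndependentOfCardEqFinrank _ _
    have htop : ⊤ ≤ LinearMap.range T.mulVecLin := by
      rw [← bas2.span_eq]
      apply Submodule.span_le.mpr
      rintro _ ⟨n, rfl⟩
      have e : bas2 n = (A ^ (n : ℕ)).mulVec B := congrFun hbas2 n
      rw [e]
      exact Statement0Aux.krylov_range A T B K ((lam : ℂ)) heq h2 (n : ℕ)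
    have hsurjT : Function.Surjective T.mulVec := by
      intro v
      obtain ⟨w, hw⟩ := htop (Submodule.mem_top : v ∈ (⊤ : Submodule ℂ (Fin d → ℂ)))
      exact ⟨w, by rwa [Matrix.mulVecLin_apply] at hw⟩
    exact Matrix.mulVec_surjective_iff_isUnit.mp hsurjT
  refine ⟨(T, K), ⟨hisunit, heq, h2⟩, ?_⟩
  rintro ⟨T', K'⟩ ⟨_, he1, he2⟩
  apply hinj
  rw [hTK0]
  refine Prod.ext ?_ ?_
  · show (A - (lam : ℂ) • 1) * T' - T' * A - Matrix.vecMulVec B K' = 0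
    rw [← he1]
    abel
  · exact he2
end

section
/- Let α > 1 and c > 0, and let (λ_n)_{n≥1} be a sequence of real numbers satisfying |λ_i − λ_m| ≥ c · |i − m|^α for all i, m ≥ 1 with i ≠ m. Then there exists a constant C > 0, depending only on c and α, such that for every λ > 0 and every i ≥ 1 the infinite products ∏_{m≥1, m≠i} (1 + λ/(λ_i − λ_m)) and ∏_{m≥1, m≠i} (1 − λ/(λ_i − λ_m)) converge, and both have absolute value at most C · e^{C·λ^{1/α}}. -/
open Filter Finset Topology

/-- `|log(1+t)| ≤ 2|t|` for `|t| ≤ 1/2`. -/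
private lemma abs_log_one_add_le {t : ℝ} (ht : |t| ≤ 1 / 2) :
    |Real.log (1 + t)| ≤ 2 * |t| := by
  obtain ⟨h1, h2⟩ := abs_le.1 ht
  have hpos : (0 : ℝ) < 1 + t := by linarith
  rw [abs_le]
  constructor
  · have hinv : Real.log (1 + t)⁻¹ ≤ (1 + t)⁻¹ - 1 :=
      Real.log_le_sub_one_of_pos (by positivity)
    rw [Real.log_inv] at hinv
    have h3 : 1 - (1 + t)⁻¹ ≤ Real.log (1 + t) := by linarith
    have h4 : 1 - (1 + t)⁻¹ = t / (1 + t) := by field_simp; ring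
    rw [h4] at h3
    refine le_trans ?_ h3
    rcases le_or_gt 0 t with h | h
    · have h5 : 0 ≤ t / (1 + t) := div_nonneg h hpos.le
      have h6 : 0 ≤ 2 * |t| := by positivity
      linarith
    · rw [abs_of_neg h, le_div_iff₀ hpos]
      nlinarith
  · have := Real.log_le_sub_one_of_pos hpos
    have ht' : t ≤ |t| := le_abs_self t
    linarith [abs_nonneg t]

/-- If `y` is summable then `∏ (1 + y n)` is multipliable (over ℕ). -/
private lemma multipliable_one_add (y : ℕ → ℝ) (hy : Summable y) :
    Multipliable (fun n => 1 + y n) := by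
  have htend : Tendsto y atTop (𝓝 0) := hy.tendsto_atTop_zero
  have hev : ∀ᶠ n in atTop, |y n| < 1 / 2 := by
    have := Metric.tendsto_nhds.1 htend (1 / 2) (by norm_num)
    simpa [Real.dist_eq] using this
  obtain ⟨N, hN⟩ := eventually_atTop.1 hev
  apply Multipliable.comp_nat_add (k := N)
  have hsmall : ∀ n : ℕ, |y (n + N)| ≤ 1 / 2 := fun n =>
    (hN (n + N) (Nat.le_add_left N n)).le
  have hpos : ∀ n : ℕ, 0 < 1 + y (n + N) := by
    intro n
    have := abs_le.1 (hsmall n)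
    linarith [this.1]
  have hlog : Summable (fun n => Real.log (1 + y (n + N))) := by
    have hb : Summable (fun n => 2 * |y (n + N)|) :=
      (((summable_nat_add_iff N).2 hy).abs).mul_left 2
    refine Summable.of_abs (hb.of_nonneg_of_le (fun n => abs_nonneg _) ?_)
    intro n
    exact abs_log_one_add_le (hsmall n)
  exact Real.multipliable_of_summable_log hpos hlog

/-- The convexity step: `(α-1)(a+1)^{-α} ≤ a^{1-α} - (a+1)^{1-α}` for `a ≥ 1`. -/
private lemma step_ineq {α : ℝ} (hα : 1 < α) {a : ℝ} (ha : 1 ≤ a) :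
    (α - 1) * (a + 1) ^ (-α) ≤ a ^ (1 - α) - (a + 1) ^ (1 - α) := by
  have ha0 : (0 : ℝ) < a := by linarith
  have hb0 : (0 : ℝ) < a + 1 := by linarith
  -- log (a+1) - log a ≥ 1/(a+1)
  have hlog : 1 / (a + 1) ≤ Real.log (a + 1) - Real.log a := by
    have h1 : Real.log (a / (a + 1)) ≤ a / (a + 1) - 1 :=
      Real.log_le_sub_one_of_pos (by positivity)
    rw [Real.log_div (ne_of_gt ha0) (ne_of_gt hb0)] at h1
    have h2 : a / (a + 1) - 1 = -(1 / (a + 1)) := by field_simp; ring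
    linarith [h1, h2 ▸ h1]
  -- ((a+1)/a)^(α-1) ≥ 1 + (α-1)(log(a+1) - log a)
  have hpow : 1 + (α - 1) * (Real.log (a + 1) - Real.log a) ≤ ((a + 1) / a) ^ (α - 1) := by
    have h0 : ((a + 1) / a : ℝ) ^ (α - 1) =
        Real.exp ((α - 1) * (Real.log (a + 1) - Real.log a)) := by
      rw [Real.rpow_def_of_pos (by positivity),
        Real.log_div (ne_of_gt hb0) (ne_of_gt ha0)]
      ring_nf
    rw [h0]
    linarith [Real.add_one_le_exp ((α - 1) * (Real.log (a + 1) - Real.log a))]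
  -- identities
  have id1 : (a + 1) ^ (1 - α) * ((a + 1) / a) ^ (α - 1) = a ^ (1 - α) := by
    rw [Real.div_rpow hb0.le ha0.le]
    rw [div_eq_mul_inv, ← Real.rpow_neg ha0.le, neg_sub, ← mul_assoc,
      ← Real.rpow_add hb0]
    norm_num
  have id2 : (a + 1) ^ (1 - α) / (a + 1) = (a + 1) ^ (-α) := by
    nth_rewrite 2 [show (a + 1) = (a + 1) ^ (1 : ℝ) by rw [Real.rpow_one]]
    rw [← Real.rpow_sub hb0]
    norm_num
  have hαm : (0 : ℝ) ≤ α - 1 := by linarith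
  have hchain : 1 + (α - 1) / (a + 1) ≤ ((a + 1) / a) ^ (α - 1) := by
    refine le_trans ?_ hpow
    have := mul_le_mul_of_nonneg_left hlog hαm
    rw [mul_one_div] at this
    linarith
  have hbpow : (0 : ℝ) < (a + 1) ^ (1 - α) := Real.rpow_pos_of_pos hb0 _
  have := mul_le_mul_of_nonneg_left hchain hbpow.le
  rw [id1] at this
  have hxp : (a + 1) ^ (1 - α) * (1 + (α - 1) / (a + 1)) =
      (a + 1) ^ (1 - α) + (α - 1) * ((a + 1) ^ (1 - α) / (a + 1)) := by ring
  rw [hxp, id2] at this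
  linarith

/-- `1 + s^α ≤ (1+s)^α` for `s ≥ 0`, `α ≥ 1`. -/
private lemma one_add_rpow_le {α : ℝ} (hα : 1 < α) {s : ℝ} (hs : 0 < s) :
    1 + s ^ α ≤ (1 + s) ^ α := by
  have h1 : (0 : ℝ) < 1 + s := by linarith
  have e1 : (1 + s) ^ α = (1 + s) * (1 + s) ^ (α - 1) := by
    calc (1 + s) ^ α = (1 + s) ^ ((1 : ℝ) + (α - 1)) := by ring_nf
      _ = (1 + s) ^ (1 : ℝ) * (1 + s) ^ (α - 1) := Real.rpow_add h1 _ _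
      _ = (1 + s) * (1 + s) ^ (α - 1) := by rw [Real.rpow_one]
  have e2 : s ^ α = s * s ^ (α - 1) := by
    calc s ^ α = s ^ ((1 : ℝ) + (α - 1)) := by ring_nf
      _ = s ^ (1 : ℝ) * s ^ (α - 1) := Real.rpow_add hs _ _
      _ = s * s ^ (α - 1) := by rw [Real.rpow_one]
  have h2 : (1 : ℝ) ≤ (1 + s) ^ (α - 1) := by
    have := Real.rpow_le_rpow (by norm_num : (0:ℝ) ≤ 1) (by linarith : (1:ℝ) ≤ 1 + s)
      (by linarith : (0:ℝ) ≤ α - 1)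
    rwa [Real.one_rpow] at this
  have h3 : s ^ (α - 1) ≤ (1 + s) ^ (α - 1) :=
    Real.rpow_le_rpow hs.le (by linarith) (by linarith)
  rw [e1, e2]
  nlinarith [hs, h2, h3, Real.rpow_nonneg hs.le (α - 1)]

/-- Central binomial bound in log form. -/
private lemma binom_sum_le (K : ℕ) :
    ∑ k ∈ Finset.range K, Real.log (((k : ℝ) + 1 + K) / ((k : ℝ) + 1)) ≤
      K * Real.log 4 := by
  have hpos : ∀ k ∈ Finset.range K, (((k : ℝ) + 1 + K) / ((k : ℝ) + 1)) ≠ 0 := by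
    intro k _
    positivity
  rw [← Real.log_prod hpos]
  have hnum : ∏ k ∈ Finset.range K, ((k : ℝ) + 1 + K) =
      ((∏ k ∈ Finset.range K, (K + 1 + k) : ℕ) : ℝ) := by
    rw [Nat.cast_prod]
    apply Finset.prod_congr rfl
    intro k _
    push_cast
    ring
  have hden : ∏ k ∈ Finset.range K, ((k : ℝ) + 1) = (Nat.factorial K : ℝ) := by
    rw [← Finset.prod_range_add_one_eq_factorial]
    rw [Nat.cast_prod]
    apply Finset.prod_congr rfl
    intro k _
    push_cast
    ring
  have h1 : ∀ n k : ℕ, ∏ j ∈ Finset.range k, (n + 1 + j) = (n + 1).ascFactorial k := by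
    intro n k
    induction k with
    | zero => simp
    | succ m ih => rw [Finset.prod_range_succ, ih, Nat.ascFactorial_succ, mul_comm]
  have hasc : ∏ k ∈ Finset.range K, (K + 1 + k) = Nat.factorial K * (K + K).choose K := by
    rw [h1 K K, Nat.ascFactorial_eq_factorial_mul_choose]
  have hch : (K + K).choose K ≤ 4 ^ K := by
    calc (K + K).choose K ≤ ∑ i ∈ Finset.range (K + K + 1), (K + K).choose i :=
          Finset.single_le_sum (fun i _ => Nat.zero_le _)
            (Finset.mem_range.2 (by omega))
      _ = 2 ^ (K + K) := Nat.sum_range_choose _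
      _ = 4 ^ K := by rw [show K + K = 2 * K by ring, pow_mul]; norm_num
  have hratio : ∏ k ∈ Finset.range K, (((k : ℝ) + 1 + K) / ((k : ℝ) + 1)) =
      (((K + K).choose K : ℕ) : ℝ) := by
    rw [Finset.prod_div_distrib, hnum, hden, hasc]
    push_cast
    have hfne : (Nat.factorial K : ℝ) ≠ 0 := by exact_mod_cast Nat.factorial_ne_zero K
    field_simp
  rw [hratio]
  have hchpos : (0 : ℝ) < (((K + K).choose K : ℕ) : ℝ) := by
    exact_mod_cast Nat.choose_pos (by omega)
  calc Real.log (((K + K).choose K : ℕ) : ℝ) ≤ Real.log ((4 : ℝ) ^ K) := by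
        apply Real.log_le_log hchpos
        exact_mod_cast hch
    _ = K * Real.log 4 := by rw [Real.log_pow]

/-- Summability of the comparison sequence `k ↦ μ/(c (k+1)^α)`. -/
private lemma summable_T {α c : ℝ} (hα : 1 < α) (hc : 0 < c) (μ : ℝ) :
    Summable (fun k : ℕ => μ / (c * ((k : ℝ) + 1) ^ α)) := by
  have hbase : Summable (fun k : ℕ => ((k : ℝ) + 1) ^ (-α)) := by
    have h0 : Summable (fun n : ℕ => (n : ℝ) ^ (-α)) :=
      Real.summable_nat_rpow.2 (by linarith)
    have := (summable_nat_add_iff 1).2 h0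
    refine this.congr fun n => ?_
    push_cast
    rfl
  refine ((hbase.mul_left (μ / c)).congr fun k => ?_)
  have hx : (0 : ℝ) < (k : ℝ) + 1 := by positivity
  rw [Real.rpow_neg hx.le, ← div_div, div_eq_mul_inv (μ / c)]

/-- The key quantitative estimate: `∑_{k≥1} log(1 + μ/(c k^α)) ≤ D (1 + μ^{1/α})`. -/
private lemma sumG_bound {α c : ℝ} (hα : 1 < α) (hc : 0 < c) :
    ∃ D > 0, ∀ μ : ℝ, 0 < μ →
      Summable (fun k : ℕ => Real.log (1 + μ / (c * ((k : ℝ) + 1) ^ α))) ∧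
      ∑' k : ℕ, Real.log (1 + μ / (c * ((k : ℝ) + 1) ^ α)) ≤ D * (1 + μ ^ (1 / α)) := by
  have hlog4 : (0 : ℝ) < Real.log 4 := Real.log_pos (by norm_num)
  set E : ℝ := α * Real.log 4 + 1 / (α - 1) with hE
  have hE0 : 0 < E := by
    have : (0:ℝ) < α * Real.log 4 := by positivity
    have : (0:ℝ) < 1 / (α - 1) := by
      apply div_pos one_pos; linarith
    positivity
  set M : ℝ := max 1 ((c ^ (1 / α))⁻¹) with hM
  have hM1 : (1 : ℝ) ≤ M := le_max_left _ _
  refine ⟨E * M, by positivity, fun μ hμ => ?_⟩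
  set G : ℕ → ℝ := fun k => Real.log (1 + μ / (c * ((k : ℝ) + 1) ^ α)) with hG
  have hxpos : ∀ k : ℕ, (0 : ℝ) < ((k : ℝ) + 1) ^ α :=
    fun k => Real.rpow_pos_of_pos (by positivity) _
  have hTnn : ∀ k : ℕ, 0 ≤ μ / (c * ((k : ℝ) + 1) ^ α) := by
    intro k
    have := hxpos k
    positivity
  have hGnn : ∀ k : ℕ, 0 ≤ G k := fun k => Real.log_nonneg (by linarith [hTnn k])
  have hGleT : ∀ k : ℕ, G k ≤ μ / (c * ((k : ℝ) + 1) ^ α) := by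
    intro k
    have h1 : (0:ℝ) < 1 + μ / (c * ((k : ℝ) + 1) ^ α) := by linarith [hTnn k]
    have := Real.log_le_sub_one_of_pos h1
    simpa using this
  have hGsum : Summable G :=
    Summable.of_nonneg_of_le hGnn hGleT (summable_T hα hc μ)
  -- the scale
  set r : ℝ := (μ / c) ^ (1 / α) with hr
  have hr0 : 0 < r := Real.rpow_pos_of_pos (div_pos hμ hc) _
  have hrα : r ^ α = μ / c := by
    rw [hr, ← Real.rpow_mul (div_pos hμ hc).le, one_div,
      inv_mul_cancel₀ (by linarith : α ≠ 0), Real.rpow_one]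
  set K : ℕ := ⌈r⌉₊ with hK
  have hK1 : 1 ≤ K := Nat.one_le_ceil_iff.2 hr0
  have hrK : r ≤ (K : ℝ) := Nat.le_ceil r
  have hKr : (K : ℝ) ≤ r + 1 := (Nat.ceil_lt_add_one hr0.le).le
  -- main part
  have hmain : ∑ k ∈ Finset.range K, G k ≤ α * Real.log 4 * (r + 1) := by
    have h1 : ∀ k ∈ Finset.range K, G k ≤
        α * Real.log (((k : ℝ) + 1 + K) / ((k : ℝ) + 1)) := by
      intro k _
      have hx : (0 : ℝ) < (k : ℝ) + 1 := by positivity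
      have hs : (0 : ℝ) < r / ((k : ℝ) + 1) := by positivity
      have e1 : μ / (c * ((k : ℝ) + 1) ^ α) = (r / ((k : ℝ) + 1)) ^ α := by
        rw [Real.div_rpow hr0.le hx.le, hrα, ← div_div]
      have h2 : 1 + (r / ((k : ℝ) + 1)) ^ α ≤ (1 + r / ((k : ℝ) + 1)) ^ α :=
        one_add_rpow_le hα hs
      have h3 : G k ≤ Real.log ((1 + r / ((k : ℝ) + 1)) ^ α) := by
        show Real.log (1 + μ / (c * ((k : ℝ) + 1) ^ α)) ≤ _
        rw [e1]
        exact Real.log_le_log (by positivity) h2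
      rw [Real.log_rpow (by positivity)] at h3
      refine h3.trans ?_
      have h4 : 1 + r / ((k : ℝ) + 1) ≤ ((k : ℝ) + 1 + K) / ((k : ℝ) + 1) := by
        have e4 : ((k : ℝ) + 1 + K) / ((k : ℝ) + 1) = 1 + (K : ℝ) / ((k : ℝ) + 1) := by
          field_simp
        rw [e4]
        gcongr
      have h5 : Real.log (1 + r / ((k : ℝ) + 1)) ≤
          Real.log (((k : ℝ) + 1 + K) / ((k : ℝ) + 1)) :=
        Real.log_le_log (by positivity) h4
      have hα0 : (0:ℝ) ≤ α := by linarith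
      exact mul_le_mul_of_nonneg_left h5 hα0
    calc ∑ k ∈ Finset.range K, G k
        ≤ ∑ k ∈ Finset.range K, α * Real.log (((k : ℝ) + 1 + K) / ((k : ℝ) + 1)) :=
          Finset.sum_le_sum h1
      _ = α * ∑ k ∈ Finset.range K, Real.log (((k : ℝ) + 1 + K) / ((k : ℝ) + 1)) := by
          rw [Finset.mul_sum]
      _ ≤ α * (K * Real.log 4) := by
          apply mul_le_mul_of_nonneg_left (binom_sum_le K) (by linarith)
      _ ≤ α * Real.log 4 * (r + 1) := by
          have : (K : ℝ) * Real.log 4 ≤ (r + 1) * Real.log 4 :=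
            mul_le_mul_of_nonneg_right hKr hlog4.le
          nlinarith
  -- tail part
  have htail : ∑' k : ℕ, G (k + K) ≤ r / (α - 1) := by
    apply Real.tsum_le_of_sum_range_le (fun n => hGnn _)
    intro n
    set u : ℕ → ℝ := fun j => ((j : ℝ) + K) ^ (1 - α) with hu
    have hstep : ∀ k : ℕ, G (k + K) ≤ (μ / c) * (1 / (α - 1)) * (u k - u (k + 1)) := by
      intro k
      have ha1 : (1 : ℝ) ≤ (k : ℝ) + K := by
        have : (1 : ℝ) ≤ (K : ℝ) := by exact_mod_cast hK1
        have : (0:ℝ) ≤ (k : ℝ) := Nat.cast_nonneg k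
        linarith
      have hs := step_ineq hα ha1
      have e1 : G (k + K) ≤ μ / (c * ((k : ℝ) + K + 1) ^ α) := by
        have := hGleT (k + K)
        have ecast : (((k + K : ℕ) : ℝ) + 1) = (k : ℝ) + K + 1 := by push_cast; ring
        rwa [ecast] at this
      refine e1.trans ?_
      have e2 : μ / (c * ((k : ℝ) + K + 1) ^ α) = (μ / c) * ((k : ℝ) + K + 1) ^ (-α) := by
        rw [Real.rpow_neg (by linarith), ← div_div, div_eq_mul_inv (μ / c)]
      rw [e2]
      have e3 : u k - u (k + 1) = ((k : ℝ) + K) ^ (1 - α) - ((k : ℝ) + K + 1) ^ (1 - α) := by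
        rw [hu]; push_cast; ring_nf
      have hμc : 0 < μ / c := div_pos hμ hc
      have h6 : ((k : ℝ) + K + 1) ^ (-α) ≤ (1 / (α - 1)) * (u k - u (k + 1)) := by
        rw [e3, one_div, inv_mul_eq_div, le_div_iff₀ (by linarith : (0:ℝ) < α - 1)]
        calc ((k : ℝ) + K + 1) ^ (-α) * (α - 1)
            = (α - 1) * ((k : ℝ) + K + 1) ^ (-α) := by ring
          _ ≤ _ := hs
      calc (μ / c) * ((k : ℝ) + K + 1) ^ (-α)
          ≤ (μ / c) * ((1 / (α - 1)) * (u k - u (k + 1))) :=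
            mul_le_mul_of_nonneg_left h6 hμc.le
        _ = (μ / c) * (1 / (α - 1)) * (u k - u (k + 1)) := by ring
    calc ∑ k ∈ Finset.range n, G (k + K)
        ≤ ∑ k ∈ Finset.range n, (μ / c) * (1 / (α - 1)) * (u k - u (k + 1)) :=
          Finset.sum_le_sum fun k _ => hstep k
      _ = (μ / c) * (1 / (α - 1)) * (u 0 - u n) := by
          rw [← Finset.mul_sum, Finset.sum_range_sub' u]
      _ ≤ (μ / c) * (1 / (α - 1)) * u 0 := by
          have hun : 0 ≤ u n := Real.rpow_nonneg (by positivity) _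
          have hcoef : 0 ≤ (μ / c) * (1 / (α - 1)) := by
            have := div_pos hμ hc
            have : (0:ℝ) < 1 / (α - 1) := by
              apply div_pos one_pos; linarith
            positivity
          nlinarith
      _ ≤ r / (α - 1) := by
          have hu0 : u 0 = (K : ℝ) ^ (1 - α) := by rw [hu]; push_cast; ring_nf
          have hKle : (K : ℝ) ^ (1 - α) ≤ r ^ (1 - α) :=
            Real.rpow_le_rpow_of_nonpos hr0 hrK (by linarith)
          have hrr : r ^ α * r ^ (1 - α) = r := by
            rw [← Real.rpow_add hr0]; norm_num
          have h7 : (μ / c) * (1 / (α - 1)) * u 0 ≤ (μ / c) * (1 / (α - 1)) * r ^ (1 - α) := by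
            have hcoef : 0 ≤ (μ / c) * (1 / (α - 1)) := by
              have h8 : (0:ℝ) < μ / c := div_pos hμ hc
              have h9 : (0:ℝ) < 1 / (α - 1) := by
                apply div_pos one_pos; linarith
              positivity
            rw [hu0]
            exact mul_le_mul_of_nonneg_left hKle hcoef
          refine h7.trans_eq ?_
          rw [← hrα,
            show r ^ α * (1 / (α - 1)) * r ^ (1 - α) =
              r ^ α * r ^ (1 - α) * (1 / (α - 1)) from by ring,
            hrr, mul_one_div]
  refine ⟨hGsum, ?_⟩
  have htot : ∑' k, G k ≤ α * Real.log 4 * (r + 1) + r / (α - 1) := by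
    rw [← hGsum.sum_add_tsum_nat_add K]
    exact add_le_add hmain htail
  have h9 : (0:ℝ) < α - 1 := by linarith
  have hEr : α * Real.log 4 * (r + 1) + r / (α - 1) ≤ E * (1 + r) := by
    have h10 : r / (α - 1) ≤ (1 + r) * (1 / (α - 1)) := by
      rw [mul_one_div]
      gcongr
      linarith
    have expand : E * (1 + r) = α * Real.log 4 * (r + 1) + (1 + r) * (1 / (α - 1)) := by
      rw [hE]; ring
    linarith
  have hrM : 1 + r ≤ M * (1 + μ ^ (1 / α)) := by
    have hreq : r = μ ^ (1 / α) * (c ^ (1 / α))⁻¹ := by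
      rw [hr, Real.div_rpow hμ.le hc.le, div_eq_mul_inv]
    have hμα : 0 ≤ μ ^ (1 / α) := Real.rpow_nonneg hμ.le _
    have h11 : r ≤ μ ^ (1 / α) * M := by
      rw [hreq]
      exact mul_le_mul_of_nonneg_left (le_max_right _ _) hμα
    nlinarith [hM1, hμα]
  calc ∑' k, G k ≤ E * (1 + r) := htot.trans hEr
    _ ≤ E * (M * (1 + μ ^ (1 / α))) := mul_le_mul_of_nonneg_left hrM hE0.le
    _ = E * M * (1 + μ ^ (1 / α)) := by ring

/-- Under the gap `|λ_i - λ_m| ≥ c|i-m|^α` (α > 1), there is a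
constant `C > 0` depending only on `c` and `α` such that for every `λ > 0` and
every `i ≥ 1` the infinite products `∏_{m≠i} (1 ± λ/(λ_i - λ_m))` converge and are
bounded in absolute value by `C e^{C λ^{1/α}}`. -/
theorem statement4 (α c : ℝ) (hα : 1 < α) (hc : 0 < c) :
    ∃ C > 0, ∀ lam : ℕ → ℝ,
      (∀ i m : ℕ, 1 ≤ i → 1 ≤ m → i ≠ m →
        c * |(i : ℝ) - (m : ℝ)| ^ α ≤ |lam i - lam m|) →
      ∀ μ : ℝ, 0 < μ → ∀ i : ℕ, 1 ≤ i →
        Multipliable (fun m : {m : ℕ // 1 ≤ m ∧ m ≠ i} =>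
          (1 + μ / (lam i - lam m.1))) ∧
        Multipliable (fun m : {m : ℕ // 1 ≤ m ∧ m ≠ i} =>
          (1 - μ / (lam i - lam m.1))) ∧
        |∏' m : {m : ℕ // 1 ≤ m ∧ m ≠ i}, (1 + μ / (lam i - lam m.1))|
          ≤ C * Real.exp (C * μ ^ (1 / α)) ∧
        |∏' m : {m : ℕ // 1 ≤ m ∧ m ≠ i}, (1 - μ / (lam i - lam m.1))|
          ≤ C * Real.exp (C * μ ^ (1 / α)) := by
  classical
  obtain ⟨D, hD0, hL⟩ := sumG_bound hα hc
  refine ⟨Real.exp (2 * D) + 2 * D, by positivity, fun lam hgap μ hμ i hi => ?_⟩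
  set C : ℝ := Real.exp (2 * D) + 2 * D with hC
  obtain ⟨hGsum, hGbound⟩ := hL μ hμ
  set G : ℕ → ℝ := fun k => Real.log (1 + μ / (c * ((k : ℝ) + 1) ^ α)) with hGdef
  have hGnn : ∀ k : ℕ, 0 ≤ G k := by
    intro k
    apply Real.log_nonneg
    have h1 : 0 ≤ μ / (c * ((k : ℝ) + 1) ^ α) :=
      div_nonneg hμ.le (mul_nonneg hc.le (Real.rpow_nonneg (by positivity) _))
    linarith
  set S : Set ℕ := {m | 1 ≤ m ∧ m ≠ i} with hS
  set hfun : ℕ → ℝ := fun m => μ / (c * |(i : ℝ) - (m : ℝ)| ^ α) with hhfun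
  set w : ℕ → ℝ := fun m => Real.log (1 + hfun m) with hw
  have hfnn : ∀ m, 0 ≤ hfun m := fun m =>
    div_nonneg hμ.le (mul_nonneg hc.le (Real.rpow_nonneg (abs_nonneg _) _))
  have hwnn : ∀ m, 0 ≤ w m := fun m => Real.log_nonneg (by linarith [hfnn m])
  have habs_shift : ∀ k : ℕ, |(i : ℝ) - ((k + (i + 1) : ℕ) : ℝ)| = (k : ℝ) + 1 := by
    intro k
    push_cast
    rw [show (i : ℝ) - ((k : ℝ) + ((i : ℝ) + 1)) = -((k : ℝ) + 1) by ring, abs_neg,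
      abs_of_nonneg (by positivity)]
  have hfshift : ∀ k : ℕ, hfun (k + (i + 1)) = μ / (c * ((k : ℝ) + 1) ^ α) := by
    intro k
    show μ / (c * |(i : ℝ) - ((k + (i + 1) : ℕ) : ℝ)| ^ α) = _
    rw [habs_shift k]
  have hwshift : ∀ k : ℕ, w (k + (i + 1)) = G k := by
    intro k
    show Real.log (1 + hfun (k + (i + 1))) = _
    rw [hfshift k]
  have hwsum : Summable w :=
    (summable_nat_add_iff (i + 1)).1 (hGsum.congr fun k => (hwshift k).symm)
  have hfsummable : Summable hfun :=
    (summable_nat_add_iff (i + 1)).1 ((summable_T hα hc μ).congr fun k => (hfshift k).symm)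
  have hwi : w i = 0 := by
    show Real.log (1 + μ / (c * |(i : ℝ) - (i : ℝ)| ^ α)) = 0
    rw [sub_self, abs_zero, Real.zero_rpow (by linarith : α ≠ 0), mul_zero, div_zero,
      add_zero, Real.log_one]
  have hhead : ∑ m ∈ Finset.range (i + 1), w m ≤ ∑' k, G k := by
    rw [Finset.sum_range_succ, hwi, add_zero]
    have hrefl : ∑ m ∈ Finset.range i, w m = ∑ j ∈ Finset.range i, G j := by
      rw [← Finset.sum_range_reflect w i]
      apply Finset.sum_congr rfl
      intro j hj
      rw [Finset.mem_range] at hj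
      have ecast : ((i - 1 - j : ℕ) : ℝ) = (i : ℝ) - 1 - (j : ℝ) := by
        have h1 : 1 ≤ i := hi
        have h2 : j ≤ i - 1 := by omega
        push_cast [Nat.cast_sub h2, Nat.cast_sub h1]
        ring
      have e : |(i : ℝ) - ((i - 1 - j : ℕ) : ℝ)| = (j : ℝ) + 1 := by
        rw [ecast, show (i : ℝ) - ((i : ℝ) - 1 - (j : ℝ)) = (j : ℝ) + 1 by ring,
          abs_of_nonneg (by positivity)]
      show Real.log (1 + μ / (c * |(i : ℝ) - ((i - 1 - j : ℕ) : ℝ)| ^ α)) = G j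
      rw [e]
    rw [hrefl]
    exact hGsum.sum_le_tsum _ (fun k _ => hGnn k)
  have hwtsum : ∑' m, w m ≤ 2 * ∑' k, G k := by
    rw [← hwsum.sum_add_tsum_nat_add (i + 1)]
    have h1 : ∑' k, w (k + (i + 1)) = ∑' k, G k := tsum_congr hwshift
    rw [h1]
    linarith [hhead]
  have hsite : ∀ m : ℕ, m ∈ S → lam i - lam m ≠ 0 ∧ μ / |lam i - lam m| ≤ hfun m := by
    intro m hm
    obtain ⟨hm1, hmne⟩ := hm
    have hine : i ≠ m := fun h => hmne h.symm
    have habs : (0 : ℝ) < |(i : ℝ) - (m : ℝ)| := by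
      rw [abs_pos, sub_ne_zero]
      exact fun h => hine (by exact_mod_cast h)
    have hden : 0 < c * |(i : ℝ) - (m : ℝ)| ^ α :=
      mul_pos hc (Real.rpow_pos_of_pos habs _)
    have hgapm := hgap i m hi hm1 hine
    have hlampos : 0 < |lam i - lam m| := lt_of_lt_of_le hden hgapm
    exact ⟨abs_pos.1 hlampos, div_le_div_of_nonneg_left hμ.le hden hgapm⟩
  have key : ∀ ν : ℝ, |ν| = μ →
      Multipliable (fun m : {m : ℕ // 1 ≤ m ∧ m ≠ i} => (1 + ν / (lam i - lam m.1))) ∧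
      |∏' m : {m : ℕ // 1 ≤ m ∧ m ≠ i}, (1 + ν / (lam i - lam m.1))| ≤
        Real.exp (∑' m, w m) := by
    intro ν hν
    set g : ℕ → ℝ := S.indicator (fun m => ν / (lam i - lam m)) with hg
    have hgle : ∀ m, |g m| ≤ hfun m := by
      intro m
      by_cases hm : m ∈ S
      · rw [hg, Set.indicator_of_mem hm, abs_div, hν]
        exact (hsite m hm).2
      · rw [hg, Set.indicator_of_notMem hm, abs_zero]
        exact hfnn m
    have hgsum : Summable g :=
      Summable.of_abs (Summable.of_nonneg_of_le (fun m => abs_nonneg _) hgle hfsummable)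
    have hmulInd : Multipliable (fun m => 1 + g m) := multipliable_one_add g hgsum
    have hindeq : S.mulIndicator (fun m => 1 + ν / (lam i - lam m)) = fun m => 1 + g m := by
      funext m
      by_cases hm : m ∈ S
      · rw [Set.mulIndicator_of_mem hm, hg, Set.indicator_of_mem hm]
      · rw [Set.mulIndicator_of_notMem hm, hg, Set.indicator_of_notMem hm, add_zero]
    have hmsub : Multipliable
        (fun m : {m : ℕ // 1 ≤ m ∧ m ≠ i} => (1 + ν / (lam i - lam m.1))) := by
      have h2 := multipliable_subtype_iff_mulIndicator
        (f := fun m : ℕ => 1 + ν / (lam i - lam m)) (s := S) |>.2 (hindeq ▸ hmulInd)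
      exact h2
    refine ⟨hmsub, ?_⟩
    have hfle : ∀ m, |1 + g m| ≤ Real.exp (w m) := by
      intro m
      have h1 : |1 + g m| ≤ 1 + |g m| := by
        calc |1 + g m| ≤ |1| + |g m| := abs_add_le _ _
          _ = 1 + |g m| := by rw [abs_one]
      have h3 : Real.exp (w m) = 1 + hfun m := Real.exp_log (by linarith [hfnn m])
      linarith [hgle m]
    have htpeq : (∏' m : {m : ℕ // 1 ≤ m ∧ m ≠ i}, (1 + ν / (lam i - lam m.1))) =
        ∏' m : ℕ, (1 + g m) := by
      rw [← hindeq]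
      exact tprod_subtype S (fun m : ℕ => 1 + ν / (lam i - lam m))
    rw [htpeq]
    have habsbd : ∀ A : Finset ℕ, |∏ m ∈ A, (1 + g m)| ≤ Real.exp (∑' m, w m) := by
      intro A
      rw [Finset.abs_prod]
      calc ∏ m ∈ A, |1 + g m| ≤ ∏ m ∈ A, Real.exp (w m) :=
            Finset.prod_le_prod (fun m _ => abs_nonneg _) (fun m _ => hfle m)
        _ = Real.exp (∑ m ∈ A, w m) := (Real.exp_sum A w).symm
        _ ≤ Real.exp (∑' m, w m) :=
            Real.exp_le_exp.2 (hwsum.sum_le_tsum A (fun m _ => hwnn m))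
    have htendsto : Tendsto (fun A : Finset ℕ => |∏ m ∈ A, (1 + g m)|) atTop
        (𝓝 |∏' m : ℕ, (1 + g m)|) :=
      (continuous_abs.tendsto _).comp hmulInd.hasProd
    exact le_of_tendsto' htendsto habsbd
  have hμα : 0 ≤ μ ^ (1 / α) := Real.rpow_nonneg hμ.le _
  have hboundC : Real.exp (∑' m, w m) ≤ C * Real.exp (C * μ ^ (1 / α)) := by
    have hsum2 : ∑' m, w m ≤ 2 * D + 2 * D * μ ^ (1 / α) := by
      calc ∑' m, w m ≤ 2 * ∑' k, G k := hwtsum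
        _ ≤ 2 * (D * (1 + μ ^ (1 / α))) := by linarith [hGbound]
        _ = 2 * D + 2 * D * μ ^ (1 / α) := by ring
    have h1 : Real.exp (∑' m, w m) ≤
        Real.exp (2 * D) * Real.exp (2 * D * μ ^ (1 / α)) := by
      rw [← Real.exp_add]
      exact Real.exp_le_exp.2 hsum2
    have h2 : Real.exp (2 * D) ≤ C := by
      rw [hC]; linarith [hD0]
    have h3 : Real.exp (2 * D * μ ^ (1 / α)) ≤ Real.exp (C * μ ^ (1 / α)) := by
      apply Real.exp_le_exp.2
      apply mul_le_mul_of_nonneg_right ?_ hμα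
      rw [hC]
      linarith [Real.exp_pos (2 * D)]
    calc Real.exp (∑' m, w m) ≤ Real.exp (2 * D) * Real.exp (2 * D * μ ^ (1 / α)) := h1
      _ ≤ C * Real.exp (C * μ ^ (1 / α)) :=
          mul_le_mul h2 h3 (Real.exp_pos _).le (by rw [hC]; positivity)
  obtain ⟨hm1, hb1⟩ := key μ (abs_of_pos hμ)
  obtain ⟨hm2, hb2⟩ := key (-μ) (by rw [abs_neg]; exact abs_of_pos hμ)
  have heqf : ∀ m : {m : ℕ // 1 ≤ m ∧ m ≠ i},
      (1 - μ / (lam i - lam m.1)) = (1 + (-μ) / (lam i - lam m.1)) := by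
    intro m
    rw [neg_div]
    ring
  have hm2' : Multipliable (fun m : {m : ℕ // 1 ≤ m ∧ m ≠ i} =>
      (1 - μ / (lam i - lam m.1))) := by
    refine hm2.congr fun m => ?_
    rw [heqf m]
  have htp2 : (∏' m : {m : ℕ // 1 ≤ m ∧ m ≠ i}, (1 - μ / (lam i - lam m.1))) =
      ∏' m : {m : ℕ // 1 ≤ m ∧ m ≠ i}, (1 + (-μ) / (lam i - lam m.1)) :=
    tprod_congr heqf
  refine ⟨hm1, hm2', hb1.trans hboundC, ?_⟩
  rw [htp2]
  exact hb2.trans hboundC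
end

section
/- Let α > 1 and let (λ_n)_{n≥1} be a strictly decreasing sequence of negative real numbers with λ_n → −∞ satisfying, for some c > 0, |λ_k − λ_n| ≥ c · k^{α−1} · |k − n| for all k, n ≥ 1 (hence |λ_k − λ_n| ≥ c|k − n|^α). Then there exists C > 0 such that for every λ > 0 with λ ∉ 𝒩 := {λ_i − λ_j : i, j ≥ 1}: (i) for every i ≥ 1, ∑_{j≥1} λ²/|λ_j − λ_i − λ| ≤ C·(λ² + λ²/Dist_α(λ)), and (ii) for every j ≥ 1, ∑_{i≥1} λ²/|λ_j − λ_i − λ| ≤ C·(λ² + λ²/Dist_α(λ)). -/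
open Filter Finset Real

/-- `Dist_α(λ) = inf_{i,j ≥ 1} |λ_j - λ_i + λ|`. -/
noncomputable def distAlpha (lam : ℕ → ℝ) (μ : ℝ) : ℝ :=
  sInf {x : ℝ | ∃ i, 1 ≤ i ∧ ∃ j, 1 ≤ j ∧ x = |lam j - lam i + μ|}

/-- Monotonicity of the sequence on indices `≥ 1`. -/
private lemma lam_mono (lam : ℕ → ℝ) (hdec : ∀ n, 1 ≤ n → lam (n + 1) < lam n) :
    ∀ m n : ℕ, 1 ≤ m → m < n → lam n < lam m := by
  intro m n hm hmn
  induction n with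
  | zero => omega
  | succ k ih =>
    rcases Nat.lt_or_ge m k with h | h
    · exact lt_trans (hdec k (by omega)) (ih h)
    · have hmk : m = k := by omega
      subst hmk; exact hdec m hm

/-- Core estimate. -/
private lemma core (α c μ D : ℝ) (hα : 1 < α) (hc : 0 < c) (hμ : 0 < μ) (hD : 0 < D)
    (lam : ℕ → ℝ)
    (hmono : ∀ m n : ℕ, 1 ≤ m → m < n → lam n < lam m)
    (htend : Filter.Tendsto lam Filter.atTop Filter.atBot)
    (hgap : ∀ k n : ℕ, 1 ≤ k → 1 ≤ n →
      c * (k : ℝ) ^ (α - 1) * |(k : ℝ) - (n : ℝ)| ≤ |lam k - lam n|)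
    (x : ℝ) (hDle : ∀ n : ℕ, 1 ≤ n → D ≤ |lam n - x|) :
    Summable (fun j : {j : ℕ // 1 ≤ j} => μ ^ 2 / |lam j.1 - x|) ∧
    ∑' j : {j : ℕ // 1 ≤ j}, μ ^ 2 / |lam j.1 - x|
      ≤ 2 * (μ ^ 2 / D) + 2 * ((μ ^ 2 / c) * ∑' t : ℕ, (t : ℝ) ^ (-α)) := by
  classical
  -- choose N ≥ 1 with lam N < x
  obtain ⟨n1, hn1⟩ := (tendsto_atBot.mp htend (x - 1)).exists_forall_of_atTop
  set N : ℕ := max n1 1 with hN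
  have hN1 : 1 ≤ N := le_max_right _ _
  have hNx : lam N < x := by
    have := hn1 N (le_max_left _ _); linarith
  set n0 : ℕ := Nat.findGreatest (fun n => x ≤ lam n) N with hn0def
  have habove : ∀ n : ℕ, 1 ≤ n → n ≤ n0 → x ≤ lam n := by
    intro n h1 h2
    have hx0 : x ≤ lam n0 := Nat.findGreatest_of_ne_zero hn0def.symm (by omega)
    rcases eq_or_lt_of_le h2 with h | h
    · exact h ▸ hx0
    · exact le_of_lt (lt_of_le_of_lt hx0 (hmono n n0 h1 h))
  have hbelow : ∀ n : ℕ, n0 < n → lam n < x := by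
    intro n hn
    by_cases hnN : n ≤ N
    · exact lt_of_not_ge (Nat.findGreatest_is_greatest hn hnN)
    · exact lt_trans (hmono N n hN1 (by omega)) hNx
  -- majorant
  set mj : ℕ → ℕ := fun j => if j ≤ n0 then n0 - j else j - n0 - 1 with hmj
  set G : ℕ → ℝ := fun j => (μ ^ 2 / c) * ((mj j : ℝ)) ^ (-α) with hGdef
  set H : ℕ → ℝ := fun j => if j = n0 ∨ j = n0 + 1 then μ ^ 2 / D else 0 with hHdef
  have hGnn : ∀ j, 0 ≤ G j := fun j =>
    mul_nonneg (div_nonneg (sq_nonneg μ) hc.le) (Real.rpow_nonneg (Nat.cast_nonneg _) _)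
  have hHnn : ∀ j, 0 ≤ H j := by
    intro j; simp only [hHdef]
    split
    · positivity
    · exact le_rfl
  have hZnn : (0:ℝ) ≤ ∑' t : ℕ, (t : ℝ) ^ (-α) :=
    tsum_nonneg fun t => Real.rpow_nonneg (Nat.cast_nonneg _) _
  set f : ℕ → ℝ := fun j => μ ^ 2 / |lam j - x| with hfdef
  -- pointwise bound
  have key : ∀ j : ℕ, Set.indicator {j : ℕ | 1 ≤ j} f j ≤ G j + H j := by
    intro j
    by_cases hj : 1 ≤ j
    · rw [Set.indicator_of_mem (show j ∈ {j : ℕ | 1 ≤ j} from hj)]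
      by_cases hj0 : j = n0 ∨ j = n0 + 1
      · have h1 : f j ≤ μ ^ 2 / D := by
          apply div_le_div_of_nonneg_left (sq_nonneg μ) hD (hDle j hj)
        have h2 : H j = μ ^ 2 / D := if_pos hj0
        have := hGnn j
        linarith
      · push_neg at hj0
        have hH0 : H j = 0 := if_neg (by tauto)
        -- lower bound on |lam j - x|
        have hlow : c * ((mj j : ℝ)) ^ α ≤ |lam j - x| ∧ 1 ≤ mj j := by
          by_cases hle : j ≤ n0
          · have hjn0 : j < n0 := lt_of_le_of_ne hle hj0.1
            have hn01 : 1 ≤ n0 := by omega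
            have hmjv : mj j = n0 - j := if_pos hle
            have hxl : x ≤ lam n0 := habove n0 hn01 le_rfl
            have hll : lam n0 < lam j := hmono j n0 hj hjn0
            have h2 := hgap n0 j hn01 hj
            have hcast : |(n0 : ℝ) - (j : ℝ)| = ((n0 - j : ℕ) : ℝ) := by
              have hc1 : (j:ℝ) ≤ (n0:ℝ) := Nat.cast_le.mpr hle
              rw [abs_of_nonneg (by linarith), Nat.cast_sub hle]
            have habs : |lam n0 - lam j| = lam j - lam n0 := by
              rw [abs_of_neg (by linarith)]; ring
            have ht1 : (1:ℝ) ≤ ((n0 - j : ℕ) : ℝ) := by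
              have : 1 ≤ n0 - j := by omega
              exact_mod_cast this
            have htn0 : ((n0 - j : ℕ) : ℝ) ≤ (n0 : ℝ) := by
              have : n0 - j ≤ n0 := by omega
              exact_mod_cast this
            have hpow : ((n0 - j : ℕ) : ℝ) ^ α
                ≤ (n0 : ℝ) ^ (α - 1) * ((n0 - j : ℕ) : ℝ) := by
              have e : ((n0 - j : ℕ) : ℝ) ^ α
                  = ((n0 - j : ℕ) : ℝ) ^ (α - 1) * ((n0 - j : ℕ) : ℝ) := by
                rw [← Real.rpow_add_one (by linarith : ((n0 - j : ℕ) : ℝ) ≠ 0)]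
                ring_nf
              rw [e]
              apply mul_le_mul_of_nonneg_right _ (by linarith)
              exact Real.rpow_le_rpow (by linarith) htn0 (by linarith)
            have hchain : c * ((n0 - j : ℕ) : ℝ) ^ α ≤ lam j - lam n0 := by
              calc c * ((n0 - j : ℕ) : ℝ) ^ α
                  ≤ c * ((n0 : ℝ) ^ (α - 1) * ((n0 - j : ℕ) : ℝ)) :=
                    mul_le_mul_of_nonneg_left hpow hc.le
                _ = c * (n0 : ℝ) ^ (α - 1) * |(n0 : ℝ) - (j : ℝ)| := by
                    rw [hcast]; ring
                _ ≤ |lam n0 - lam j| := h2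
                _ = lam j - lam n0 := habs
            refine ⟨?_, by omega⟩
            rw [hmjv]
            have : |lam j - x| = lam j - x := abs_of_nonneg (by linarith)
            rw [this]; linarith
          · have hjn0 : n0 + 2 ≤ j := by omega
            have hmjv : mj j = j - n0 - 1 := if_neg hle
            have hxl : lam (n0 + 1) < x := hbelow (n0 + 1) (by omega)
            have hll : lam j < lam (n0 + 1) := hmono (n0 + 1) j (by omega) (by omega)
            have h2 := hgap j (n0 + 1) (by omega) (by omega)
            have hcast : |(j : ℝ) - ((n0 + 1 : ℕ) : ℝ)| = ((j - n0 - 1 : ℕ) : ℝ) := by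
              have hle2 : (n0 + 1 : ℕ) ≤ j := by omega
              have hc1 : ((n0 + 1 : ℕ):ℝ) ≤ (j:ℝ) := Nat.cast_le.mpr hle2
              rw [abs_of_nonneg (by linarith)]
              have e : j - n0 - 1 = j - (n0 + 1) := by omega
              rw [e, Nat.cast_sub hle2]
            have habs : |lam j - lam (n0 + 1)| = lam (n0 + 1) - lam j := by
              rw [abs_of_neg (by linarith)]; ring
            have ht1 : (1:ℝ) ≤ ((j - n0 - 1 : ℕ) : ℝ) := by
              have : 1 ≤ j - n0 - 1 := by omega
              exact_mod_cast this
            have htj : ((j - n0 - 1 : ℕ) : ℝ) ≤ (j : ℝ) := by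
              have : j - n0 - 1 ≤ j := by omega
              exact_mod_cast this
            have hpow : ((j - n0 - 1 : ℕ) : ℝ) ^ α
                ≤ (j : ℝ) ^ (α - 1) * ((j - n0 - 1 : ℕ) : ℝ) := by
              have e : ((j - n0 - 1 : ℕ) : ℝ) ^ α
                  = ((j - n0 - 1 : ℕ) : ℝ) ^ (α - 1) * ((j - n0 - 1 : ℕ) : ℝ) := by
                rw [← Real.rpow_add_one (by linarith : ((j - n0 - 1 : ℕ) : ℝ) ≠ 0)]
                ring_nf
              rw [e]
              apply mul_le_mul_of_nonneg_right _ (by linarith)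
              exact Real.rpow_le_rpow (by linarith) htj (by linarith)
            have hchain : c * ((j - n0 - 1 : ℕ) : ℝ) ^ α ≤ lam (n0 + 1) - lam j := by
              calc c * ((j - n0 - 1 : ℕ) : ℝ) ^ α
                  ≤ c * ((j : ℝ) ^ (α - 1) * ((j - n0 - 1 : ℕ) : ℝ)) :=
                    mul_le_mul_of_nonneg_left hpow hc.le
                _ = c * (j : ℝ) ^ (α - 1) * |(j : ℝ) - ((n0 + 1 : ℕ) : ℝ)| := by
                    rw [hcast]; ring
                _ ≤ |lam j - lam (n0 + 1)| := h2
                _ = lam (n0 + 1) - lam j := habs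
            refine ⟨?_, by omega⟩
            rw [hmjv]
            have habs2 : |lam j - x| = x - lam j := by
              rw [abs_of_neg (by linarith : lam j - x < 0)]; ring
            rw [habs2]; linarith
        obtain ⟨hlow, hm1⟩ := hlow
        have hm1' : (1:ℝ) ≤ (mj j : ℝ) := by exact_mod_cast hm1
        have hpos : 0 < c * ((mj j : ℝ)) ^ α :=
          mul_pos hc (Real.rpow_pos_of_pos (by linarith) _)
        have h1 : f j ≤ μ ^ 2 / (c * ((mj j : ℝ)) ^ α) :=
          div_le_div_of_nonneg_left (sq_nonneg μ) hpos hlow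
        have h2 : μ ^ 2 / (c * ((mj j : ℝ)) ^ α) = G j := by
          simp only [hGdef]
          rw [Real.rpow_neg (Nat.cast_nonneg _)]
          field_simp
        rw [hH0]
        linarith [h1, h2 ▸ h1]
    · rw [Set.indicator_of_notMem (show j ∉ {j : ℕ | 1 ≤ j} from hj)]
      exact add_nonneg (hGnn j) (hHnn j)
  -- summability
  have hshift : (fun n : ℕ => G (n + (n0 + 1))) = fun n : ℕ => (μ ^ 2 / c) * ((n : ℝ)) ^ (-α) := by
    funext n
    simp only [hGdef, hmj]
    rw [if_neg (by omega)]
    have e : n + (n0 + 1) - n0 - 1 = n := by omega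
    rw [e]
  have hGsum : Summable G := by
    have h1 : Summable (fun n : ℕ => (μ ^ 2 / c) * ((n : ℝ)) ^ (-α)) :=
      (Real.summable_nat_rpow.mpr (by linarith)).mul_left _
    exact (summable_nat_add_iff (n0 + 1)).mp (hshift ▸ h1)
  have hHsum : Summable H := by
    apply summable_of_ne_finset_zero (s := {n0, n0 + 1})
    intro j hj
    simp only [Finset.mem_insert, Finset.mem_singleton] at hj
    exact if_neg (by tauto)
  have hGH : Summable (fun j => G j + H j) := hGsum.add hHsum
  have hindnn : ∀ j : ℕ, 0 ≤ Set.indicator {j : ℕ | 1 ≤ j} f j :=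
    fun j => Set.indicator_nonneg (fun k _ => div_nonneg (sq_nonneg μ) (abs_nonneg _)) j
  have hIndSum : Summable (Set.indicator {j : ℕ | 1 ≤ j} f) :=
    Summable.of_nonneg_of_le hindnn key hGH
  have hsub : Summable (fun j : {j : ℕ // 1 ≤ j} => μ ^ 2 / |lam j.1 - x|) := by
    have := (summable_subtype_iff_indicator (f := f) (s := {j : ℕ | 1 ≤ j})).mpr hIndSum
    exact this
  refine ⟨hsub, ?_⟩
  -- tsum bounds
  have hts : ∑' j : {j : ℕ // 1 ≤ j}, μ ^ 2 / |lam j.1 - x|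
      = ∑' j : ℕ, Set.indicator {j : ℕ | 1 ≤ j} f j := _root_.tsum_subtype {j : ℕ | 1 ≤ j} f
  have hZ : ∑' n : ℕ, G (n + (n0 + 1)) = (μ ^ 2 / c) * ∑' t : ℕ, (t : ℝ) ^ (-α) := by
    rw [hshift, tsum_mul_left]
  have hHts : ∑' j : ℕ, H j = 2 * (μ ^ 2 / D) := by
    rw [tsum_eq_sum (s := {n0, n0 + 1}) (by
      intro j hj
      simp only [Finset.mem_insert, Finset.mem_singleton] at hj
      exact if_neg (by tauto))]
    rw [Finset.sum_insert (by simp), Finset.sum_singleton]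
    simp only [hHdef]
    have e1 : (if n0 = n0 ∨ n0 = n0 + 1 then μ ^ 2 / D else 0) = μ ^ 2 / D :=
      if_pos (Or.inl rfl)
    have e2 : (if n0 + 1 = n0 ∨ n0 + 1 = n0 + 1 then μ ^ 2 / D else 0) = μ ^ 2 / D :=
      if_pos (Or.inr rfl)
    norm_num
    ring
  have hGfin : ∑ j ∈ Finset.range (n0 + 1), G j
      ≤ (μ ^ 2 / c) * ∑' t : ℕ, (t : ℝ) ^ (-α) := by
    have hre : ∑ j ∈ Finset.range (n0 + 1), G j
        = ∑ j ∈ Finset.range (n0 + 1), (μ ^ 2 / c) * ((j : ℝ)) ^ (-α) := by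
      rw [← Finset.sum_range_reflect (fun t => (μ ^ 2 / c) * ((t : ℝ)) ^ (-α)) (n0 + 1)]
      apply Finset.sum_congr rfl
      intro j hj
      simp only [Finset.mem_range] at hj
      simp only [hGdef, hmj]
      rw [if_pos (by omega)]
      have e : n0 + 1 - 1 - j = n0 - j := by omega
      rw [e]
    rw [hre, ← tsum_mul_left]
    apply Summable.sum_le_tsum
    · intro t _
      exact mul_nonneg (div_nonneg (sq_nonneg μ) hc.le) (Real.rpow_nonneg (Nat.cast_nonneg _) _)
    · exact (Real.summable_nat_rpow.mpr (by linarith)).mul_left _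
  have hGts : ∑' j : ℕ, G j ≤ 2 * ((μ ^ 2 / c) * ∑' t : ℕ, (t : ℝ) ^ (-α)) := by
    rw [← Summable.sum_add_tsum_nat_add (n0 + 1) hGsum, hZ]
    linarith
  calc ∑' j : {j : ℕ // 1 ≤ j}, μ ^ 2 / |lam j.1 - x|
      = ∑' j : ℕ, Set.indicator {j : ℕ | 1 ≤ j} f j := hts
    _ ≤ ∑' j : ℕ, (G j + H j) := Summable.tsum_le_tsum key hIndSum hGH
    _ = (∑' j : ℕ, G j) + ∑' j : ℕ, H j := Summable.tsum_add hGsum hHsum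
    _ ≤ 2 * ((μ ^ 2 / c) * ∑' t : ℕ, (t : ℝ) ^ (-α)) + 2 * (μ ^ 2 / D) := by
        rw [hHts]; linarith
    _ = 2 * (μ ^ 2 / D) + 2 * ((μ ^ 2 / c) * ∑' t : ℕ, (t : ℝ) ^ (-α)) := by ring

/-- Row and column summability bounds
`∑_j λ²/|λ_j - λ_i - λ| ≤ C (λ² + λ²/Dist_α(λ))` for non-resonant `λ > 0`. -/
theorem statement5 (α c : ℝ) (hα : 1 < α) (hc : 0 < c) (lam : ℕ → ℝ)
    (hdec : ∀ n, 1 ≤ n → lam (n + 1) < lam n)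
    (hneg : ∀ n, 1 ≤ n → lam n < 0)
    (htend : Filter.Tendsto lam Filter.atTop Filter.atBot)
    (hgap : ∀ k n : ℕ, 1 ≤ k → 1 ≤ n →
      c * (k : ℝ) ^ (α - 1) * |(k : ℝ) - (n : ℝ)| ≤ |lam k - lam n|) :
    ∃ C > 0, ∀ μ : ℝ, 0 < μ →
      (∀ i j, 1 ≤ i → 1 ≤ j → μ ≠ lam i - lam j) →
      (∀ i : ℕ, 1 ≤ i →
        Summable (fun j : {j : ℕ // 1 ≤ j} => μ ^ 2 / |lam j.1 - lam i - μ|) ∧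
        ∑' j : {j : ℕ // 1 ≤ j}, μ ^ 2 / |lam j.1 - lam i - μ|
          ≤ C * (μ ^ 2 + μ ^ 2 / distAlpha lam μ)) ∧
      (∀ j : ℕ, 1 ≤ j →
        Summable (fun i : {i : ℕ // 1 ≤ i} => μ ^ 2 / |lam j - lam i.1 - μ|) ∧
        ∑' i : {i : ℕ // 1 ≤ i}, μ ^ 2 / |lam j - lam i.1 - μ|
          ≤ C * (μ ^ 2 + μ ^ 2 / distAlpha lam μ)) := by
  classical
  have hmono := lam_mono lam hdec
  set Z : ℝ := ∑' t : ℕ, (t : ℝ) ^ (-α) with hZdef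
  have hZnn : 0 ≤ Z := tsum_nonneg fun t => Real.rpow_nonneg (Nat.cast_nonneg _) _
  refine ⟨2 + 2 * Z / c, by positivity, ?_⟩
  intro μ hμ hres
  -- the set defining distAlpha
  set S : Set ℝ := {x : ℝ | ∃ i, 1 ≤ i ∧ ∃ j, 1 ≤ j ∧ x = |lam j - lam i + μ|} with hSdef
  have hSne : S.Nonempty := ⟨|lam 1 - lam 1 + μ|, 1, le_rfl, 1, le_rfl, rfl⟩
  have hSbdd : BddBelow S := ⟨0, by rintro y ⟨i, hi, j, hj, rfl⟩; exact abs_nonneg _⟩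
  have hDeq : distAlpha lam μ = sInf S := rfl
  have hDle : ∀ i j : ℕ, 1 ≤ i → 1 ≤ j → distAlpha lam μ ≤ |lam j - lam i + μ| := by
    intro i j hi hj
    exact csInf_le hSbdd ⟨i, hi, j, hj, rfl⟩
  -- positivity of distAlpha
  have hDpos : 0 < distAlpha lam μ := by
    -- choose N with c * N^(α-1) ≥ 2 μ
    obtain ⟨N0, hN0⟩ := exists_nat_ge ((2 * μ / c) ^ (1 / (α - 1)))
    set N : ℕ := max N0 1 with hNdef
    have hN1 : 1 ≤ N := le_max_right _ _
    have hNge : (2 * μ / c) ^ (1 / (α - 1)) ≤ (N : ℝ) :=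
      le_trans hN0 (by exact_mod_cast Nat.le_max_left N0 1)
    have hNb : 2 * μ ≤ c * (N : ℝ) ^ (α - 1) := by
      have h0 : (0:ℝ) ≤ 2 * μ / c := by positivity
      have h1 : ((2 * μ / c) ^ (1 / (α - 1))) ^ (α - 1) ≤ (N : ℝ) ^ (α - 1) :=
        Real.rpow_le_rpow (Real.rpow_nonneg h0 _) hNge (by linarith)
      have h2 : ((2 * μ / c) ^ (1 / (α - 1))) ^ (α - 1) = 2 * μ / c := by
        rw [← Real.rpow_mul h0, one_div_mul_cancel (by linarith : α - 1 ≠ 0), Real.rpow_one]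
      rw [h2] at h1
      rw [div_le_iff₀ hc] at h1
      linarith
    -- finite minimum over small indices
    set F : Finset (ℕ × ℕ) := Finset.Icc 1 N ×ˢ Finset.Icc 1 N with hFdef
    have hFne : F.Nonempty := ⟨(1, 1), by simp only [hFdef, Finset.mem_product, Finset.mem_Icc]; omega⟩
    set m : ℝ := F.inf' hFne (fun p => |lam p.2 - lam p.1 + μ|) with hmdef
    have hmpos : 0 < m := by
      rw [hmdef, Finset.lt_inf'_iff]
      rintro ⟨i, j⟩ hij
      simp only [hFdef, Finset.mem_product, Finset.mem_Icc] at hij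
      have hne : lam j - lam i + μ ≠ 0 := by
        intro h
        exact hres i j hij.1.1 hij.2.1 (by linarith)
      exact abs_pos.mpr hne
    have hlb : ∀ y ∈ S, min μ m ≤ y := by
      rintro y ⟨i, hi, j, hj, rfl⟩
      by_cases hsmall : i ≤ N ∧ j ≤ N
      · refine le_trans (min_le_right _ _) ?_
        have hmem : (i, j) ∈ F := Finset.mem_product.mpr
          ⟨Finset.mem_Icc.mpr ⟨hi, hsmall.1⟩, Finset.mem_Icc.mpr ⟨hj, hsmall.2⟩⟩
        exact Finset.inf'_le (fun p : ℕ × ℕ => |lam p.2 - lam p.1 + μ|) hmem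
      · by_cases hij : i = j
        · have he : |lam j - lam i + μ| = μ := by
            rw [hij, show lam j - lam j + μ = μ from by ring, abs_of_pos hμ]
          rw [he]
          exact min_le_left _ _
        · -- large index case
          have hbig : 2 * μ ≤ |lam j - lam i| := by
            rw [not_and_or] at hsmall
            push_neg at hsmall
            have hNr : ∀ k n : ℕ, 1 ≤ n → N < k → k ≠ n → 2 * μ ≤ |lam k - lam n| := by
              intro k n hn hNk hkn
              have hk1 : 1 ≤ k := by omega
              have h1 := hgap k n hk1 hn
              have h2 : (N : ℝ) ^ (α - 1) ≤ (k : ℝ) ^ (α - 1) :=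
                Real.rpow_le_rpow (Nat.cast_nonneg _) (by exact_mod_cast hNk.le) (by linarith)
              have h3 : (1:ℝ) ≤ |(k : ℝ) - (n : ℝ)| := by
                rcases Nat.lt_or_ge k n with hlt | hge
                · have h1 : (k:ℝ) + 1 ≤ (n:ℝ) := by exact_mod_cast Nat.succ_le_of_lt hlt
                  rw [abs_sub_comm, abs_of_nonneg (by linarith)]; linarith
                · have hlt : n < k := by omega
                  have h1 : (n:ℝ) + 1 ≤ (k:ℝ) := by exact_mod_cast Nat.succ_le_of_lt hlt
                  rw [abs_of_nonneg (by linarith)]; linarith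
              calc 2 * μ ≤ c * (N : ℝ) ^ (α - 1) := hNb
                _ ≤ c * (k : ℝ) ^ (α - 1) := by nlinarith [Real.rpow_nonneg (Nat.cast_nonneg (α := ℝ) N) (α - 1)]
                _ = c * (k : ℝ) ^ (α - 1) * 1 := by ring
                _ ≤ c * (k : ℝ) ^ (α - 1) * |(k : ℝ) - (n : ℝ)| := by
                    apply mul_le_mul_of_nonneg_left h3
                    positivity
                _ ≤ |lam k - lam n| := h1
            rcases hsmall with hNi | hNj
            · have := hNr i j hj hNi hij
              rwa [abs_sub_comm] at this
            · exact hNr j i hi hNj (fun h => hij h.symm)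
          have : μ ≤ |lam j - lam i + μ| := by
            have h4 : |lam j - lam i| - |μ| ≤ |lam j - lam i + μ| := by
              have := abs_sub_abs_le_abs_sub (lam j - lam i) (-μ)
              simp only [sub_neg_eq_add, abs_neg] at this
              linarith [this]
            rw [abs_of_pos hμ] at h4
            linarith
          exact le_trans (min_le_left _ _) this
    have : min μ m ≤ distAlpha lam μ := le_csInf hSne hlb
    have : 0 < min μ m := lt_min hμ hmpos
    linarith [le_csInf hSne hlb]
  have hDnn : 0 ≤ μ ^ 2 / distAlpha lam μ := div_nonneg (sq_nonneg μ) hDpos.le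
  -- final combination helper
  have hfinal : ∀ T : ℝ, T ≤ 2 * (μ ^ 2 / distAlpha lam μ) + 2 * ((μ ^ 2 / c) * Z) →
      T ≤ (2 + 2 * Z / c) * (μ ^ 2 + μ ^ 2 / distAlpha lam μ) := by
    intro T hT
    have h1 : 2 * ((μ ^ 2 / c) * Z) = (2 * Z / c) * μ ^ 2 := by field_simp
    have h2 : (0:ℝ) ≤ 2 * Z / c := by positivity
    nlinarith [sq_nonneg μ, hDnn]
  constructor
  · intro i hi
    have hx : ∀ n : ℕ, 1 ≤ n → distAlpha lam μ ≤ |lam n - (lam i + μ)| := by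
      intro n hn
      have : |lam n - (lam i + μ)| = |lam i - lam n + μ| := by
        rw [show lam n - (lam i + μ) = -(lam i - lam n + μ) by ring, abs_neg]
      rw [this]
      exact hDle n i hn hi
    obtain ⟨hs, hb⟩ := core α c μ (distAlpha lam μ) hα hc hμ hDpos lam hmono htend hgap
      (lam i + μ) hx
    have heq : (fun j : {j : ℕ // 1 ≤ j} => μ ^ 2 / |lam j.1 - lam i - μ|)
        = fun j : {j : ℕ // 1 ≤ j} => μ ^ 2 / |lam j.1 - (lam i + μ)| := by
      funext j; rw [sub_sub]
    rw [heq]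
    refine ⟨hs, ?_⟩
    exact hfinal _ (by rw [hZdef]; exact hb)
  · intro j hj
    have hx : ∀ n : ℕ, 1 ≤ n → distAlpha lam μ ≤ |lam n - (lam j - μ)| := by
      intro n hn
      have : |lam n - (lam j - μ)| = |lam n - lam j + μ| := by ring_nf
      rw [this]
      exact hDle j n hj hn
    obtain ⟨hs, hb⟩ := core α c μ (distAlpha lam μ) hα hc hμ hDpos lam hmono htend hgap
      (lam j - μ) hx
    have heq : (fun i : {i : ℕ // 1 ≤ i} => μ ^ 2 / |lam j - lam i.1 - μ|)
        = fun i : {i : ℕ // 1 ≤ i} => μ ^ 2 / |lam i.1 - (lam j - μ)| := by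
      funext i
      rw [show lam j - lam i.1 - μ = -(lam i.1 - (lam j - μ)) by ring, abs_neg]
    rw [heq]
    refine ⟨hs, ?_⟩
    exact hfinal _ (by rw [hZdef]; exact hb)
end

section
/- Let α > 1 and let (λ_n)_{n≥1} be a strictly decreasing sequence of negative real numbers with λ_n → −∞ satisfying, for some c > 0, |λ_k − λ_n| ≥ c · k^{α−1} · |k − n| for all k, n ≥ 1. Then there exists C > 0, independent of λ, such that for every λ > 0 with λ ∉ 𝒩 := {λ_i − λ_j : i, j ≥ 1} and every square-summable complex sequence (f_j)_{j≥1}, the numbers g_i := ∑_{j≥1} f_j/(λ_i − λ_j − λ) are well defined (the series converge absolutely for each i), the sequence (g_i) is square-summable, and (∑_{i≥1} |g_i|²)^{1/2} ≤ C·(1 + 1/Dist_α(λ)) · (∑_{j≥1} |f_j|²)^{1/2}. -/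
open Filter Finset Function


lemma exists_argmin_one_le (m : ℕ → ℝ) (hm : Filter.Tendsto m Filter.atTop Filter.atTop) :
    ∃ k : ℕ, 1 ≤ k ∧ ∀ n, 1 ≤ n → m k ≤ m n := by
  obtain ⟨N, hN⟩ := (hm.eventually_ge_atTop (m 1)).exists_forall_of_atTop
  set M := max N 1 with hM
  obtain ⟨k, hkmem, hkmin⟩ := Finset.exists_min_image (Finset.Icc 1 M) m
    ⟨1, Finset.mem_Icc.mpr ⟨le_rfl, le_max_right N 1⟩⟩
  rw [Finset.mem_Icc] at hkmem
  refine ⟨k, hkmem.1, fun n hn => ?_⟩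
  by_cases hnM : n ≤ M
  · exact hkmin n (Finset.mem_Icc.mpr ⟨hn, hnM⟩)
  · have h1 : m k ≤ m 1 := hkmin 1 (Finset.mem_Icc.mpr ⟨le_rfl, le_max_right _ _⟩)
    have h2 : m 1 ≤ m n := hN n (le_trans (le_max_left _ _) (le_of_not_ge hnM))
    linarith

/-- Key row/column sum bound. -/
lemma row_sum_bound (α c : ℝ) (hα : 1 < α) (hc : 0 < c) (lam : ℕ → ℝ)
    (hsep : ∀ i j : ℕ, 1 ≤ i → 1 ≤ j → i ≠ j → c * |(i : ℝ) - (j : ℝ)| ^ α ≤ |lam i - lam j|)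
    (htend : Filter.Tendsto lam Filter.atTop Filter.atBot)
    (s d : ℝ) (hd : 0 < d) (hds : ∀ n : ℕ, 1 ≤ n → d ≤ |lam n - s|) :
    Summable (fun n : {n : ℕ // 1 ≤ n} => 1 / |lam n.1 - s|) ∧
      ∑' n : {n : ℕ // 1 ≤ n}, 1 / |lam n.1 - s|
        ≤ 2 / d + 4 / c * ∑' k : ℕ, 1 / (k : ℝ) ^ α := by
  have hα1 : (0:ℝ) < α - 1 := by linarith
  -- the minimizing index
  have hmt : Filter.Tendsto (fun n => |lam n - s|) Filter.atTop Filter.atTop :=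
    tendsto_abs_atBot_atTop.comp (Filter.tendsto_atBot_add_const_right _ (-s) htend)
  obtain ⟨k, hk1, hkmin⟩ := exists_argmin_one_le _ hmt
  -- the comparison function on ℤ
  set g : ℤ → ℝ := fun z => if z = 0 then 1 / d else 2 / c * (1 / |(z : ℝ)| ^ α) with hg
  have hg0 : ∀ z, 0 ≤ g z := by
    intro z
    by_cases hz : z = 0 <;> simp [hg, hz] <;> positivity
  have hS : Summable (fun k : ℕ => 1 / (k : ℝ) ^ α) := Real.summable_one_div_nat_rpow.mpr hα
  have hS0 : 0 ≤ ∑' k : ℕ, 1 / (k : ℝ) ^ α := tsum_nonneg (fun k => by positivity)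
  -- nat part of g
  have hnat_eq : ∀ n : ℕ, g (n : ℤ) =
      (if n = 0 then 1 / d else 0) + 2 / c * (1 / (n : ℝ) ^ α) := by
    intro n
    by_cases hn : n = 0
    · simp [hg, hn, Real.zero_rpow (by linarith : α ≠ 0)]
    · have : ((n : ℤ) : ℝ) = (n : ℝ) := by push_cast; ring
      simp [hg, hn, Int.natCast_eq_zero, abs_of_nonneg (by positivity : (0:ℝ) ≤ (n:ℝ)), this]
  have hspike : Summable (fun n : ℕ => if n = 0 then 1 / d else 0) :=
    (hasSum_ite_eq 0 (1 / d)).summable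
  have hnat_summ : Summable (fun n : ℕ => g (n : ℤ)) := by
    rw [show (fun n : ℕ => g (n : ℤ)) =
      fun n : ℕ => (if n = 0 then 1 / d else 0) + 2 / c * (1 / (n : ℝ) ^ α)
      from funext hnat_eq]
    exact hspike.add (hS.mul_left _)
  have hnat_tsum : ∑' n : ℕ, g (n : ℤ) = 1 / d + 2 / c * ∑' k : ℕ, 1 / (k : ℝ) ^ α := by
    rw [show (fun n : ℕ => g (n : ℤ)) =
      fun n : ℕ => (if n = 0 then 1 / d else 0) + 2 / c * (1 / (n : ℝ) ^ α)
      from funext hnat_eq, Summable.tsum_add hspike (hS.mul_left _), tsum_ite_eq, tsum_mul_left]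
  -- negative part of g
  have hneg_eq : ∀ n : ℕ, g (-((n : ℤ) + 1)) = 2 / c * (1 / ((n : ℝ) + 1) ^ α) := by
    intro n
    have h1 : (-((n : ℤ) + 1)) ≠ 0 := by omega
    have h2 : |((-((n : ℤ) + 1) : ℤ) : ℝ)| = (n : ℝ) + 1 := by
      push_cast
      rw [abs_neg, abs_of_nonneg (by positivity)]
    have : g (-((n : ℤ) + 1)) = 2 / c * (1 / |((-((n : ℤ) + 1) : ℤ) : ℝ)| ^ α) := by
      simp only [hg]
      rw [if_neg h1]
    rw [this, h2]
  have hshift : Summable (fun n : ℕ => 1 / ((n : ℝ) + 1) ^ α) := by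
    have := (summable_nat_add_iff 1).mpr hS
    simpa [Nat.cast_add] using this
  have hneg_summ : Summable (fun n : ℕ => g (-((n : ℤ) + 1))) := by
    rw [show (fun n : ℕ => g (-((n : ℤ) + 1))) = fun n : ℕ => 2 / c * (1 / ((n : ℝ) + 1) ^ α)
      from funext hneg_eq]
    exact hshift.mul_left _
  have hneg_tsum : ∑' n : ℕ, g (-((n : ℤ) + 1)) ≤ 2 / c * ∑' k : ℕ, 1 / (k : ℝ) ^ α := by
    rw [show (fun n : ℕ => g (-((n : ℤ) + 1))) = fun n : ℕ => 2 / c * (1 / ((n : ℝ) + 1) ^ α)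
      from funext hneg_eq, tsum_mul_left]
    have : ∑' n : ℕ, 1 / ((n : ℝ) + 1) ^ α ≤ ∑' k : ℕ, 1 / (k : ℝ) ^ α := by
      refine Summable.tsum_le_tsum_of_inj (fun n => n + 1) (add_left_injective 1)
        (fun k _ => by positivity) (fun n => by push_cast; exact le_rfl) hshift hS
    exact mul_le_mul_of_nonneg_left this (by positivity)
  have hg_summ : Summable g := Summable.of_nat_of_neg_add_one hnat_summ hneg_summ
  have hg_tsum : ∑' z : ℤ, g z ≤ 2 / d + 4 / c * ∑' k : ℕ, 1 / (k : ℝ) ^ α := by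
    rw [tsum_of_nat_of_neg_add_one hnat_summ hneg_summ, hnat_tsum]
    have h1d : 1 / d ≤ 2 / d := by
      rw [div_le_div_iff₀ hd hd]; nlinarith
    have h4 : 4 / c * ∑' (k : ℕ), 1 / (k:ℝ) ^ α
        = 2 / c * ∑' (k : ℕ), 1 / (k:ℝ) ^ α + 2 / c * ∑' (k : ℕ), 1 / (k:ℝ) ^ α := by ring
    linarith [hneg_tsum]
  -- injection into ℤ
  set e : {n : ℕ // 1 ≤ n} → ℤ := fun n => (n.1 : ℤ) - (k : ℤ) with he
  have he_inj : Function.Injective e := by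
    intro a b hab
    simp only [he, sub_left_inj, Int.natCast_inj] at hab
    exact Subtype.ext hab
  have hle : ∀ n : {n : ℕ // 1 ≤ n}, 1 / |lam n.1 - s| ≤ g (e n) := by
    intro n
    have hm0 : 0 < |lam n.1 - s| := lt_of_lt_of_le hd (hds n.1 n.2)
    by_cases hnk : n.1 = k
    · have h0 : e n = 0 := by simp [he, hnk]
      rw [h0]
      simp only [hg, if_pos rfl]
      exact one_div_le_one_div_of_le hd (hds n.1 n.2)
    · have hz' : (n.1 : ℤ) - (k : ℤ) ≠ 0 := by
        intro h; exact hnk (by omega)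
      have hz : e n ≠ 0 := hz'
      have hcast : |((e n : ℤ) : ℝ)| = |(n.1 : ℝ) - (k : ℝ)| := by
        simp only [he]; push_cast; ring_nf
      have hX1 : (1 : ℝ) ≤ |(n.1 : ℝ) - (k : ℝ)| := by
        have h1 := Int.one_le_abs hz'
        calc (1 : ℝ) ≤ ((|(n.1 : ℤ) - (k : ℤ)| : ℤ) : ℝ) := by exact_mod_cast h1
          _ = |(n.1 : ℝ) - (k : ℝ)| := by push_cast; ring_nf
      have hXpos : (0 : ℝ) < |(n.1 : ℝ) - (k : ℝ)| ^ α :=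
        Real.rpow_pos_of_pos (by linarith) _
      have hsep' := hsep n.1 k n.2 hk1 hnk
      have htri : |lam n.1 - lam k| ≤ |lam n.1 - s| + |lam k - s| := by
        have h := abs_sub (lam n.1 - s) (lam k - s)
        rwa [show (lam n.1 - s) - (lam k - s) = lam n.1 - lam k by ring] at h
      have hmin : |lam k - s| ≤ |lam n.1 - s| := hkmin n.1 n.2
      have hkey : c * |(n.1 : ℝ) - (k : ℝ)| ^ α ≤ 2 * |lam n.1 - s| := by linarith
      have hgval : g (e n) = 2 / c * (1 / |(n.1 : ℝ) - (k : ℝ)| ^ α) := by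
        simp only [hg]
        rw [if_neg hz, hcast]
      rw [hgval, div_mul_div_comm, mul_one, div_le_div_iff₀ hm0 (by positivity)]
      nlinarith
  have hge : Summable (g ∘ e) := hg_summ.comp_injective he_inj
  have hfs : Summable (fun n : {n : ℕ // 1 ≤ n} => 1 / |lam n.1 - s|) :=
    Summable.of_nonneg_of_le (fun n => by positivity) hle hge
  exact ⟨hfs, le_trans (Summable.tsum_le_tsum_of_inj e he_inj (fun z _ => hg0 z) hle hfs hg_summ) hg_tsum⟩


/-- Cauchy-Schwarz for tsums with weight. -/
lemma cs_tsum {ι : Type*} (a b : ι → ℝ) (ha : ∀ x, 0 ≤ a x) (hb : ∀ x, 0 ≤ b x)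
    (hsa : Summable a) (hsab2 : Summable fun x => a x * b x ^ 2)
    (hsab : Summable fun x => a x * b x) :
    (∑' x, a x * b x) ^ 2 ≤ (∑' x, a x) * ∑' x, a x * b x ^ 2 := by
  set P := (∑' x, a x) * ∑' x, a x * b x ^ 2 with hP
  have hP0 : 0 ≤ P :=
    mul_nonneg (tsum_nonneg ha) (tsum_nonneg fun x => mul_nonneg (ha x) (sq_nonneg _))
  have key : ∀ s : Finset ι, ∑ x ∈ s, a x * b x ≤ Real.sqrt P := by
    intro s
    have h1 : (∑ x ∈ s, a x * b x) ^ 2 ≤ (∑ x ∈ s, a x) * ∑ x ∈ s, a x * b x ^ 2 := by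
      have h2 := Finset.sum_mul_sq_le_sq_mul_sq s (fun x => Real.sqrt (a x))
        (fun x => Real.sqrt (a x) * b x)
      have e1 : ∀ x, Real.sqrt (a x) * (Real.sqrt (a x) * b x) = a x * b x := by
        intro x; rw [← mul_assoc, Real.mul_self_sqrt (ha x)]
      have e2 : ∀ x, Real.sqrt (a x) ^ 2 = a x := fun x => Real.sq_sqrt (ha x)
      have e3 : ∀ x, (Real.sqrt (a x) * b x) ^ 2 = a x * b x ^ 2 := by
        intro x; rw [mul_pow, e2]
      simp only [e1, e2, e3] at h2
      exact h2
    have h3 : (∑ x ∈ s, a x) * ∑ x ∈ s, a x * b x ^ 2 ≤ P := by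
      apply mul_le_mul
      · exact Summable.sum_le_tsum s (fun x _ => ha x) hsa
      · exact Summable.sum_le_tsum s (fun x _ => mul_nonneg (ha x) (sq_nonneg _)) hsab2
      · exact Finset.sum_nonneg fun x _ => mul_nonneg (ha x) (sq_nonneg _)
      · exact tsum_nonneg ha
    refine (Real.le_sqrt (Finset.sum_nonneg fun x _ => mul_nonneg (ha x) (hb x)) hP0).mpr ?_
    exact le_trans h1 h3
  have h4 : ∑' x, a x * b x ≤ Real.sqrt P := Summable.tsum_le_of_sum_le hsab key
  calc (∑' x, a x * b x) ^ 2 ≤ Real.sqrt P ^ 2 := by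
        apply pow_le_pow_left₀ (tsum_nonneg fun x => mul_nonneg (ha x) (hb x)) h4
    _ = P := Real.sq_sqrt hP0


lemma sep_of_gap (α c : ℝ) (hα : 1 < α) (hc : 0 < c) (lam : ℕ → ℝ)
    (hgap : ∀ k n : ℕ, 1 ≤ k → 1 ≤ n →
      c * (k : ℝ) ^ (α - 1) * |(k : ℝ) - (n : ℝ)| ≤ |lam k - lam n|) :
    ∀ i j : ℕ, 1 ≤ i → 1 ≤ j → i ≠ j → c * |(i : ℝ) - (j : ℝ)| ^ α ≤ |lam i - lam j| := by
  have key : ∀ m k : ℕ, 1 ≤ m → m < k →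
      |(m : ℝ) - (k : ℝ)| ^ α ≤ (k : ℝ) ^ (α - 1) * |(k : ℝ) - (m : ℝ)| := by
    intro m k hm hmk
    set t : ℝ := (k : ℝ) - (m : ℝ) with ht
    have ht1 : (1 : ℝ) ≤ t := by
      have : (m : ℝ) + 1 ≤ (k : ℝ) := by exact_mod_cast hmk
      simp only [ht]; linarith
    have habs : |(m : ℝ) - (k : ℝ)| = t := by
      rw [abs_sub_comm, abs_of_nonneg (by linarith)]
    have habs2 : |(k : ℝ) - (m : ℝ)| = t := abs_of_nonneg (by linarith)
    rw [habs, habs2]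
    have h1 : t ^ α = t ^ (α - 1) * t := by
      rw [show α = (α - 1) + 1 by ring, Real.rpow_add_one (by linarith : t ≠ 0)]
      ring_nf
    have htk : t ≤ (k : ℝ) := by
      have : (0 : ℝ) ≤ (m : ℝ) := Nat.cast_nonneg m
      simp only [ht]; linarith
    have h2 : t ^ (α - 1) ≤ (k : ℝ) ^ (α - 1) :=
      Real.rpow_le_rpow (by linarith) htk (by linarith)
    rw [h1]
    exact mul_le_mul_of_nonneg_right h2 (by linarith)
  intro i j hi hj hne
  rcases lt_or_gt_of_ne hne with h | h
  · have := hgap j i hj hi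
    have hk := key i j hi h
    rw [abs_sub_comm (lam i)]
    calc c * |(i : ℝ) - (j : ℝ)| ^ α ≤ c * ((j : ℝ) ^ (α - 1) * |(j : ℝ) - (i : ℝ)|) :=
          mul_le_mul_of_nonneg_left hk (le_of_lt hc)
      _ = c * (j : ℝ) ^ (α - 1) * |(j : ℝ) - (i : ℝ)| := by ring
      _ ≤ |lam j - lam i| := this
  · have := hgap i j hi hj
    have hk := key j i hj h
    calc c * |(i : ℝ) - (j : ℝ)| ^ α = c * |(j : ℝ) - (i : ℝ)| ^ α := by rw [abs_sub_comm]
      _ ≤ c * ((i : ℝ) ^ (α - 1) * |(i : ℝ) - (j : ℝ)|) :=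
          mul_le_mul_of_nonneg_left hk (le_of_lt hc)
      _ = c * (i : ℝ) ^ (α - 1) * |(i : ℝ) - (j : ℝ)| := by ring
      _ ≤ |lam i - lam j| := this

lemma distAlpha_pos (α c : ℝ) (hα : 1 < α) (hc : 0 < c) (lam : ℕ → ℝ)
    (hmono : ∀ i j : ℕ, 1 ≤ i → i ≤ j → lam j ≤ lam i)
    (hgap : ∀ k n : ℕ, 1 ≤ k → 1 ≤ n →
      c * (k : ℝ) ^ (α - 1) * |(k : ℝ) - (n : ℝ)| ≤ |lam k - lam n|)
    (μ : ℝ) (hμ : 0 < μ)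
    (hres : ∀ i j, 1 ≤ i → 1 ≤ j → μ ≠ lam i - lam j) :
    0 < distAlpha lam μ := by
  have hα1 : (0:ℝ) < α - 1 := by linarith
  obtain ⟨N, hN⟩ := exists_nat_gt ((3 * μ / (2 * c)) ^ (α - 1)⁻¹)
  set E : Finset ℝ := insert (μ / 2)
    ((Finset.Icc 1 N ×ˢ Finset.Icc 1 N).image fun p => |lam p.2 - lam p.1 + μ|) with hE
  have hEne : E.Nonempty := ⟨μ / 2, Finset.mem_insert_self _ _⟩
  set δ := E.min' hEne with hδ
  have hδpos : 0 < δ := by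
    rw [hδ, Finset.lt_min'_iff]
    intro x hx
    rw [hE, Finset.mem_insert] at hx
    rcases hx with h | h
    · rw [h]; linarith
    · obtain ⟨p, hp, rfl⟩ := Finset.mem_image.mp h
      rw [Finset.mem_product, Finset.mem_Icc, Finset.mem_Icc] at hp
      rw [abs_pos]
      intro h0
      exact hres p.1 p.2 hp.1.1 hp.2.1 (by linarith)
  have hδμ : δ ≤ μ / 2 := Finset.min'_le _ _ (Finset.mem_insert_self _ _)
  have claim : ∀ i j : ℕ, 1 ≤ i → 1 ≤ j → δ ≤ |lam j - lam i + μ| := by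
    intro i j hi hj
    by_cases hij : j ≤ i
    · have := hmono j i hj hij
      have h1 : μ ≤ lam j - lam i + μ := by linarith
      calc δ ≤ μ / 2 := hδμ
        _ ≤ lam j - lam i + μ := by linarith
        _ ≤ |lam j - lam i + μ| := le_abs_self _
    · push_neg at hij
      by_cases hfar : μ / 2 ≤ |lam j - lam i + μ|
      · exact le_trans hδμ hfar
      · push_neg at hfar
        have hx0 : lam j ≤ lam i := hmono i j hi (le_of_lt hij)
        have hxa : |lam j - lam i + μ| = |μ - (lam i - lam j)| := by ring_nf
        have habs := abs_lt.mp hfar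
        have hx3 : lam i - lam j < 3 * μ / 2 := by linarith
        have hgij := hgap j i hj hi
        have hlamji : |lam j - lam i| = lam i - lam j := by
          rw [abs_sub_comm, abs_of_nonneg (by linarith)]
        have hdiff1 : (1 : ℝ) ≤ |(j : ℝ) - (i : ℝ)| := by
          have : (i : ℝ) + 1 ≤ (j : ℝ) := by exact_mod_cast hij
          rw [abs_of_nonneg (by linarith)]; linarith
        have hj0 : (0 : ℝ) ≤ c * (j : ℝ) ^ (α - 1) :=
          mul_nonneg (le_of_lt hc) (Real.rpow_nonneg (Nat.cast_nonneg j) _)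
        have h5 : c * (j : ℝ) ^ (α - 1) ≤ lam i - lam j := by
          calc c * (j : ℝ) ^ (α - 1) ≤ c * (j : ℝ) ^ (α - 1) * |(j : ℝ) - (i : ℝ)| :=
                le_mul_of_one_le_right hj0 hdiff1
            _ ≤ |lam j - lam i| := hgij
            _ = lam i - lam j := hlamji
        have h6 : (j : ℝ) ^ (α - 1) < 3 * μ / (2 * c) := by
          rw [lt_div_iff₀ (by linarith)]
          nlinarith
        have hB0 : (0 : ℝ) ≤ 3 * μ / (2 * c) := by positivity
        have h7 : (j : ℝ) ^ (α - 1) < (N : ℝ) ^ (α - 1) := by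
          have h8 : ((3 * μ / (2 * c)) ^ (α - 1)⁻¹) ^ (α - 1) < (N : ℝ) ^ (α - 1) :=
            Real.rpow_lt_rpow (Real.rpow_nonneg hB0 _) hN hα1
          rw [Real.rpow_inv_rpow hB0 (ne_of_gt hα1)] at h8
          linarith
        have hjN : j ≤ N := by
          by_contra hcon
          push_neg at hcon
          have : (N : ℝ) ^ (α - 1) ≤ (j : ℝ) ^ (α - 1) :=
            Real.rpow_le_rpow (Nat.cast_nonneg N) (by exact_mod_cast le_of_lt hcon)
              (le_of_lt hα1)
          linarith
        have hiN : i ≤ N := le_trans (le_of_lt hij) hjN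
        have hmem : |lam j - lam i + μ| ∈ E := by
          rw [hE]
          apply Finset.mem_insert_of_mem
          exact Finset.mem_image.mpr ⟨(i, j), Finset.mem_product.mpr
            ⟨Finset.mem_Icc.mpr ⟨hi, hiN⟩, Finset.mem_Icc.mpr ⟨hj, hjN⟩⟩, rfl⟩
        exact Finset.min'_le _ _ hmem
  have hne : {x : ℝ | ∃ i, 1 ≤ i ∧ ∃ j, 1 ≤ j ∧ x = |lam j - lam i + μ|}.Nonempty :=
    ⟨|lam 1 - lam 1 + μ|, 1, le_rfl, 1, le_rfl, rfl⟩
  have hdge : δ ≤ distAlpha lam μ := by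
    apply le_csInf hne
    rintro x ⟨i, hi, j, hj, rfl⟩
    exact claim i j hi hj
  linarith


set_option maxHeartbeats 1000000 in
/-- The infinite shifted Cauchy matrix `T̃_{ij}(λ) = 1/(λ_i - λ_j - λ)`
defines a bounded operator on ℓ² with norm at most `C (1 + 1/Dist_α(λ))`, with `C`
independent of `λ`. -/
theorem statement7 (α c : ℝ) (hα : 1 < α) (hc : 0 < c) (lam : ℕ → ℝ)
    (hdec : ∀ n, 1 ≤ n → lam (n + 1) < lam n)
    (hneg : ∀ n, 1 ≤ n → lam n < 0)
    (htend : Filter.Tendsto lam Filter.atTop Filter.atBot)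
    (hgap : ∀ k n : ℕ, 1 ≤ k → 1 ≤ n →
      c * (k : ℝ) ^ (α - 1) * |(k : ℝ) - (n : ℝ)| ≤ |lam k - lam n|) :
    ∃ C > 0, ∀ μ : ℝ, 0 < μ →
      (∀ i j, 1 ≤ i → 1 ≤ j → μ ≠ lam i - lam j) →
      ∀ f : {j : ℕ // 1 ≤ j} → ℂ,
        Summable (fun j : {j : ℕ // 1 ≤ j} => ‖f j‖ ^ 2) →
        (∀ i : {i : ℕ // 1 ≤ i},
          Summable (fun j : {j : ℕ // 1 ≤ j} =>
            ‖f j / ((lam i.1 - lam j.1 - μ : ℝ) : ℂ)‖)) ∧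
        Summable (fun i : {i : ℕ // 1 ≤ i} =>
          ‖∑' j : {j : ℕ // 1 ≤ j}, f j / ((lam i.1 - lam j.1 - μ : ℝ) : ℂ)‖ ^ 2) ∧
        Real.sqrt (∑' i : {i : ℕ // 1 ≤ i},
            ‖∑' j : {j : ℕ // 1 ≤ j}, f j / ((lam i.1 - lam j.1 - μ : ℝ) : ℂ)‖ ^ 2)
          ≤ C * (1 + 1 / distAlpha lam μ) *
            Real.sqrt (∑' j : {j : ℕ // 1 ≤ j}, ‖f j‖ ^ 2) := by
  classical
  have hα1 : (0:ℝ) < α - 1 := by linarith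
  have hmono : ∀ i j : ℕ, 1 ≤ i → i ≤ j → lam j ≤ lam i := by
    intro i j hi hij
    induction j, hij using Nat.le_induction with
    | base => exact le_rfl
    | succ n hn ih => exact le_trans (le_of_lt (hdec n (le_trans hi hn))) ih
  have hsep := sep_of_gap α c hα hc lam hgap
  have hS : Summable (fun k : ℕ => 1 / (k : ℝ) ^ α) := Real.summable_one_div_nat_rpow.mpr hα
  have hS0 : 0 ≤ ∑' k : ℕ, 1 / (k : ℝ) ^ α := tsum_nonneg fun k => by positivity
  refine ⟨2 + 4 / c * ∑' k : ℕ, 1 / (k : ℝ) ^ α, by positivity, ?_⟩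
  intro μ hμ hres f hf2
  have hd0 : 0 < distAlpha lam μ := distAlpha_pos α c hα hc lam hmono hgap μ hμ hres
  set d := distAlpha lam μ with hdd
  have hDbdd : BddBelow {x : ℝ | ∃ i, 1 ≤ i ∧ ∃ j, 1 ≤ j ∧ x = |lam j - lam i + μ|} :=
    ⟨0, by rintro x ⟨i, hi, j, hj, rfl⟩; exact abs_nonneg _⟩
  have hd_le : ∀ I J : ℕ, 1 ≤ I → 1 ≤ J → d ≤ |lam J - lam I + μ| :=
    fun I J hI hJ => csInf_le hDbdd ⟨I, hI, J, hJ, rfl⟩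
  set A : {i : ℕ // 1 ≤ i} → {j : ℕ // 1 ≤ j} → ℝ :=
    fun i j => 1 / |lam i.1 - lam j.1 - μ| with hA
  have hden : ∀ i j : ℕ, |lam i - lam j - μ| = |lam j - lam i + μ| := by
    intro i j; rw [show lam i - lam j - μ = -(lam j - lam i + μ) by ring, abs_neg]
  have hd_den : ∀ i j : {n : ℕ // 1 ≤ n}, d ≤ |lam i.1 - lam j.1 - μ| := by
    intro i j; rw [hden]; exact hd_le i.1 j.1 i.2 j.2
  have hA0 : ∀ i j, 0 ≤ A i j := fun i j => by positivity
  have hA_le : ∀ i j, A i j ≤ 1 / d := fun i j =>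
    one_div_le_one_div_of_le hd0 (hd_den i j)
  set R : ℝ := 2 / d + 4 / c * ∑' k : ℕ, 1 / (k : ℝ) ^ α with hR
  have hR0 : 0 ≤ R := by positivity
  -- row sums
  have hrow : ∀ i : {n : ℕ // 1 ≤ n}, Summable (fun j : {n : ℕ // 1 ≤ n} => A i j) ∧
      ∑' j : {n : ℕ // 1 ≤ n}, A i j ≤ R := by
    intro i
    have hb := row_sum_bound α c hα hc lam hsep htend (lam i.1 - μ) d hd0 (fun n hn => by
      rw [show lam n - (lam i.1 - μ) = lam n - lam i.1 + μ by ring]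
      exact hd_le i.1 n i.2 hn)
    have heq : (fun j : {n : ℕ // 1 ≤ n} => A i j)
        = fun j : {n : ℕ // 1 ≤ n} => 1 / |lam j.1 - (lam i.1 - μ)| := by
      funext j
      simp only [hA]
      rw [show lam j.1 - (lam i.1 - μ) = -(lam i.1 - lam j.1 - μ) by ring, abs_neg]
    rw [heq]
    exact hb
  -- column sums
  have hcol : ∀ j : {n : ℕ // 1 ≤ n}, Summable (fun i : {n : ℕ // 1 ≤ n} => A i j) ∧
      ∑' i : {n : ℕ // 1 ≤ n}, A i j ≤ R := by
    intro j
    have hb := row_sum_bound α c hα hc lam hsep htend (lam j.1 + μ) d hd0 (fun n hn => by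
      rw [show lam n - (lam j.1 + μ) = lam n - lam j.1 - μ by ring, hden]
      exact hd_le n j.1 hn j.2)
    have heq : (fun i : {n : ℕ // 1 ≤ n} => A i j)
        = fun i : {n : ℕ // 1 ≤ n} => 1 / |lam i.1 - (lam j.1 + μ)| := by
      funext i
      simp only [hA]
      rw [show lam i.1 - (lam j.1 + μ) = lam i.1 - lam j.1 - μ by ring]
    rw [heq]
    exact hb
  have hnorm : ∀ i j : {n : ℕ // 1 ≤ n},
      ‖f j / ((lam i.1 - lam j.1 - μ : ℝ) : ℂ)‖ = ‖f j‖ * A i j := by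
    intro i j
    simp only [hA]
    rw [norm_div, Complex.norm_real, Real.norm_eq_abs, div_eq_mul_one_div]
  -- (i) absolute convergence of each row
  have hsum1 : ∀ i : {n : ℕ // 1 ≤ n},
      Summable (fun j : {n : ℕ // 1 ≤ n} => ‖f j‖ * A i j) := by
    intro i
    refine Summable.of_nonneg_of_le (fun j => mul_nonneg (norm_nonneg _) (hA0 i j)) ?_
      (((hrow i).1).add (hf2.mul_right (1 / d)))
    intro j
    have h3 : 0 ≤ A i j := hA0 i j
    have h4 := hA_le i j
    have h5 : (0:ℝ) ≤ ‖f j‖ := norm_nonneg _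
    rcases le_total (‖f j‖) 1 with h | h
    · have h1 : ‖f j‖ * A i j ≤ A i j := by nlinarith
      have h2 : 0 ≤ ‖f j‖ ^ 2 * (1 / d) := by positivity
      linarith
    · have h1 : ‖f j‖ * A i j ≤ ‖f j‖ ^ 2 * A i j := by
        nlinarith [mul_nonneg (mul_nonneg (sub_nonneg.mpr h) h5) h3]
      have h2 : ‖f j‖ ^ 2 * A i j ≤ ‖f j‖ ^ 2 * (1 / d) := by nlinarith
      linarith
  have hsum2 : ∀ i : {n : ℕ // 1 ≤ n},
      Summable (fun j : {n : ℕ // 1 ≤ n} => A i j * ‖f j‖ ^ 2) := by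
    intro i
    refine Summable.of_nonneg_of_le (fun j => by positivity) (fun j => ?_) (hf2.mul_left (1 / d))
    have := hA_le i j
    nlinarith [sq_nonneg ‖f j‖, hA0 i j]
  have hsum1' : ∀ i : {n : ℕ // 1 ≤ n},
      Summable (fun j : {n : ℕ // 1 ≤ n} => ‖f j / ((lam i.1 - lam j.1 - μ : ℝ) : ℂ)‖) := by
    intro i
    have : (fun j : {n : ℕ // 1 ≤ n} => ‖f j / ((lam i.1 - lam j.1 - μ : ℝ) : ℂ)‖)
        = fun j => ‖f j‖ * A i j := funext (hnorm i)
    rw [this]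
    exact hsum1 i
  -- pointwise bound on the rows of the image
  have hg2 : ∀ i : {n : ℕ // 1 ≤ n},
      ‖∑' j : {n : ℕ // 1 ≤ n}, f j / ((lam i.1 - lam j.1 - μ : ℝ) : ℂ)‖ ^ 2
        ≤ R * ∑' j : {n : ℕ // 1 ≤ n}, A i j * ‖f j‖ ^ 2 := by
    intro i
    have hgnorm : ‖∑' j : {n : ℕ // 1 ≤ n}, f j / ((lam i.1 - lam j.1 - μ : ℝ) : ℂ)‖
        ≤ ∑' j : {n : ℕ // 1 ≤ n}, A i j * ‖f j‖ := by
      have h := norm_tsum_le_tsum_norm (hsum1' i)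
      have he : (fun j : {n : ℕ // 1 ≤ n} => ‖f j / ((lam i.1 - lam j.1 - μ : ℝ) : ℂ)‖)
          = fun j => A i j * ‖f j‖ := by
        funext j; rw [hnorm i j, mul_comm]
      rwa [he] at h
    have hsab : Summable (fun j : {n : ℕ // 1 ≤ n} => A i j * ‖f j‖) := by
      have : (fun j : {n : ℕ // 1 ≤ n} => A i j * ‖f j‖)
          = fun j => ‖f j‖ * A i j := by funext j; ring
      rw [this]; exact hsum1 i
    have hcs := cs_tsum (fun j => A i j) (fun j => ‖f j‖) (hA0 i) (fun j => norm_nonneg _)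
      (hrow i).1 (hsum2 i) hsab
    have h0 : 0 ≤ ∑' j : {n : ℕ // 1 ≤ n}, A i j * ‖f j‖ :=
      tsum_nonneg fun j => mul_nonneg (hA0 i j) (norm_nonneg _)
    have hh0 : 0 ≤ ∑' j : {n : ℕ // 1 ≤ n}, A i j * ‖f j‖ ^ 2 :=
      tsum_nonneg fun j => mul_nonneg (hA0 i j) (sq_nonneg _)
    calc ‖∑' j : {n : ℕ // 1 ≤ n}, f j / ((lam i.1 - lam j.1 - μ : ℝ) : ℂ)‖ ^ 2
        ≤ (∑' j : {n : ℕ // 1 ≤ n}, A i j * ‖f j‖) ^ 2 :=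
          pow_le_pow_left₀ (norm_nonneg _) hgnorm 2
      _ ≤ (∑' j : {n : ℕ // 1 ≤ n}, A i j) * ∑' j : {n : ℕ // 1 ≤ n}, A i j * ‖f j‖ ^ 2 := hcs
      _ ≤ R * ∑' j : {n : ℕ // 1 ≤ n}, A i j * ‖f j‖ ^ 2 :=
          mul_le_mul_of_nonneg_right (hrow i).2 hh0
  -- summability of the double family
  have hw : Summable (fun p : {n : ℕ // 1 ≤ n} × {n : ℕ // 1 ≤ n} =>
      A p.2 p.1 * ‖f p.1‖ ^ 2) := by
    refine (summable_prod_of_nonneg (fun p => by positivity)).mpr ⟨?_, ?_⟩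
    · intro j; exact ((hcol j).1).mul_right (‖f j‖ ^ 2)
    · have heq : (fun j : {n : ℕ // 1 ≤ n} =>
          ∑' i : {n : ℕ // 1 ≤ n}, A i j * ‖f j‖ ^ 2)
          = fun j => (∑' i : {n : ℕ // 1 ≤ n}, A i j) * ‖f j‖ ^ 2 := by
        funext j; exact tsum_mul_right
      rw [heq]
      refine Summable.of_nonneg_of_le (fun j => ?_) (fun j => ?_) (hf2.mul_left R)
      · exact mul_nonneg (tsum_nonneg fun i => hA0 i j) (sq_nonneg _)
      · exact mul_le_mul_of_nonneg_right (hcol j).2 (sq_nonneg _)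
  have hv : Summable (fun p : {n : ℕ // 1 ≤ n} × {n : ℕ // 1 ≤ n} =>
      A p.1 p.2 * ‖f p.2‖ ^ 2) :=
    (Equiv.prodComm _ _).summable_iff.mpr hw
  have hh : Summable (fun i : {n : ℕ // 1 ≤ n} =>
      ∑' j : {n : ℕ // 1 ≤ n}, A i j * ‖f j‖ ^ 2) :=
    ((summable_prod_of_nonneg (fun p => by positivity)).mp hv).2
  have hhsum : ∑' i : {n : ℕ // 1 ≤ n}, ∑' j : {n : ℕ // 1 ≤ n}, A i j * ‖f j‖ ^ 2
      ≤ R * ∑' j : {n : ℕ // 1 ≤ n}, ‖f j‖ ^ 2 := by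
    have e1 : ∑' p : {n : ℕ // 1 ≤ n} × {n : ℕ // 1 ≤ n}, A p.1 p.2 * ‖f p.2‖ ^ 2
        = ∑' i : {n : ℕ // 1 ≤ n}, ∑' j : {n : ℕ // 1 ≤ n}, A i j * ‖f j‖ ^ 2 :=
      Summable.tsum_prod' hv fun i => hsum2 i
    have e2 : ∑' p : {n : ℕ // 1 ≤ n} × {n : ℕ // 1 ≤ n}, A p.2 p.1 * ‖f p.1‖ ^ 2
        = ∑' j : {n : ℕ // 1 ≤ n}, ∑' i : {n : ℕ // 1 ≤ n}, A i j * ‖f j‖ ^ 2 :=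
      Summable.tsum_prod' hw fun j => ((hcol j).1).mul_right (‖f j‖ ^ 2)
    have e3 : ∑' p : {n : ℕ // 1 ≤ n} × {n : ℕ // 1 ≤ n}, A p.1 p.2 * ‖f p.2‖ ^ 2
        = ∑' p : {n : ℕ // 1 ≤ n} × {n : ℕ // 1 ≤ n}, A p.2 p.1 * ‖f p.1‖ ^ 2 :=
      ((Equiv.prodComm _ _).tsum_eq _).symm
    rw [← e1, e3, e2]
    have step : ∀ j : {n : ℕ // 1 ≤ n},
        ∑' i : {n : ℕ // 1 ≤ n}, A i j * ‖f j‖ ^ 2 ≤ R * ‖f j‖ ^ 2 := by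
      intro j
      rw [tsum_mul_right]
      exact mul_le_mul_of_nonneg_right (hcol j).2 (sq_nonneg _)
    calc ∑' j : {n : ℕ // 1 ≤ n}, ∑' i : {n : ℕ // 1 ≤ n}, A i j * ‖f j‖ ^ 2
        ≤ ∑' j : {n : ℕ // 1 ≤ n}, R * ‖f j‖ ^ 2 := by
          refine Summable.tsum_le_tsum step ?_ (hf2.mul_left R)
          exact ((summable_prod_of_nonneg (fun p => by positivity)).mp hw).2
      _ = R * ∑' j : {n : ℕ // 1 ≤ n}, ‖f j‖ ^ 2 := tsum_mul_left
  have hsg : Summable (fun i : {n : ℕ // 1 ≤ n} =>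
      ‖∑' j : {n : ℕ // 1 ≤ n}, f j / ((lam i.1 - lam j.1 - μ : ℝ) : ℂ)‖ ^ 2) :=
    Summable.of_nonneg_of_le (fun i => sq_nonneg _) hg2 (hh.mul_left R)
  refine ⟨hsum1', hsg, ?_⟩
  have hts : ∑' i : {n : ℕ // 1 ≤ n},
      ‖∑' j : {n : ℕ // 1 ≤ n}, f j / ((lam i.1 - lam j.1 - μ : ℝ) : ℂ)‖ ^ 2
      ≤ R ^ 2 * ∑' j : {n : ℕ // 1 ≤ n}, ‖f j‖ ^ 2 := by
    calc ∑' i : {n : ℕ // 1 ≤ n},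
        ‖∑' j : {n : ℕ // 1 ≤ n}, f j / ((lam i.1 - lam j.1 - μ : ℝ) : ℂ)‖ ^ 2
        ≤ ∑' i : {n : ℕ // 1 ≤ n}, R * ∑' j : {n : ℕ // 1 ≤ n}, A i j * ‖f j‖ ^ 2 :=
          Summable.tsum_le_tsum hg2 hsg (hh.mul_left R)
      _ = R * ∑' i : {n : ℕ // 1 ≤ n}, ∑' j : {n : ℕ // 1 ≤ n}, A i j * ‖f j‖ ^ 2 :=
          tsum_mul_left
      _ ≤ R * (R * ∑' j : {n : ℕ // 1 ≤ n}, ‖f j‖ ^ 2) :=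
          mul_le_mul_of_nonneg_left hhsum hR0
      _ = R ^ 2 * ∑' j : {n : ℕ // 1 ≤ n}, ‖f j‖ ^ 2 := by ring
  have hsqrt : Real.sqrt (∑' i : {n : ℕ // 1 ≤ n},
      ‖∑' j : {n : ℕ // 1 ≤ n}, f j / ((lam i.1 - lam j.1 - μ : ℝ) : ℂ)‖ ^ 2)
      ≤ R * Real.sqrt (∑' j : {n : ℕ // 1 ≤ n}, ‖f j‖ ^ 2) := by
    have h1 := Real.sqrt_le_sqrt hts
    rwa [Real.sqrt_mul (sq_nonneg R), Real.sqrt_sq hR0] at h1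
  have hRC : R ≤ (2 + 4 / c * ∑' k : ℕ, 1 / (k : ℝ) ^ α) * (1 + 1 / d) := by
    have hX0 : 0 ≤ 4 / c * ∑' k : ℕ, 1 / (k : ℝ) ^ α := by positivity
    have hd1 : 0 ≤ 1 / d := by positivity
    rw [hR, div_eq_mul_one_div 2 d, div_eq_mul_one_div 1 d]
    nlinarith [mul_nonneg hX0 hd1]
  calc Real.sqrt (∑' i : {n : ℕ // 1 ≤ n},
      ‖∑' j : {n : ℕ // 1 ≤ n}, f j / ((lam i.1 - lam j.1 - μ : ℝ) : ℂ)‖ ^ 2)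
      ≤ R * Real.sqrt (∑' j : {n : ℕ // 1 ≤ n}, ‖f j‖ ^ 2) := hsqrt
    _ ≤ (2 + 4 / c * ∑' k : ℕ, 1 / (k : ℝ) ^ α) * (1 + 1 / d) *
        Real.sqrt (∑' j : {n : ℕ // 1 ≤ n}, ‖f j‖ ^ 2) :=
      mul_le_mul_of_nonneg_right hRC (Real.sqrt_nonneg _)
end

section
/- Let α > 1 and let (λ_n)_{n≥1} be a strictly decreasing sequence of negative real numbers with λ_n → −∞ satisfying, for some c > 0, |λ_k − λ_n| ≥ c · k^{α−1} · |k − n| for all k, n ≥ 1. Let λ > 0 with λ ∉ 𝒩 := {λ_i − λ_j : i, j ≥ 1}. Then for every n ≥ 1, the series ∑_{j≥1} [λ/(λ_j − λ_n − λ)] · ∏_{m≥1, m≠j} (1 − λ/(λ_j − λ_m)) converges absolutely and equals −1; equivalently, J_n(λ) := −∑_{j≥1} [λ/(λ_j − λ_n − λ)] · ∏_{m≥1, m≠j} (1 − λ/(λ_j − λ_m)) satisfies J_n(λ) = 1. -/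
/-- `∏_{m ≥ 1, m ≠ j} (1 - λ/(λ_j - λ_m))`. -/
noncomputable def prodMinus (lam : ℕ → ℝ) (μ : ℝ) (j : ℕ) : ℝ :=
  ∏' m : {m : ℕ // 1 ≤ m ∧ m ≠ j}, (1 - μ / (lam j - lam m.1))

open Finset


/-- `|∏ (1 - bᵢ) - 1| ≤ ∏ (1 + |bᵢ|) - 1`. -/
lemma st12_prod_sub_one_abs {ι : Type*} (b : ι → ℝ) (t : Finset ι) :
    |∏ i ∈ t, (1 - b i) - 1| ≤ ∏ i ∈ t, (1 + |b i|) - 1 := by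
  classical
  induction t using Finset.cons_induction with
  | empty => simp
  | cons a s ha ih =>
    rw [Finset.prod_cons, Finset.prod_cons]
    set P := ∏ i ∈ s, (1 - b i) with hP
    set Q := ∏ i ∈ s, (1 + |b i|) with hQ
    have hQ1 : (1:ℝ) ≤ Q := by
      have := Finset.prod_le_prod (s := s) (f := fun _ => (1:ℝ)) (g := fun i => 1 + |b i|)
        (fun i _ => zero_le_one) (fun i _ => by simpa using abs_nonneg (b i))
      simpa using this
    have key : |(1 - b a) * P - 1| ≤ |P - 1| * |1 - b a| + |b a| := by
      have : (1 - b a) * P - 1 = (P - 1) * (1 - b a) + (-(b a)) := by ring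
      rw [this]
      calc |(P - 1) * (1 - b a) + (-(b a))| ≤ |(P - 1) * (1 - b a)| + |(-(b a))| :=
            abs_add_le _ _
        _ = |P - 1| * |1 - b a| + |b a| := by rw [abs_mul, abs_neg]
    have h1 : |1 - b a| ≤ 1 + |b a| := (abs_sub _ _).trans (by simp)
    nlinarith [abs_nonneg (P - 1), abs_nonneg (b a), abs_nonneg (1 - b a)]

lemma st12_prod_one_add_le_exp {ι : Type*} (b : ι → ℝ) (t : Finset ι) :
    ∏ i ∈ t, (1 + |b i|) ≤ Real.exp (∑ i ∈ t, |b i|) := by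
  rw [Real.exp_sum]
  exact Finset.prod_le_prod (fun i _ => by positivity)
    (fun i _ => by simpa [add_comm] using Real.add_one_le_exp |b i|)

lemma st12_abs_prod_le_exp {ι : Type*} (b : ι → ℝ) (t : Finset ι) :
    |∏ i ∈ t, (1 - b i)| ≤ Real.exp (∑ i ∈ t, |b i|) := by
  rw [Finset.abs_prod]
  refine (Finset.prod_le_prod (fun i _ => abs_nonneg _) (fun i _ => ?_)).trans
    (st12_prod_one_add_le_exp b t)
  exact (abs_sub _ _).trans (by simp)

lemma st12_prod_sub_one_le_exp {ι : Type*} (b : ι → ℝ) (t : Finset ι) :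
    |∏ i ∈ t, (1 - b i) - 1| ≤ Real.exp (∑ i ∈ t, |b i|) - 1 :=
  (st12_prod_sub_one_abs b t).trans (by linarith [st12_prod_one_add_le_exp b t])

lemma st12_multipliable {ι : Type*} {b : ι → ℝ} (hb : Summable fun i => |b i|) :
    Multipliable fun i => 1 - b i := by
  classical
  set T := ∑' i, |b i| with hT
  have hsum_le : ∀ u : Finset ι, ∑ i ∈ u, |b i| ≤ T :=
    fun u => Summable.sum_le_tsum u (fun _ _ => abs_nonneg _) hb
  set K := Real.exp T with hK
  have hKpos : 0 < K := Real.exp_pos _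
  have hc : CauchySeq (fun s : Finset ι => ∏ i ∈ s, (1 - b i)) := by
    rw [Metric.cauchySeq_iff]
    intro ε hε
    set δ := Real.log (1 + ε / (4 * K)) with hδ
    have h1 : (0:ℝ) < 1 + ε / (4 * K) := by positivity
    have hδpos : 0 < δ := Real.log_pos (by nlinarith [div_pos hε (by positivity : (0:ℝ) < 4 * K)])
    have hexpδ : Real.exp δ - 1 = ε / (4 * K) := by rw [Real.exp_log h1]; ring
    obtain ⟨s₀, hs₀⟩ := summable_iff_vanishing.mp hb (Metric.ball 0 δ)
      (Metric.ball_mem_nhds 0 hδpos)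
    have core : ∀ u : Finset ι, s₀ ≤ u →
        |∏ i ∈ u, (1 - b i) - ∏ i ∈ s₀, (1 - b i)| ≤ ε / 4 := by
      intro u hu
      have hsub : s₀ ⊆ u := hu
      have hprod : (∏ i ∈ u \ s₀, (1 - b i)) * ∏ i ∈ s₀, (1 - b i) = ∏ i ∈ u, (1 - b i) :=
        Finset.prod_sdiff hsub
      have hdisj : Disjoint (u \ s₀) s₀ := Finset.sdiff_disjoint
      have hsmall : ∑ i ∈ u \ s₀, |b i| < δ := by
        have := hs₀ _ hdisj
        rw [Metric.mem_ball, Real.dist_eq, sub_zero] at this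
        exact (le_abs_self _).trans_lt this
      have h2 : |∏ i ∈ u \ s₀, (1 - b i) - 1| ≤ ε / (4 * K) := by
        refine (st12_prod_sub_one_le_exp b _).trans ?_
        rw [← hexpδ]
        have := Real.exp_le_exp.mpr hsmall.le
        linarith
      have h3 : |∏ i ∈ s₀, (1 - b i)| ≤ K :=
        (st12_abs_prod_le_exp b _).trans (Real.exp_le_exp.mpr (hsum_le _))
      calc |∏ i ∈ u, (1 - b i) - ∏ i ∈ s₀, (1 - b i)|
          = |∏ i ∈ s₀, (1 - b i)| * |∏ i ∈ u \ s₀, (1 - b i) - 1| := by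
            rw [← abs_mul]; congr 1; rw [← hprod]; ring
        _ ≤ K * (ε / (4 * K)) := mul_le_mul h3 h2 (abs_nonneg _) hKpos.le
        _ = ε / 4 := by field_simp
    refine ⟨s₀, fun u hu v hv => ?_⟩
    have := core u hu
    have := core v hv
    rw [Real.dist_eq]
    have h4 : |∏ i ∈ u, (1 - b i) - ∏ i ∈ v, (1 - b i)| ≤ ε / 4 + ε / 4 := by
      calc |∏ i ∈ u, (1 - b i) - ∏ i ∈ v, (1 - b i)|
          ≤ |∏ i ∈ u, (1 - b i) - ∏ i ∈ s₀, (1 - b i)| +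
            |∏ i ∈ s₀, (1 - b i) - ∏ i ∈ v, (1 - b i)| := by
            have := abs_sub_le (∏ i ∈ u, (1 - b i)) (∏ i ∈ s₀, (1 - b i))
              (∏ i ∈ v, (1 - b i))
            linarith
        _ ≤ ε / 4 + ε / 4 := by
            rw [abs_sub_comm (∏ i ∈ s₀, (1 - b i))]
            exact add_le_add (core u hu) (core v hv)
    linarith
  obtain ⟨P, hP⟩ := cauchySeq_tendsto_of_complete hc
  exact ⟨P, hP⟩

open Polynomial in
lemma st12_finident (lam : ℕ → ℝ) (μ : ℝ) (N n : ℕ)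
    (hn : n ∈ Finset.Icc 1 N)
    (hinj : ∀ i ∈ Finset.Icc 1 N, ∀ j ∈ Finset.Icc 1 N, lam i = lam j → i = j)
    (hner : ∀ j ∈ Finset.Icc 1 N, lam j ≠ lam n + μ) :
    ∑ j ∈ Finset.Icc 1 N, μ / (lam j - lam n - μ) *
      ∏ m ∈ (Finset.Icc 1 N).erase j, (1 - μ / (lam j - lam m)) = -1 := by
  classical
  set I := Finset.Icc 1 N with hI
  have h0 : (0:ℕ) ∉ I := by simp [hI]
  set s : Finset ℕ := insert 0 I with hs
  set v : ℕ → ℝ := fun i => if i = 0 then lam n + μ else lam i with hv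
  have hv0 : v 0 = lam n + μ := by simp [hv]
  have hvj : ∀ j ∈ I, v j = lam j := by
    intro j hj
    have : j ≠ 0 := by rintro rfl; exact h0 hj
    simp [hv, this]
  have hvs : Set.InjOn v s := by
    intro i hi j hj hij
    simp only [hs, Finset.coe_insert, Set.mem_insert_iff, Finset.mem_coe] at hi hj
    rcases hi with rfl | hi <;> rcases hj with rfl | hj
    · rfl
    · rw [hv0, hvj j hj] at hij; exact absurd hij.symm (hner j hj)
    · rw [hv0, hvj i hi] at hij; exact absurd hij (hner i hi)
    · rw [hvj i hi, hvj j hj] at hij; exact hinj i hi j hj hij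
  set Q : ℝ[X] := ∏ m ∈ I, (X - C (lam m + μ)) with hQ
  have hQm : Q.Monic := monic_prod_of_monic _ _ fun m _ => monic_X_sub_C _
  have hIcard : I.card = N := by simp [hI]
  have hQd : Q.natDegree = N := by
    rw [hQ, natDegree_prod _ _ fun m _ => X_sub_C_ne_zero _]
    simp only [natDegree_X_sub_C]
    simp [hIcard]
  have hscard : s.card = N + 1 := by rw [hs, Finset.card_insert_of_notMem h0, hIcard]
  have hdeg : Q.degree < s.card := by
    rw [degree_eq_natDegree hQm.ne_zero, hQd, hscard]
    exact_mod_cast Nat.lt_succ_self N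
  have key := Lagrange.eq_interpolate hvs hdeg (f := Q)
  -- take coefficient N on both sides
  have hco := congrArg (fun p : ℝ[X] => p.coeff N) key
  simp only [Lagrange.interpolate_apply, finset_sum_coeff, coeff_C_mul] at hco
  have hbasis : ∀ i ∈ s, (Lagrange.basis s v i).coeff N = Lagrange.nodalWeight s v i := by
    intro i hi
    have hbe : Lagrange.basis s v i
        = C (Lagrange.nodalWeight s v i) * Lagrange.nodal (s.erase i) v := by
      rw [Lagrange.basis, Lagrange.nodalWeight, Lagrange.nodal]
      simp only [Lagrange.basisDivisor]
      rw [Finset.prod_mul_distrib, map_prod]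
    have hnd : (Lagrange.nodal (s.erase i) v).natDegree = N := by
      rw [Lagrange.natDegree_nodal, Finset.card_erase_of_mem hi, hscard]
      omega
    have hmon : (Lagrange.nodal (s.erase i) v).Monic := Lagrange.nodal_monic
    rw [hbe, coeff_C_mul, ← hnd, hmon.coeff_natDegree, mul_one]
  rw [Finset.sum_congr rfl (fun i hi => by rw [hbasis i hi])] at hco
  have hQco : Q.coeff N = 1 := by
    have := hQm.coeff_natDegree
    rwa [hQd] at this
  rw [hQco] at hco
  -- hco : ∑ i ∈ s, Q.eval (v i) * nodalWeight s v i = 1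
  rw [hs, Finset.sum_insert h0] at hco
  have hz : Q.eval (v 0) * Lagrange.nodalWeight (insert 0 I) v 0 = 0 := by
    have : Q.eval (v 0) = 0 := by
      rw [hv0, hQ, eval_prod]
      exact Finset.prod_eq_zero hn (by simp)
    rw [this, zero_mul]
  rw [hz, zero_add] at hco
  -- now rewrite each term
  have hterm : ∀ j ∈ I, Q.eval (v j) * Lagrange.nodalWeight (insert 0 I) v j
      = -(μ / (lam j - lam n - μ) * ∏ m ∈ I.erase j, (1 - μ / (lam j - lam m))) := by
    intro j hj
    have hj0 : j ≠ 0 := by rintro rfl; exact h0 hj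
    have h0e : (0:ℕ) ∉ I.erase j := fun h => h0 (Finset.mem_of_mem_erase h)
    have herase : (insert 0 I).erase j = insert 0 (I.erase j) :=
      Finset.erase_insert_of_ne (Ne.symm hj0)
    have hednz : lam j - lam n - μ ≠ 0 := by
      have := hner j hj
      intro h; apply this; linarith [sub_eq_zero.mp (by linarith : lam j - (lam n + μ) = 0)]
    have hweight : Lagrange.nodalWeight (insert 0 I) v j
        = (lam j - lam n - μ)⁻¹ * ∏ m ∈ I.erase j, (lam j - lam m)⁻¹ := by
      rw [Lagrange.nodalWeight, herase, Finset.prod_insert h0e]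
      congr 1
      · rw [hvj j hj, hv0]; ring_nf
      · refine Finset.prod_congr rfl fun m hm => ?_
        rw [hvj j hj, hvj m (Finset.mem_of_mem_erase hm)]
    have heval : Q.eval (v j) = (-μ) * ∏ m ∈ I.erase j, (lam j - lam m - μ) := by
      rw [hvj j hj, hQ, eval_prod]
      simp only [eval_sub, eval_X, eval_C]
      rw [← Finset.mul_prod_erase I _ hj]
      congr 1
      · ring
      · exact Finset.prod_congr rfl fun m _ => by ring
    rw [heval, hweight]
    have hprod : ∏ m ∈ I.erase j, (1 - μ / (lam j - lam m))
        = (∏ m ∈ I.erase j, (lam j - lam m - μ)) * ∏ m ∈ I.erase j, (lam j - lam m)⁻¹ := by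
      rw [← Finset.prod_mul_distrib]
      refine Finset.prod_congr rfl fun m hm => ?_
      have hmj : m ≠ j := Finset.ne_of_mem_erase hm
      have hlmj : lam j - lam m ≠ 0 := by
        intro h
        exact hmj (hinj m (Finset.mem_of_mem_erase hm) j hj (sub_eq_zero.mp h).symm)
      field_simp
    rw [hprod]
    field_simp
  rw [Finset.sum_congr rfl hterm, Finset.sum_neg_distrib] at hco
  linarith


open Filter Topology

/-- The series `∑_{j ≥ 1} [λ/(λ_j - λ_n - λ)] ∏_{m ≠ j}
(1 - λ/(λ_j - λ_m))` converges absolutely and equals `-1`; equivalently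
`J_n(λ) = 1` for every `n ≥ 1`. -/
theorem statement12 (α c : ℝ) (hα : 1 < α) (hc : 0 < c) (lam : ℕ → ℝ)
    (hdec : ∀ n, 1 ≤ n → lam (n + 1) < lam n)
    (hneg : ∀ n, 1 ≤ n → lam n < 0)
    (htend : Filter.Tendsto lam Filter.atTop Filter.atBot)
    (hgap : ∀ k n : ℕ, 1 ≤ k → 1 ≤ n →
      c * (k : ℝ) ^ (α - 1) * |(k : ℝ) - (n : ℝ)| ≤ |lam k - lam n|)
    (μ : ℝ) (hμ : 0 < μ)
    (hres : ∀ i j, 1 ≤ i → 1 ≤ j → μ ≠ lam i - lam j) :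
    ∀ n : ℕ, 1 ≤ n →
      Summable (fun j : {j : ℕ // 1 ≤ j} =>
        |μ / (lam j.1 - lam n - μ) * prodMinus lam μ j.1|) ∧
      ∑' j : {j : ℕ // 1 ≤ j}, μ / (lam j.1 - lam n - μ) * prodMinus lam μ j.1
        = -1 := by
  classical
  intro n hn
  have hα0 : (0:ℝ) ≤ α - 1 := by linarith
  -- strict antitone beyond 1
  have hanti : ∀ i j : ℕ, 1 ≤ i → i < j → lam j < lam i := by
    intro i j hi hij
    induction j, hij using Nat.le_induction with
    | base => exact hdec i hi
    | succ j hj ih => exact lt_trans (hdec j (le_trans hi (Nat.le_of_succ_le hj))) ih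
  -- improved gap
  have hgap' : ∀ j m : ℕ, 1 ≤ j → 1 ≤ m → j ≠ m →
      c * |(j:ℝ) - m| ^ α ≤ |lam j - lam m| := by
    have main : ∀ k m : ℕ, 1 ≤ m → m < k → c * |(k:ℝ) - m| ^ α ≤ |lam k - lam m| := by
      intro k m hm hmk
      refine le_trans ?_ (hgap k m (le_trans hm hmk.le) hm)
      have hmR : (m:ℝ) < k := by exact_mod_cast hmk
      have habs : (0:ℝ) < |(k:ℝ) - m| := by
        rw [abs_pos, sub_ne_zero]
        exact ne_of_gt hmR
      have hle : |(k:ℝ) - m| ≤ (k:ℝ) := by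
        rw [abs_of_pos (by linarith)]
        have : (0:ℝ) ≤ m := Nat.cast_nonneg m
        linarith
      have h1 : |(k:ℝ) - m| ^ α = |(k:ℝ) - m| ^ (α - 1) * |(k:ℝ) - m| := by
        rw [← Real.rpow_add_one habs.ne']
        ring_nf
      have h2 : |(k:ℝ) - m| ^ (α - 1) ≤ (k:ℝ) ^ (α - 1) :=
        Real.rpow_le_rpow (abs_nonneg _) hle hα0
      rw [h1, ← mul_assoc]
      have := mul_le_mul_of_nonneg_right (mul_le_mul_of_nonneg_left h2 hc.le)
        (abs_nonneg ((k:ℝ) - m))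
      linarith
    intro j m hj hm hne
    rcases lt_or_gt_of_ne hne with h | h
    · rw [abs_sub_comm (lam j), abs_sub_comm ((j:ℝ))]
      exact main m j hj h
    · exact main j m hm h
  -- injectivity
  have hlne : ∀ j m : ℕ, 1 ≤ j → 1 ≤ m → j ≠ m → lam j ≠ lam m := by
    intro j m hj hm hne h
    have h1 := hgap' j m hj hm hne
    rw [h, sub_self, abs_zero] at h1
    have habs : (0:ℝ) < |(j:ℝ) - m| := by
      rw [abs_pos, sub_ne_zero]
      exact fun hh => hne (by exact_mod_cast hh)
    nlinarith [Real.rpow_pos_of_pos habs α]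
  -- denominator nonzero
  have hden : ∀ j m : ℕ, 1 ≤ j → 1 ≤ m → lam j - lam m - μ ≠ 0 := by
    intro j m hj hm h
    exact hres j m hj hm (by linarith)
  -- the ζ-type constant
  have hEsum : Summable (fun k : ℤ => |(k:ℝ)| ^ (-α)) := Real.summable_abs_int_rpow hα
  set E := ∑' k : ℤ, |(k:ℝ)| ^ (-α) with hE
  set B := Real.exp (μ / c * E) with hB
  have hBpos : 0 < B := Real.exp_pos _
  -- uniform finset bound on ∑ |b j m|
  have hsumbd : ∀ j : ℕ, 1 ≤ j → ∀ F : Finset {m : ℕ // 1 ≤ m ∧ m ≠ j},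
      ∑ m ∈ F, |μ / (lam j - lam m.1)| ≤ μ / c * E := by
    intro j hj F
    have hpt : ∀ m : {m : ℕ // 1 ≤ m ∧ m ≠ j},
        |μ / (lam j - lam m.1)| ≤ μ / c * |(((m.1 : ℤ) - (j : ℤ) : ℤ) : ℝ)| ^ (-α) := by
      intro m
      obtain ⟨hm1, hmj⟩ := m.2
      have hne : j ≠ m.1 := fun h => hmj h.symm
      have hgapm := hgap' j m.1 hj hm1 hne
      have habs : (0:ℝ) < |(j:ℝ) - m.1| := by
        rw [abs_pos, sub_ne_zero]
        exact fun hh => hne (by exact_mod_cast hh)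
      have hpow : (0:ℝ) < |(j:ℝ) - m.1| ^ α := Real.rpow_pos_of_pos habs α
      have hdpos : (0:ℝ) < |lam j - lam m.1| := lt_of_lt_of_le (by positivity) hgapm
      have h1 : |μ / (lam j - lam m.1)| = μ / |lam j - lam m.1| := by
        rw [abs_div, abs_of_pos hμ]
      rw [h1]
      have h2 : μ / |lam j - lam m.1| ≤ μ / (c * |(j:ℝ) - m.1| ^ α) := by
        gcongr
      refine h2.trans_eq ?_
      have hcast : |(((m.1 : ℤ) - (j : ℤ) : ℤ) : ℝ)| = |(j:ℝ) - m.1| := by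
        push_cast
        rw [abs_sub_comm]
      rw [hcast, Real.rpow_neg (abs_nonneg _), ← div_div, div_eq_mul_inv (μ / c)]
    set e : {m : ℕ // 1 ≤ m ∧ m ≠ j} → ℤ := fun m => (m.1 : ℤ) - (j : ℤ) with he
    have hei : Set.InjOn e F := by
      intro x _ y _ hxy
      simp only [he] at hxy
      have : (x.1 : ℤ) = y.1 := by omega
      exact Subtype.ext (by exact_mod_cast this)
    calc ∑ m ∈ F, |μ / (lam j - lam m.1)|
        ≤ ∑ m ∈ F, μ / c * |((e m : ℤ) : ℝ)| ^ (-α) :=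
          Finset.sum_le_sum fun m _ => hpt m
      _ = ∑ k ∈ F.image e, μ / c * |((k : ℤ) : ℝ)| ^ (-α) := by
          rw [Finset.sum_image (fun x hx y hy h => hei hx hy h)]
      _ = μ / c * ∑ k ∈ F.image e, |((k : ℤ) : ℝ)| ^ (-α) := by
          rw [Finset.mul_sum]
      _ ≤ μ / c * E := by
          have := Summable.sum_le_tsum (F.image e)
            (fun k _ => Real.rpow_nonneg (abs_nonneg _) _) hEsum
          exact mul_le_mul_of_nonneg_left this (by positivity)
  -- summability of the b's, multipliability
  have hbsum : ∀ j : ℕ, 1 ≤ j →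
      Summable (fun m : {m : ℕ // 1 ≤ m ∧ m ≠ j} => |μ / (lam j - lam m.1)|) :=
    fun j hj => summable_of_sum_le (fun m => abs_nonneg _) (hsumbd j hj)
  have hhp : ∀ j : ℕ, 1 ≤ j →
      HasProd (fun m : {m : ℕ // 1 ≤ m ∧ m ≠ j} => 1 - μ / (lam j - lam m.1))
        (prodMinus lam μ j) :=
    fun j hj => (st12_multipliable (hbsum j hj)).hasProd
  -- bound on partial products and the full product
  have hPbd : ∀ j : ℕ, 1 ≤ j → ∀ F : Finset {m : ℕ // 1 ≤ m ∧ m ≠ j},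
      |∏ m ∈ F, (1 - μ / (lam j - lam m.1))| ≤ B := by
    intro j hj F
    refine (st12_abs_prod_le_exp _ F).trans ?_
    rw [hB]
    exact Real.exp_le_exp.mpr (hsumbd j hj F)
  have hPlim : ∀ j : ℕ, 1 ≤ j → |prodMinus lam μ j| ≤ B := by
    intro j hj
    exact le_of_tendsto' ((continuous_abs.tendsto _).comp (hhp j hj))
      (fun F => hPbd j hj F)
  -- finite/truncated products agree with products over erase
  have hPfin : ∀ j : ℕ, 1 ≤ j → ∀ N : ℕ,
      ∏ m ∈ (Finset.Icc 1 N).erase j, (1 - μ / (lam j - lam m))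
      = ∏ m ∈ (Finset.Icc 1 N).subtype (fun m => 1 ≤ m ∧ m ≠ j),
          (1 - μ / (lam j - lam m.1)) := by
    intro j hj N
    rw [Finset.prod_subtype_eq_prod_filter (fun m => 1 - μ / (lam j - lam m))]
    congr 1
    ext m
    simp only [Finset.mem_filter, Finset.mem_erase, Finset.mem_Icc]
    omega
  -- convergence of truncated products
  have hPtend : ∀ j : ℕ, 1 ≤ j →
      Tendsto (fun N => ∏ m ∈ (Finset.Icc 1 N).erase j, (1 - μ / (lam j - lam m)))
        atTop (𝓝 (prodMinus lam μ j)) := by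
    intro j hj
    have hmono : Monotone (fun N : ℕ =>
        (Finset.Icc 1 N).subtype (fun m => 1 ≤ m ∧ m ≠ j)) := by
      intro N M hNM x hx
      simp only [Finset.mem_subtype, Finset.mem_Icc] at hx ⊢
      omega
    have hcover : ∀ x : {m : ℕ // 1 ≤ m ∧ m ≠ j},
        ∃ N, x ∈ (Finset.Icc 1 N).subtype (fun m => 1 ≤ m ∧ m ≠ j) := by
      intro x
      exact ⟨x.1, by simp [Finset.mem_subtype, Finset.mem_Icc, x.2.1]⟩
    have hStend := tendsto_atTop_finset_of_monotone hmono hcover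
    have := (hhp j hj).comp hStend
    exact this.congr fun N => (hPfin j hj N).symm
  -- summability of coefficients a j
  have hasum : Summable (fun j : {j : ℕ // 1 ≤ j} => |μ / (lam j.1 - lam n - μ)|) := by
    have hFsum : Summable (fun j : ℕ => |μ / (lam j - lam n - μ)|) := by
      rw [← summable_nat_add_iff (n + 1)]
      have hbd : ∀ m : ℕ, |μ / (lam (m + (n + 1)) - lam n - μ)|
          ≤ μ / c * ((m:ℝ) + 1) ^ (-α) := by
        intro m
        set j := m + (n + 1) with hj
        have hj1 : 1 ≤ j := by omega
        have hlt : lam j < lam n := hanti n j hn (by omega)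
        have hd1 : lam j - lam n - μ < 0 := by linarith
        have hgapj := hgap' j n hj1 hn (by omega)
        have hcast : |(j:ℝ) - n| = (m:ℝ) + 1 := by
          have hid : (j:ℝ) - n = (m:ℝ) + 1 := by push_cast [hj]; ring
          rw [hid, abs_of_pos (by positivity)]
        rw [hcast] at hgapj
        have hge : c * ((m:ℝ) + 1) ^ α ≤ |lam j - lam n - μ| := by
          rw [abs_of_neg hd1]
          have : |lam j - lam n| = lam n - lam j := by
            rw [abs_of_neg (by linarith : lam j - lam n < 0)]; ring
          linarith [hgapj.trans_eq this]
        have h1 : |μ / (lam j - lam n - μ)| = μ / |lam j - lam n - μ| := by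
          rw [abs_div, abs_of_pos hμ]
        rw [h1]
        have hpow : (0:ℝ) < ((m:ℝ) + 1) ^ α := Real.rpow_pos_of_pos (by positivity) α
        have h2 : μ / |lam j - lam n - μ| ≤ μ / (c * ((m:ℝ) + 1) ^ α) := by
          gcongr
        refine h2.trans_eq ?_
        rw [Real.rpow_neg (by positivity), ← div_div, div_eq_mul_inv (μ / c)]
      refine Summable.of_nonneg_of_le (fun m => abs_nonneg _) hbd ?_
      have h3 : Summable (fun m : ℕ => ((m:ℝ)) ^ (-α)) :=
        Real.summable_nat_rpow.mpr (by linarith)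
      have h4 : Summable (fun m : ℕ => ((m:ℝ) + 1) ^ (-α)) := by
        have := (summable_nat_add_iff 1).mpr h3
        refine this.congr fun m => ?_
        push_cast
        ring_nf
      exact h4.mul_left _
    exact hFsum.subtype _
  -- the dominating function
  set bound : {j : ℕ // 1 ≤ j} → ℝ := fun j => |μ / (lam j.1 - lam n - μ)| * B with hbd
  have hboundsum : Summable bound := hasum.mul_right B
  -- truncated summands
  set f : ℕ → {j : ℕ // 1 ≤ j} → ℝ := fun N j =>
    if j.1 ≤ N then μ / (lam j.1 - lam n - μ) *
      ∏ m ∈ (Finset.Icc 1 N).erase j.1, (1 - μ / (lam j.1 - lam m)) else 0 with hf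
  set g : {j : ℕ // 1 ≤ j} → ℝ := fun j =>
    μ / (lam j.1 - lam n - μ) * prodMinus lam μ j.1 with hg
  have hgb : ∀ j, |g j| ≤ bound j := by
    intro j
    rw [hg, hbd, abs_mul]
    exact mul_le_mul_of_nonneg_left (hPlim j.1 j.2) (abs_nonneg _)
  have h_bound : ∀ N j, ‖f N j‖ ≤ bound j := by
    intro N j
    rw [Real.norm_eq_abs, hf]
    by_cases hN : j.1 ≤ N
    · simp only [if_pos hN]
      rw [abs_mul, hPfin j.1 j.2 N]
      exact mul_le_mul_of_nonneg_left (hPbd j.1 j.2 _) (abs_nonneg _)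
    · simp only [if_neg hN, abs_zero, hbd]
      positivity
  have hab : ∀ j, Tendsto (fun N => f N j) atTop (𝓝 (g j)) := by
    intro j
    have h1 := (hPtend j.1 j.2).const_mul (μ / (lam j.1 - lam n - μ))
    refine h1.congr' ?_
    filter_upwards [eventually_ge_atTop j.1] with N hN
    rw [hf]
    simp only [if_pos hN]
  have htt := tendsto_tsum_of_dominated_convergence hboundsum hab
    (Filter.Eventually.of_forall h_bound)
  -- the truncated sums are eventually -1
  have heval : ∀ N, n ≤ N → ∑' j, f N j = -1 := by
    intro N hN
    have h0 : ∀ j ∉ (Finset.Icc 1 N).subtype (fun j => 1 ≤ j), f N j = 0 := by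
      intro j hj
      rw [hf]
      have : ¬ (j.1 ≤ N) := by
        simp only [Finset.mem_subtype, Finset.mem_Icc] at hj
        have := j.2
        omega
      simp only [if_neg this]
    rw [tsum_eq_sum h0]
    have hstep : ∑ j ∈ (Finset.Icc 1 N).subtype (fun j => 1 ≤ j), f N j
        = ∑ j ∈ (Finset.Icc 1 N).subtype (fun j => 1 ≤ j),
            (fun j' : ℕ => μ / (lam j' - lam n - μ) *
              ∏ m ∈ (Finset.Icc 1 N).erase j', (1 - μ / (lam j' - lam m))) j.1 := by
      refine Finset.sum_congr rfl fun j hj => ?_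
      simp only [Finset.mem_subtype, Finset.mem_Icc] at hj
      rw [hf]
      simp only [if_pos hj.2]
    rw [hstep, Finset.sum_subtype_eq_sum_filter (fun j' : ℕ => μ / (lam j' - lam n - μ) *
      ∏ m ∈ (Finset.Icc 1 N).erase j', (1 - μ / (lam j' - lam m)))]
    have hfil : (Finset.Icc 1 N).filter (fun j => 1 ≤ j) = Finset.Icc 1 N := by
      refine Finset.filter_true_of_mem fun j hj => ?_
      simp only [Finset.mem_Icc] at hj
      exact hj.1
    rw [hfil]
    exact st12_finident lam μ N n (by simp [Finset.mem_Icc]; omega)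
      (fun i hi j hj hij => by
        by_contra hne
        exact hlne i j (Finset.mem_Icc.mp hi).1 (Finset.mem_Icc.mp hj).1 hne hij)
      (fun j hj h => hres j n (Finset.mem_Icc.mp hj).1 hn (by linarith))
  have hconst : Tendsto (fun N => ∑' j, f N j) atTop (𝓝 (-1)) := by
    refine tendsto_const_nhds.congr' ?_
    filter_upwards [eventually_ge_atTop n] with N hN
    exact (heval N hN).symm
  have hfinal : ∑' j, g j = -1 := tendsto_nhds_unique htt hconst
  exact ⟨Summable.of_nonneg_of_le (fun j => abs_nonneg _) hgb hboundsum, hfinal⟩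
end

section
/- Let α > 1, c > 0, and let (λ_m)_{m≥1} be real numbers with |λ_m| ≥ c·m^α for all m ≥ 1. Then there exists a constant C > 0, depending only on c and α, such that for every λ > 1 the infinite product ∏_{m≥1} (1 + λ/|λ_m|) converges and satisfies ∏_{m≥1} (1 + λ/|λ_m|) ≤ C·e^{C·λ^{1/α}}. -/
open Real Finset
lemma aux_sqrt_sum (n : ℕ) :
    ∑ m ∈ Finset.range n, 1 / Real.sqrt (m + 1) ≤ 2 * Real.sqrt n := by
  induction n with
  | zero => simp
  | succ n ih =>
    rw [Finset.sum_range_succ]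
    have hb : (0:ℝ) < Real.sqrt (n + 1) := Real.sqrt_pos.2 (by positivity)
    have ha : (0:ℝ) ≤ Real.sqrt n := Real.sqrt_nonneg _
    have h1 : (Real.sqrt n) ^ 2 = (n:ℝ) := Real.sq_sqrt (by positivity)
    have h2 : (Real.sqrt (n+1)) ^ 2 = (n:ℝ) + 1 := Real.sq_sqrt (by positivity)
    have key : 2 * Real.sqrt n + 1 / Real.sqrt (n + 1) ≤ 2 * Real.sqrt (n+1) := by
      have hinv : 1 / Real.sqrt (n+1) * Real.sqrt (n+1) = 1 := by
        field_simp
      nlinarith [sq_nonneg (Real.sqrt (n+1) - Real.sqrt n),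
        mul_pos hb hb, (one_div_pos.2 hb)]
    calc ∑ m ∈ Finset.range n, 1 / Real.sqrt (m + 1) + 1 / Real.sqrt (n + 1)
        ≤ 2 * Real.sqrt n + 1 / Real.sqrt (n + 1) := by linarith
      _ ≤ 2 * Real.sqrt (n+1) := key
      _ = 2 * Real.sqrt ((n:ℝ)+1) := by norm_num
      _ = 2 * Real.sqrt ((n+1 : ℕ)) := by push_cast; ring_nf

lemma aux_log_le_sqrt {y : ℝ} (hy : 0 < y) : Real.log y ≤ 2 * Real.sqrt y := by
  have h1 : Real.log (Real.sqrt y) ≤ Real.sqrt y - 1 :=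
    Real.log_le_sub_one_of_pos (Real.sqrt_pos.2 hy)
  have h2 : Real.log (Real.sqrt y) = Real.log y / 2 := Real.log_sqrt hy.le
  linarith

lemma aux_tail_term {α : ℝ} (hα : 1 < α) {x : ℝ} (hx : 1 ≤ x) :
    (α - 1) * (x + 1) ^ (-α) ≤ x ^ (1 - α) - (x + 1) ^ (1 - α) := by
  have hx0 : (0:ℝ) < x := lt_of_lt_of_le one_pos hx
  have hx1 : (0:ℝ) < x + 1 := by linarith
  set u : ℝ := 1 / (x + 1) with hu
  set t : ℝ := x / (x + 1) with ht
  have hu0 : 0 < u := by positivity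
  have ht0 : 0 < t := by positivity
  have htu : t = 1 - u := by rw [ht, hu, eq_sub_iff_add_eq, ← add_div, div_self hx1.ne']
  have hα1 : (0:ℝ) < α - 1 := by linarith
  -- key : (1 + (α-1)*u) * t^(α-1) ≤ 1
  have ht_exp : t ≤ Real.exp (-u) := by
    rw [htu]; linarith [Real.add_one_le_exp (-u)]
  have h1 : t ^ (α - 1) ≤ Real.exp (-u) ^ (α - 1) :=
    Real.rpow_le_rpow ht0.le ht_exp (by linarith)
  have h2 : Real.exp (-u) ^ (α - 1) = Real.exp (-(u * (α - 1))) := by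
    rw [← Real.exp_mul]; ring_nf
  have h3 : 1 + (α - 1) * u ≤ Real.exp ((α - 1) * u) := by
    linarith [Real.add_one_le_exp ((α - 1) * u)]
  have key : (1 + (α - 1) * u) * t ^ (α - 1) ≤ 1 := by
    calc (1 + (α - 1) * u) * t ^ (α - 1)
        ≤ Real.exp ((α - 1) * u) * Real.exp (-(u * (α - 1))) := by
          apply mul_le_mul h3 (h1.trans_eq h2) (Real.rpow_nonneg ht0.le _) (Real.exp_pos _).le
      _ = 1 := by rw [← Real.exp_add]; ring_nf; exact Real.exp_zero
  have htpow : (0:ℝ) < t ^ (α - 1) := Real.rpow_pos_of_pos ht0 _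
  have key2 : 1 + (α - 1) * u ≤ t ^ (1 - α) := by
    have : t ^ (1 - α) = (t ^ (α - 1))⁻¹ := by
      rw [← Real.rpow_neg ht0.le]; ring_nf
    rw [this]
    calc 1 + (α - 1) * u = (1 + (α - 1) * u) * t ^ (α - 1) * (t ^ (α - 1))⁻¹ := by
          field_simp
      _ ≤ 1 * (t ^ (α - 1))⁻¹ :=
          mul_le_mul_of_nonneg_right key (inv_nonneg.2 htpow.le)
      _ = (t ^ (α - 1))⁻¹ := one_mul _
  have hxsplit : x ^ (1 - α) = (x + 1) ^ (1 - α) * t ^ (1 - α) := by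
    rw [← Real.mul_rpow hx1.le ht0.le]
    congr 1
    rw [ht, mul_div_assoc', eq_div_iff hx1.ne', mul_comm]
  have hlast : (x + 1) ^ (-α) = (x + 1) ^ (1 - α) * u := by
    have : (-α) = (1 - α) - 1 := by ring
    rw [this, Real.rpow_sub hx1, Real.rpow_one, hu]
    ring
  have hp1 : (0:ℝ) < (x + 1) ^ (1 - α) := Real.rpow_pos_of_pos hx1 _
  rw [hxsplit, hlast]
  nlinarith [mul_le_mul_of_nonneg_left key2 hp1.le]

lemma aux_telescope {α : ℝ} (hα : 1 < α) {N : ℕ} (hN : 1 ≤ N) (M : ℕ) :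
    ∑ j ∈ Finset.range M, ((N : ℝ) + 1 + j) ^ (-α)
      ≤ ((N : ℝ) ^ (1 - α) - ((N : ℝ) + M) ^ (1 - α)) / (α - 1) := by
  have hα1 : (0:ℝ) < α - 1 := by linarith
  induction M with
  | zero => simp
  | succ M ih =>
    rw [Finset.sum_range_succ]
    have hx : (1:ℝ) ≤ (N : ℝ) + M := by
      have : (1:ℝ) ≤ (N:ℝ) := by exact_mod_cast hN
      have : (0:ℝ) ≤ (M:ℝ) := by positivity
      linarith
    have hstep := aux_tail_term hα hx
    have hstep' : ((N : ℝ) + 1 + M) ^ (-α)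
        ≤ (((N:ℝ) + M) ^ (1 - α) - ((N:ℝ) + M + 1) ^ (1 - α)) / (α - 1) := by
      rw [le_div_iff₀ hα1]
      have he : (N : ℝ) + 1 + M = ((N:ℝ) + M) + 1 := by ring
      rw [he]
      linarith [hstep]
    have hcast : ((M + 1 : ℕ) : ℝ) = (M : ℝ) + 1 := by push_cast; ring
    rw [hcast]
    have he2 : (N:ℝ) + ((M:ℝ) + 1) = ((N:ℝ) + M) + 1 := by ring
    rw [he2]
    calc ∑ j ∈ Finset.range M, ((N : ℝ) + 1 + j) ^ (-α) + ((N : ℝ) + 1 + M) ^ (-α)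
        ≤ ((N : ℝ) ^ (1 - α) - ((N : ℝ) + M) ^ (1 - α)) / (α - 1)
          + (((N:ℝ) + M) ^ (1 - α) - ((N:ℝ) + M + 1) ^ (1 - α)) / (α - 1) := by
          exact add_le_add ih hstep'
      _ = ((N : ℝ) ^ (1 - α) - (((N:ℝ) + M) + 1) ^ (1 - α)) / (α - 1) := by ring

lemma aux_telescope' {α : ℝ} (hα : 1 < α) {N : ℕ} (hN : 1 ≤ N) (M : ℕ) :
    ∑ j ∈ Finset.range M, ((N : ℝ) + 1 + j) ^ (-α) ≤ (N : ℝ) ^ (1 - α) / (α - 1) := by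
  refine (aux_telescope hα hN M).trans ?_
  have h1 : (0:ℝ) ≤ ((N : ℝ) + M) ^ (1 - α) := Real.rpow_nonneg (by positivity) _
  have hα1 : (0:ℝ) < α - 1 := by linarith
  gcongr
  linarith


/-- If `|λ_m| ≥ c m^α` (α > 1), then there exists `C > 0`
depending only on `c` and `α` such that for every `λ > 1` the infinite product
`∏_{m ≥ 1} (1 + λ/|λ_m|)` converges and is bounded by `C e^{C λ^{1/α}}`. -/
theorem statement14 (α c : ℝ) (hα : 1 < α) (hc : 0 < c) :
    ∃ C > 0, ∀ lam : ℕ → ℝ,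
      (∀ m : ℕ, 1 ≤ m → c * (m : ℝ) ^ α ≤ |lam m|) →
      ∀ μ : ℝ, 1 < μ →
        Multipliable (fun m : {m : ℕ // 1 ≤ m} => 1 + μ / |lam m.1|) ∧
        ∏' m : {m : ℕ // 1 ≤ m}, (1 + μ / |lam m.1|)
          ≤ C * Real.exp (C * μ ^ (1 / α)) := by
  have hα0 : (0:ℝ) < α := by linarith
  have hαm1 : (0:ℝ) < α - 1 := by linarith
  have hc1 : (0:ℝ) < 1 + 1/c := by positivity
  have hlog1c : 0 ≤ Real.log (1 + 1/c) := Real.log_nonneg (by nlinarith [one_div_pos.2 hc])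
  set C₀ : ℝ := Real.log (1 + 1/c) + 4*α + (2:ℝ)^(α-1)/(c*(α-1)) with hC₀def
  refine ⟨max C₀ 1, lt_of_lt_of_le one_pos (le_max_right _ _), ?_⟩
  intro lam hlam μ hμ
  have hμ0 : (0:ℝ) < μ := by linarith
  set x : ℝ := μ ^ (1/α) with hxdef
  have hx1 : (1:ℝ) ≤ x := Real.one_le_rpow hμ.le (by positivity)
  have hx0 : (0:ℝ) < x := by linarith
  have hxα : x ^ α = μ := by
    rw [hxdef, ← Real.rpow_mul hμ0.le, one_div_mul_cancel hα0.ne', Real.rpow_one]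
  set N : ℕ := ⌊x⌋₊ with hNdef
  have hN1 : 1 ≤ N := Nat.le_floor (by exact_mod_cast hx1)
  have hN1' : (1:ℝ) ≤ (N:ℝ) := by exact_mod_cast hN1
  have hNle : (N:ℝ) ≤ x := Nat.floor_le hx0.le
  have hxlt : x < (N:ℝ) + 1 := Nat.lt_floor_add_one x
  have hx2N : x ≤ 2 * (N:ℝ) := by linarith
  -- positivity of |lam m|
  have habs : ∀ m : ℕ, 1 ≤ m → 0 < |lam m| := by
    intro m hm
    have hm0 : (0:ℝ) < (m:ℝ) := by exact_mod_cast hm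
    exact lt_of_lt_of_le (mul_pos hc (Real.rpow_pos_of_pos hm0 α)) (hlam m hm)
  set g : ℕ → ℝ := fun m => Real.log (1 + μ / (c * (m:ℝ) ^ α)) with hgdef
  have hg0 : ∀ m, 0 ≤ g m := by
    intro m
    apply Real.log_nonneg
    have : 0 ≤ μ / (c * (m:ℝ) ^ α) := div_nonneg hμ0.le (by positivity)
    linarith
  have hgle : ∀ m : ℕ, g m ≤ (μ/c) * (((m:ℝ) ^ α)⁻¹) := by
    intro m
    rcases Nat.eq_zero_or_pos m with rfl | hm
    · simp [hgdef, Real.zero_rpow hα0.ne']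
    · have hm0 : (0:ℝ) < (m:ℝ) := by exact_mod_cast hm
      have hpow : 0 < (m:ℝ) ^ α := Real.rpow_pos_of_pos hm0 α
      have hy : 0 < 1 + μ / (c * (m:ℝ) ^ α) := by positivity
      have h1 : g m ≤ μ / (c * (m:ℝ) ^ α) := by
        have := Real.log_le_sub_one_of_pos hy
        simpa using this
      have h2 : μ / (c * (m:ℝ) ^ α) = (μ/c) * (((m:ℝ) ^ α)⁻¹) := by
        field_simp
      linarith [h1, h2.le]
  have hmaj : Summable (fun m : ℕ => (μ/c) * (((m:ℝ) ^ α)⁻¹)) :=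
    (Real.summable_nat_rpow_inv.mpr hα).mul_left _
  have hgsum : Summable g := hmaj.of_nonneg_of_le hg0 hgle
  -- the log terms over the subtype
  set h : {m : ℕ // 1 ≤ m} → ℝ := fun m => Real.log (1 + μ / |lam m.1|) with hhdef
  have hfpos : ∀ m : {m : ℕ // 1 ≤ m}, 0 < 1 + μ / |lam m.1| := by
    intro m
    have := habs m.1 m.2
    positivity
  have hh0 : ∀ m, 0 ≤ h m := by
    intro m
    apply Real.log_nonneg
    have h1 : 0 ≤ μ / |lam m.1| := div_nonneg hμ0.le (abs_nonneg _)
    linarith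
  have hhle : ∀ m : {m : ℕ // 1 ≤ m}, h m ≤ g m.1 := by
    intro m
    apply Real.log_le_log (hfpos m)
    have hm0 : (0:ℝ) < (m.1:ℝ) := by exact_mod_cast m.2
    have hpos : 0 < c * (m.1:ℝ) ^ α := mul_pos hc (Real.rpow_pos_of_pos hm0 α)
    have := div_le_div_of_nonneg_left hμ0.le hpos (hlam m.1 m.2)
    linarith
  have hgsub : Summable (fun m : {m : ℕ // 1 ≤ m} => g m.1) := by
    exact hgsum.subtype _
  have hhsum : Summable h := hgsub.of_nonneg_of_le hh0 hhle
  set T : ℝ := ∑' m, h m with hTdef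
  have hprod : HasProd (fun m : {m : ℕ // 1 ≤ m} => 1 + μ / |lam m.1|) (Real.exp T) := by
    have H := (hhsum.hasSum).rexp
    have he : (Real.exp ∘ h) = fun m : {m : ℕ // 1 ≤ m} => 1 + μ / |lam m.1| := by
      funext m
      exact Real.exp_log (hfpos m)
    rwa [he] at H
  refine ⟨hprod.multipliable, ?_⟩
  rw [hprod.tprod_eq]
  -- bound T
  have hT1 : T ≤ ∑' m : ℕ, g m :=
    Summable.tsum_le_tsum_of_inj (fun m => m.1) Subtype.val_injective (fun i _ => hg0 i)
      hhle hhsum hgsum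
  have hsplit : ∑' m : ℕ, g m
      = ∑ i ∈ Finset.range (N+1), g i + ∑' j : ℕ, g (j + (N+1)) :=
    (Summable.sum_add_tsum_nat_add (N+1) hgsum).symm
  -- head bound
  have hhead : ∑ i ∈ Finset.range (N+1), g i ≤ (Real.log (1 + 1/c) + 4*α) * x := by
    rw [Finset.sum_range_succ']
    have hg00 : g 0 = 0 := by simp [hgdef, Real.zero_rpow hα0.ne']
    rw [hg00, add_zero]
    have hterm : ∀ m ∈ Finset.range N,
        g (m+1) ≤ Real.log (1 + 1/c) + 2*α*(Real.sqrt x * (1 / Real.sqrt ((m:ℝ)+1))) := by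
      intro m hm
      have hmN : m + 1 ≤ N := Finset.mem_range.mp hm
      have hi0 : (0:ℝ) < ((m:ℝ)+1) := by positivity
      have hicast : ((m+1 : ℕ):ℝ) = (m:ℝ) + 1 := by push_cast; ring
      have hix : ((m:ℝ)+1) ≤ x := by
        have : ((m+1:ℕ):ℝ) ≤ (N:ℝ) := by exact_mod_cast hmN
        rw [hicast] at this
        linarith
      have hpow : 0 < ((m:ℝ)+1) ^ α := Real.rpow_pos_of_pos hi0 α
      have hia : ((m:ℝ)+1) ^ α ≤ μ := by
        rw [← hxα]
        exact Real.rpow_le_rpow hi0.le hix hα0.le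
      have hQ : (1:ℝ) ≤ μ / ((m:ℝ)+1) ^ α := (one_le_div hpow).2 hia
      have hstep1 : 1 + μ / (c * ((m:ℝ)+1) ^ α) ≤ (1 + 1/c) * (μ / ((m:ℝ)+1) ^ α) := by
        have h2 : μ / (c * ((m:ℝ)+1) ^ α) = (1/c) * (μ / ((m:ℝ)+1) ^ α) := by
          field_simp
        have h3 : (1 + 1/c) * (μ / ((m:ℝ)+1) ^ α)
            = (μ / ((m:ℝ)+1) ^ α) + (1/c) * (μ / ((m:ℝ)+1) ^ α) := by ring
        rw [h2, h3]
        linarith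
      have hgi : g (m+1) ≤ Real.log ((1 + 1/c) * (μ / ((m:ℝ)+1) ^ α)) := by
        have hy : 0 < 1 + μ / (c * ((m:ℝ)+1) ^ α) := by positivity
        have : g (m+1) = Real.log (1 + μ / (c * ((m:ℝ)+1) ^ α)) := by
          rw [hgdef]; simp only [hicast]
        rw [this]
        exact Real.log_le_log hy hstep1
      have hmul : Real.log ((1 + 1/c) * (μ / ((m:ℝ)+1) ^ α))
          = Real.log (1 + 1/c) + Real.log (μ / ((m:ℝ)+1) ^ α) :=
        Real.log_mul hc1.ne' (by positivity)
      have hdiv : μ / ((m:ℝ)+1) ^ α = (x / ((m:ℝ)+1)) ^ α := by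
        rw [Real.div_rpow hx0.le hi0.le, hxα]
      have hlogr : Real.log ((x / ((m:ℝ)+1)) ^ α) = α * Real.log (x / ((m:ℝ)+1)) :=
        Real.log_rpow (div_pos hx0 hi0) α
      have hsq : Real.log (x / ((m:ℝ)+1)) ≤ 2 * (Real.sqrt x * (1 / Real.sqrt ((m:ℝ)+1))) := by
        have h1 := aux_log_le_sqrt (div_pos hx0 hi0)
        rw [Real.sqrt_div hx0.le] at h1
        have h2 : Real.sqrt x / Real.sqrt ((m:ℝ)+1)
            = Real.sqrt x * (1 / Real.sqrt ((m:ℝ)+1)) := by ring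
        rw [h2] at h1
        exact h1
      calc g (m+1) ≤ Real.log (1 + 1/c) + Real.log (μ / ((m:ℝ)+1) ^ α) := by
            rw [← hmul]; exact hgi
        _ = Real.log (1 + 1/c) + α * Real.log (x / ((m:ℝ)+1)) := by
            rw [hdiv, hlogr]
        _ ≤ Real.log (1 + 1/c) + 2*α*(Real.sqrt x * (1 / Real.sqrt ((m:ℝ)+1))) := by
            have := mul_le_mul_of_nonneg_left hsq hα0.le
            linarith
    calc ∑ m ∈ Finset.range N, g (m+1)
        ≤ ∑ m ∈ Finset.range N,
            (Real.log (1 + 1/c) + 2*α*(Real.sqrt x * (1 / Real.sqrt ((m:ℝ)+1)))) :=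
          Finset.sum_le_sum hterm
      _ = (N:ℝ) * Real.log (1 + 1/c)
            + 2*α*Real.sqrt x * ∑ m ∈ Finset.range N, (1 / Real.sqrt ((m:ℝ)+1)) := by
          rw [Finset.sum_add_distrib, Finset.sum_const, Finset.card_range,
            nsmul_eq_mul, Finset.mul_sum]
          congr 1
          apply Finset.sum_congr rfl
          intro i _
          ring
      _ ≤ (Real.log (1 + 1/c) + 4*α) * x := by
          have hs := aux_sqrt_sum N
          have hsx : Real.sqrt (N:ℝ) ≤ Real.sqrt x := Real.sqrt_le_sqrt hNle
          have hxx : Real.sqrt x * Real.sqrt x = x := Real.mul_self_sqrt hx0.le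
          have hsnn : 0 ≤ Real.sqrt x := Real.sqrt_nonneg x
          have hsum_nonneg : 0 ≤ ∑ m ∈ Finset.range N, (1 / Real.sqrt ((m:ℝ)+1)) := by
            apply Finset.sum_nonneg; intro i _; positivity
          have e1 : 2*α*Real.sqrt x * ∑ m ∈ Finset.range N, (1 / Real.sqrt ((m:ℝ)+1))
              ≤ 2*α*Real.sqrt x * (2*Real.sqrt (N:ℝ)) :=
            mul_le_mul_of_nonneg_left hs (by positivity)
          have e2 : Real.sqrt x * Real.sqrt (N:ℝ) ≤ x := by
            calc Real.sqrt x * Real.sqrt (N:ℝ) ≤ Real.sqrt x * Real.sqrt x :=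
                  mul_le_mul_of_nonneg_left hsx hsnn
              _ = x := hxx
          have e3 : 2*α*Real.sqrt x*(2*Real.sqrt (N:ℝ))
              = 4*α*(Real.sqrt x*Real.sqrt (N:ℝ)) := by ring
          have e4 : 4*α*(Real.sqrt x*Real.sqrt (N:ℝ)) ≤ 4*α*x :=
            mul_le_mul_of_nonneg_left e2 (by positivity)
          have e5 : (N:ℝ)*Real.log (1 + 1/c) ≤ x*Real.log (1 + 1/c) :=
            mul_le_mul_of_nonneg_right hNle hlog1c
          linarith
  -- tail bound
  have htail : ∑' j : ℕ, g (j + (N+1)) ≤ (2:ℝ)^(α-1)/(c*(α-1)) * x := by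
    apply Real.tsum_le_of_sum_range_le (fun j => hg0 _)
    intro M
    have hterm : ∀ j ∈ Finset.range M,
        g (j + (N+1)) ≤ (μ/c) * ((N:ℝ) + 1 + (j:ℝ)) ^ (-α) := by
      intro j _
      have hcast : ((j + (N+1) : ℕ):ℝ) = (N:ℝ) + 1 + (j:ℝ) := by push_cast; ring
      have hpos : (0:ℝ) < (N:ℝ) + 1 + (j:ℝ) := by positivity
      have h1 := hgle (j + (N+1))
      rw [hcast] at h1
      calc g (j + (N+1)) ≤ μ/c * ((((N:ℝ) + 1 + (j:ℝ)) ^ α)⁻¹) := h1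
        _ = (μ/c) * ((N:ℝ) + 1 + (j:ℝ)) ^ (-α) := by rw [Real.rpow_neg hpos.le]
    calc ∑ j ∈ Finset.range M, g (j + (N+1))
        ≤ ∑ j ∈ Finset.range M, (μ/c) * ((N:ℝ) + 1 + (j:ℝ)) ^ (-α) :=
          Finset.sum_le_sum hterm
      _ = (μ/c) * ∑ j ∈ Finset.range M, ((N:ℝ) + 1 + (j:ℝ)) ^ (-α) := by
          rw [Finset.mul_sum]
      _ ≤ (μ/c) * ((N:ℝ) ^ (1-α) / (α-1)) := by
          apply mul_le_mul_of_nonneg_left (aux_telescope' hα hN1 M) (by positivity)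
      _ ≤ (2:ℝ)^(α-1)/(c*(α-1)) * x := by
          have hN2 : x/2 ≤ (N:ℝ) := by linarith
          have hNpow : (N:ℝ) ^ (1-α) ≤ (x/2) ^ (1-α) :=
            Real.rpow_le_rpow_of_nonpos (by positivity) hN2 (by linarith)
          have hx2 : (x/2) ^ (1-α) = x ^ (1-α) * (2:ℝ)^(α-1) := by
            rw [Real.div_rpow hx0.le (by norm_num : (0:ℝ) ≤ 2), div_eq_mul_inv,
              ← Real.rpow_neg (by norm_num : (0:ℝ) ≤ 2), neg_sub]
          have hμx : μ * x ^ (1-α) = x := by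
            rw [← hxα, ← Real.rpow_add hx0]
            norm_num
          calc (μ/c) * ((N:ℝ) ^ (1-α) / (α-1))
              ≤ (μ/c) * ((x ^ (1-α) * (2:ℝ)^(α-1)) / (α-1)) := by
                have hle2 : (N:ℝ) ^ (1-α) ≤ x ^ (1-α) * (2:ℝ)^(α-1) := by
                  rw [← hx2]; exact hNpow
                exact mul_le_mul_of_nonneg_left
                  (div_le_div_of_nonneg_right hle2 hαm1.le)
                  (div_nonneg hμ0.le hc.le)
            _ = (2:ℝ)^(α-1)/(c*(α-1)) * (μ * x ^ (1-α)) := by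
                field_simp
            _ = (2:ℝ)^(α-1)/(c*(α-1)) * x := by rw [hμx]
  -- assemble
  have hTx : T ≤ C₀ * x := by
    rw [hC₀def]
    calc T ≤ ∑' m : ℕ, g m := hT1
      _ = ∑ i ∈ Finset.range (N+1), g i + ∑' j : ℕ, g (j + (N+1)) := hsplit
      _ ≤ (Real.log (1 + 1/c) + 4*α) * x + (2:ℝ)^(α-1)/(c*(α-1)) * x :=
          add_le_add hhead htail
      _ = (Real.log (1 + 1/c) + 4*α + (2:ℝ)^(α-1)/(c*(α-1))) * x := by ring
  have hC1 : (1:ℝ) ≤ max C₀ 1 := le_max_right _ _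
  have hCx : T ≤ max C₀ 1 * x := by
    calc T ≤ C₀ * x := hTx
      _ ≤ max C₀ 1 * x := mul_le_mul_of_nonneg_right (le_max_left _ _) hx0.le
  calc Real.exp T ≤ Real.exp (max C₀ 1 * x) := Real.exp_le_exp.mpr hCx
    _ ≤ max C₀ 1 * Real.exp (max C₀ 1 * x) :=
        le_mul_of_one_le_left (Real.exp_pos _).le hC1
end

section
/- Let α > 1 and let (λ_n)_{n≥1} be a strictly decreasing sequence of negative real numbers satisfying, for constants 0 < c ≤ C, c·(n−m)·n^{α−1} < λ_m − λ_n < C·(n−m)·n^{α−1} for all n > m ≥ 1. For N ≥ 1 set M_N := ⌊((N + c)/c)^{1/(α−1)}⌋ + 2. Then there exists i ∈ {0, 1, …, M_N − 1} such that the number μ := N + c·(1 + 2i)/(2·M_N) satisfies |λ_m − λ_n − μ| ≥ c/(2·M_N) for all m, n ≥ 1. -/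
/-- `M_N = ⌊((N + c)/c)^{1/(α-1)}⌋ + 2`. -/
noncomputable def MN (c α : ℝ) (N : ℕ) : ℕ :=
  ⌊(((N : ℝ) + c) / c) ^ (1 / (α - 1))⌋₊ + 2

/-- In the window `[N, N + c]` there is an explicit grid point
`μ = N + c(1 + 2i)/(2 M_N)`, `0 ≤ i ≤ M_N - 1`, that is quantitatively non-resonant:
`|λ_m - λ_n - μ| ≥ c/(2 M_N)` for all `m, n ≥ 1`. -/
theorem statement16 (α c C : ℝ) (hα : 1 < α) (hc : 0 < c) (hcC : c ≤ C)
    (lam : ℕ → ℝ)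
    (hdec : ∀ n, 1 ≤ n → lam (n + 1) < lam n)
    (hneg : ∀ n, 1 ≤ n → lam n < 0)
    (hloc : ∀ m n : ℕ, 1 ≤ m → m < n →
      c * ((n : ℝ) - (m : ℝ)) * (n : ℝ) ^ (α - 1) < lam m - lam n ∧
      lam m - lam n < C * ((n : ℝ) - (m : ℝ)) * (n : ℝ) ^ (α - 1))
    (N : ℕ) (hN : 1 ≤ N) :
    ∃ i : ℕ, i < MN c α N ∧
      ∀ m n : ℕ, 1 ≤ m → 1 ≤ n →
        c / (2 * (MN c α N : ℝ))
          ≤ |lam m - lam n -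
              ((N : ℝ) + c * (1 + 2 * (i : ℝ)) / (2 * (MN c α N : ℝ)))| := by
  set M := MN c α N with hMdef
  have hM2 : 2 ≤ M := by rw [hMdef]; unfold MN; omega
  have hMpos : (0:ℝ) < (M:ℝ) := by exact_mod_cast (by omega : 0 < M)
  have hαpos : (0:ℝ) < α - 1 := by linarith
  have hN1 : (1:ℝ) ≤ (N:ℝ) := by exact_mod_cast hN
  -- basic gap lemma
  have hgap : ∀ m n : ℕ, 1 ≤ m → m < n → c < lam m - lam n := by
    intro m n hm hmn
    have h1 := (hloc m n hm hmn).1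
    have hn1 : (1:ℝ) ≤ (n:ℝ) := by exact_mod_cast le_trans hm hmn.le
    have hr : (1:ℝ) ≤ (n:ℝ) ^ (α-1) := Real.one_le_rpow hn1 hαpos.le
    have hd : (1:ℝ) ≤ (n:ℝ) - (m:ℝ) := by
      have : (m:ℝ) + 1 ≤ (n:ℝ) := by exact_mod_cast hmn
      linarith
    have hx : (1:ℝ) ≤ ((n:ℝ) - (m:ℝ)) * (n:ℝ) ^ (α-1) := by nlinarith
    nlinarith [h1, mul_le_mul_of_nonneg_left hx hc.le]
  have hmlt : ∀ m n : ℕ, 1 ≤ m → 1 ≤ n → lam n < lam m → m < n := by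
    intro m n hm hn hlt
    by_contra h
    push_neg at h
    rcases eq_or_lt_of_le h with h | h
    · rw [h] at hlt; exact lt_irrefl _ hlt
    · have := hgap n m hn h
      linarith
  by_contra hcon
  push_neg at hcon
  have H : ∀ i : Fin M, ∃ m n : ℕ, 1 ≤ m ∧ 1 ≤ n ∧
      |lam m - lam n - ((N : ℝ) + c * (1 + 2 * ((i : ℕ) : ℝ)) / (2 * (M : ℝ)))|
        < c / (2 * (M : ℝ)) := fun i => hcon i i.2
  choose fm fn h1 h2 hball using H
  have key1 : ∀ i : Fin M,
      (N:ℝ) + c * ((i:ℕ):ℝ) / (M:ℝ) < lam (fm i) - lam (fn i) := by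
    intro i
    have h := (abs_lt.mp (hball i)).1
    have he : c * (1 + 2*((i:ℕ):ℝ))/(2*(M:ℝ)) - c/(2*(M:ℝ)) = c * ((i:ℕ):ℝ) / (M:ℝ) := by
      field_simp; ring
    linarith
  have key2 : ∀ i : Fin M,
      lam (fm i) - lam (fn i) < (N:ℝ) + c * (((i:ℕ):ℝ)+1) / (M:ℝ) := by
    intro i
    have h := (abs_lt.mp (hball i)).2
    have he : c * (1 + 2*((i:ℕ):ℝ))/(2*(M:ℝ)) + c/(2*(M:ℝ)) = c * (((i:ℕ):ℝ)+1) / (M:ℝ) := by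
      field_simp; ring
    linarith
  have keymn : ∀ i : Fin M, fm i < fn i := by
    intro i
    have hlow := key1 i
    have hpos : 0 ≤ c * ((i:ℕ):ℝ) / (M:ℝ) := by positivity
    exact hmlt _ _ (h1 i) (h2 i) (by linarith)
  have keyn : ∀ i : Fin M, fn i + 2 ≤ M := by
    intro i
    have hmn := keymn i
    have hl := (hloc (fm i) (fn i) (h1 i) hmn).1
    set n := fn i with hn
    have hn1 : (1:ℝ) ≤ (n:ℝ) := by exact_mod_cast le_trans (h1 i) hmn.le
    have hd : (1:ℝ) ≤ (n:ℝ) - ((fm i):ℝ) := by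
      have : ((fm i):ℝ) + 1 ≤ (n:ℝ) := by exact_mod_cast hmn
      linarith
    have hrpos : (0:ℝ) < (n:ℝ) ^ (α-1) := Real.rpow_pos_of_pos (by linarith) _
    have hcn : c * (n:ℝ) ^ (α-1) ≤ c * ((n:ℝ) - ((fm i):ℝ)) * (n:ℝ) ^ (α-1) := by
      have := mul_le_mul_of_nonneg_right (mul_le_mul_of_nonneg_left hd hc.le) hrpos.le
      nlinarith [this]
    have hiM : (((i:ℕ):ℝ)+1) ≤ (M:ℝ) := by exact_mod_cast i.2
    have hfrac : c * (((i:ℕ):ℝ)+1) / (M:ℝ) ≤ c := by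
      rw [div_le_iff₀ hMpos]
      nlinarith [hc.le]
    have hup : lam (fm i) - lam (fn i) < (N:ℝ) + c := by
      have := key2 i
      linarith
    have hpow : (n:ℝ) ^ (α-1) < ((N:ℝ) + c) / c := by
      rw [lt_div_iff₀ hc]
      nlinarith
    have hnb : (n:ℝ) < (((N:ℝ) + c) / c) ^ (1/(α-1)) := by
      have hbase : (0:ℝ) ≤ (n:ℝ) ^ (α-1) := hrpos.le
      have h := Real.rpow_lt_rpow hbase hpow (by positivity : (0:ℝ) < 1/(α-1))
      have hid : ((n:ℝ) ^ (α-1)) ^ (1/(α-1)) = (n:ℝ) := by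
        rw [← Real.rpow_mul (by linarith : (0:ℝ) ≤ (n:ℝ)), mul_one_div,
          div_self (ne_of_gt hαpos), Real.rpow_one]
      rwa [hid] at h
    have : n ≤ ⌊(((N:ℝ) + c) / c) ^ (1/(α-1))⌋₊ := Nat.le_floor hnb.le
    have hMeq : M = ⌊(((N:ℝ) + c) / c) ^ (1/(α-1))⌋₊ + 2 := hMdef
    omega
  -- injectivity
  have habs : ∀ i j : Fin M, i < j → fn i ≠ fn j := by
    intro i j hij hEq
    have hij' : ((i:ℕ):ℝ) + 1 ≤ ((j:ℕ):ℝ) := by exact_mod_cast hij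
    have hstep : c * (((i:ℕ):ℝ)+1) / (M:ℝ) ≤ c * ((j:ℕ):ℝ) / (M:ℝ) := by
      rw [div_le_div_iff₀ hMpos hMpos]
      exact mul_le_mul_of_nonneg_right (mul_le_mul_of_nonneg_left hij' hc.le) hMpos.le
    have k2i := key2 i
    have k1j := key1 j
    have hlt : lam (fm i) - lam (fn i) < lam (fm j) - lam (fn j) := by linarith
    rw [hEq] at hlt
    have hfm : fm j < fm i := hmlt _ _ (h1 j) (h1 i) (by linarith)
    have hg := hgap (fm j) (fm i) (h1 j) hfm
    have k1i := key1 i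
    rw [hEq] at k1i
    have k2j := key2 j
    have hjM : ((j:ℕ):ℝ) + 1 ≤ (M:ℝ) := by exact_mod_cast j.2
    have hub : c * (((j:ℕ):ℝ)+1) / (M:ℝ) ≤ c := by
      rw [div_le_iff₀ hMpos]; nlinarith [hc.le]
    have hlb : 0 ≤ c * ((i:ℕ):ℝ) / (M:ℝ) := by positivity
    linarith
  have hinj : Function.Injective fn := by
    intro i j h
    rcases lt_trichotomy i j with hlt | heq | hgt
    · exact absurd h (habs i j hlt)
    · exact heq
    · exact absurd h.symm (habs j i hgt)
  have hcard := Finset.card_le_card_of_injOn (f := fn) (s := Finset.univ)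
    (t := Finset.Icc 2 (M - 2))
    (by
      intro i _
      rw [Finset.mem_coe, Finset.mem_Icc]
      have := keymn i
      have := keyn i
      have := h1 i
      omega)
    (fun a _ b _ h => hinj h)
  rw [Finset.card_univ, Fintype.card_fin, Nat.card_Icc] at hcard
  omega
end

section
/- Let α > 1 and let (λ_n)_{n≥1} be a strictly decreasing sequence of negative real numbers satisfying, for constants 0 < c ≤ C, c·(n−m)·n^{α−1} < λ_m − λ_n < C·(n−m)·n^{α−1} for all n > m ≥ 1. Define Dist_α(λ) := inf_{i,j≥1} |λ_j − λ_i + λ|. Then there exist positive constants c₁, c₂, C₀ such that for every N ≥ 1 there exists μ_N ∈ [N, N + C₀] with Dist_α(μ_N) ≥ c₁·e^{−c₂·μ_N^{1/α}}. -/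
lemma pow_div_factorial_le_exp {x : ℝ} (hx : 0 ≤ x) (k : ℕ) :
    x ^ k / k.factorial ≤ Real.exp x := by
  calc x ^ k / k.factorial
      ≤ ∑ i ∈ Finset.range (k + 1), x ^ i / i.factorial := by
        exact Finset.single_le_sum (f := fun i => x ^ i / (i.factorial : ℝ))
          (fun i _ => by positivity) (Finset.self_mem_range_succ k)
    _ ≤ Real.exp x := Real.sum_le_exp_of_nonneg hx _

set_option maxHeartbeats 1000000 in
/-- Every window `[N, N + C₀]` contains an exponentially
quantitatively non-resonant damping parameter:
`Dist_α(μ_N) ≥ c₁ e^{-c₂ μ_N^{1/α}}`. -/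
theorem statement18 (α c C : ℝ) (hα : 1 < α) (hc : 0 < c) (hcC : c ≤ C)
    (lam : ℕ → ℝ)
    (hdec : ∀ n, 1 ≤ n → lam (n + 1) < lam n)
    (hneg : ∀ n, 1 ≤ n → lam n < 0)
    (hloc : ∀ m n : ℕ, 1 ≤ m → m < n →
      c * ((n : ℝ) - (m : ℝ)) * (n : ℝ) ^ (α - 1) < lam m - lam n ∧
      lam m - lam n < C * ((n : ℝ) - (m : ℝ)) * (n : ℝ) ^ (α - 1)) :
    ∃ c₁ > 0, ∃ c₂ > 0, ∃ C₀ > 0, ∀ N : ℕ, 1 ≤ N →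
      ∃ μ : ℝ, (N : ℝ) ≤ μ ∧ μ ≤ (N : ℝ) + C₀ ∧
        c₁ * Real.exp (-(c₂ * μ ^ (1 / α))) ≤ distAlpha lam μ := by
  have hα0 : (0:ℝ) < α := by linarith
  have hα1 : (0:ℝ) < α - 1 := by linarith
  set a : ℕ := ⌈1 / (α - 1)⌉₊ with ha_def
  set B : ℕ := ⌈3 / c⌉₊ with hB_def
  have hB1 : 1 ≤ B := Nat.one_le_iff_ne_zero.mpr (by
    simp only [hB_def, ne_eq, Nat.ceil_eq_zero, not_le]
    positivity)
  have hcB : (3:ℝ) ≤ c * B := by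
    have h := Nat.le_ceil (3 / c)
    calc (3:ℝ) = c * (3 / c) := by field_simp
      _ ≤ c * B := mul_le_mul_of_nonneg_left h hc.le
  have haα : (1:ℝ) ≤ (a : ℝ) * (α - 1) := by
    have h := Nat.le_ceil (1 / (α - 1))
    calc (1:ℝ) = (1 / (α - 1)) * (α - 1) := by field_simp
      _ ≤ (a : ℝ) * (α - 1) := mul_le_mul_of_nonneg_right h hα1.le
  set k : ℕ := ⌈2 * (a : ℝ) * α⌉₊ with hk_def
  have hk : 2 * (a : ℝ) * α ≤ k := Nat.le_ceil _
  refine ⟨1 / (3 * k.factorial * (B : ℝ) ^ (2 * a)), by positivity, 1, one_pos, 1, one_pos, ?_⟩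
  intro N hN
  have hN1 : (1:ℝ) ≤ (N : ℝ) := by exact_mod_cast hN
  -- the cutoff index J and candidate count M
  set J : ℕ := (B * N) ^ a with hJ_def
  have hBN1 : 1 ≤ B * N := Nat.one_le_iff_ne_zero.mpr (by positivity)
  have hJ1 : 1 ≤ J := Nat.one_le_pow _ _ (by omega)
  set M : ℕ := J ^ 2 with hM_def
  have hM1 : 1 ≤ M := Nat.one_le_pow _ _ (by omega)
  have hM0 : (0:ℝ) < (M : ℝ) := by exact_mod_cast hM1
  -- the resonance set
  set R : Finset ℝ :=
    ((Finset.Icc 1 J) ×ˢ (Finset.Icc 1 J)).image (fun p => lam p.1 - lam p.2) with hR_def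
  have hRcard : R.card ≤ M := by
    calc R.card ≤ ((Finset.Icc 1 J) ×ˢ (Finset.Icc 1 J)).card := Finset.card_image_le
      _ = J * J := by simp [Nat.card_Icc]
      _ = M := (sq J).symm
  -- pigeonhole: some candidate point avoids all resonances by 1/(3M)
  have hpg : ∃ t ∈ Finset.range (M + 1),
      ∀ ρ ∈ R, 1 / (3 * (M : ℝ)) ≤ |((N : ℝ) + (t : ℝ) / (M : ℝ)) - ρ| := by
    by_contra hcon
    push_neg at hcon
    choose! g hgR hglt using hcon
    have hcard : R.card < (Finset.range (M + 1)).card := by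
      rw [Finset.card_range]; omega
    obtain ⟨s, hs, t, ht, hst, hgst⟩ :=
      Finset.exists_ne_map_eq_of_card_lt_of_maps_to hcard hgR
    have h1 := hglt s hs
    have h2 := hglt t ht
    rw [hgst] at h1
    have hdiff : (1:ℝ) / (M : ℝ) ≤
        |((N : ℝ) + (s : ℝ) / (M : ℝ)) - ((N : ℝ) + (t : ℝ) / (M : ℝ))| := by
      have h3 : ((N : ℝ) + (s : ℝ) / (M : ℝ)) - ((N : ℝ) + (t : ℝ) / (M : ℝ))
          = ((s : ℝ) - (t : ℝ)) / (M : ℝ) := by ring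
      rw [h3, abs_div, abs_of_pos hM0]
      gcongr
      have : (1:ℝ) ≤ |(s : ℤ) - (t : ℤ)| := by
        have hne : (s : ℤ) - (t : ℤ) ≠ 0 := by
          have : (s : ℤ) ≠ (t : ℤ) := by exact_mod_cast hst
          omega
        exact_mod_cast Int.one_le_abs hne
      calc (1:ℝ) ≤ |((s : ℤ) - (t : ℤ) : ℤ)| := by exact_mod_cast this
        _ = |(s : ℝ) - (t : ℝ)| := by push_cast; rfl
    have htri : |((N : ℝ) + (s : ℝ) / (M : ℝ)) - ((N : ℝ) + (t : ℝ) / (M : ℝ))|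
        ≤ |((N : ℝ) + (s : ℝ) / (M : ℝ)) - g t| + |((N : ℝ) + (t : ℝ) / (M : ℝ)) - g t| := by
      rw [abs_sub_comm ((N : ℝ) + (t : ℝ) / (M : ℝ)) (g t)]
      exact abs_sub_le _ _ _
    have : (1:ℝ) / (M : ℝ) < 2 / (3 * (M : ℝ)) := by
      calc (1:ℝ) / (M : ℝ) ≤ _ := hdiff
        _ ≤ _ := htri
        _ < 1 / (3 * (M : ℝ)) + 1 / (3 * (M : ℝ)) := by exact add_lt_add h1 h2
        _ = 2 / (3 * (M : ℝ)) := by ring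
    rw [div_lt_div_iff₀ hM0 (by positivity)] at this
    nlinarith
  obtain ⟨t, htmem, hfar⟩ := hpg
  have htM : t ≤ M := by
    have := Finset.mem_range.mp htmem; omega
  set μ : ℝ := (N : ℝ) + (t : ℝ) / (M : ℝ) with hμ_def
  have hμlb : (N : ℝ) ≤ μ := by
    have h : (0:ℝ) ≤ (t : ℝ) / (M : ℝ) := by positivity
    rw [hμ_def]; linarith
  have hμub : μ ≤ (N : ℝ) + 1 := by
    have h : (t : ℝ) / (M : ℝ) ≤ 1 := by
      rw [div_le_one hM0]; exact_mod_cast htM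
    rw [hμ_def]; linarith
  refine ⟨μ, hμlb, hμub, ?_⟩
  -- key growth bound: (J : ℝ) ^ (α - 1) ≥ B * N
  have hJr : ((B * N : ℕ) : ℝ) ≤ (J : ℝ) ^ (α - 1) := by
    have hx1 : (1:ℝ) ≤ ((B * N : ℕ) : ℝ) := by exact_mod_cast hBN1
    have hJc : (J : ℝ) = ((B * N : ℕ) : ℝ) ^ (a : ℕ) := by
      rw [hJ_def]; push_cast; ring
    rw [hJc, ← Real.rpow_natCast ((B * N : ℕ) : ℝ) a,
      ← Real.rpow_mul (by positivity)]
    calc ((B * N : ℕ) : ℝ) = ((B * N : ℕ) : ℝ) ^ (1:ℝ) := (Real.rpow_one _).symm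
      _ ≤ _ := Real.rpow_le_rpow_of_exponent_le hx1 haα
  -- lower bound on distAlpha
  have hdist : 1 / (3 * (M : ℝ)) ≤ distAlpha lam μ := by
    unfold distAlpha
    have hne : {x : ℝ | ∃ i, 1 ≤ i ∧ ∃ j, 1 ≤ j ∧ x = |lam j - lam i + μ|}.Nonempty :=
      ⟨|lam 1 - lam 1 + μ|, 1, le_refl 1, 1, le_refl 1, rfl⟩
    apply le_csInf hne
    rintro x ⟨i, hi, j, hj, rfl⟩
    have hr1 : 1 / (3 * (M : ℝ)) ≤ 1 := by
      rw [div_le_one (by positivity)]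
      have : (1:ℝ) ≤ (M : ℝ) := by exact_mod_cast hM1
      linarith
    rcases lt_or_ge i j with hij | hij
    · -- i < j
      have hlj := (hloc i j hi hij).1
      have hji1 : (1:ℝ) ≤ (j : ℝ) - (i : ℝ) := by
        have : i + 1 ≤ j := hij
        have : ((i:ℝ) + 1) ≤ (j:ℝ) := by exact_mod_cast this
        linarith
      rcases le_or_gt j J with hjJ | hjJ
      · -- resonance case: value is in R
        have hmem : lam i - lam j ∈ R := by
          rw [hR_def]
          apply Finset.mem_image.mpr
          exact ⟨(i, j), Finset.mem_product.mpr
            ⟨Finset.mem_Icc.mpr ⟨hi, le_trans hij.le hjJ⟩,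
             Finset.mem_Icc.mpr ⟨hj, hjJ⟩⟩, rfl⟩
        have := hfar _ hmem
        calc 1 / (3 * (M : ℝ)) ≤ |μ - (lam i - lam j)| := this
          _ = |lam j - lam i + μ| := by congr 1; ring
      · -- far case: λ_i - λ_j is huge
        have hjr : (J : ℝ) ^ (α - 1) ≤ (j : ℝ) ^ (α - 1) := by
          apply Real.rpow_le_rpow (by positivity) _ hα1.le
          exact_mod_cast hjJ.le
        have hbig : (N : ℝ) + 2 ≤ lam i - lam j := by
          have h1 : c * ((j : ℝ) - (i : ℝ)) * (j : ℝ) ^ (α - 1)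
              ≥ c * (j : ℝ) ^ (α - 1) := by
            have h0 : (0:ℝ) ≤ (j : ℝ) ^ (α - 1) := by positivity
            nlinarith [mul_nonneg (mul_nonneg hc.le
              (by linarith : (0:ℝ) ≤ (j : ℝ) - (i : ℝ) - 1)) h0]
          have h2 : c * (J : ℝ) ^ (α - 1) ≤ c * (j : ℝ) ^ (α - 1) :=
            mul_le_mul_of_nonneg_left hjr hc.le
          have h3 : c * ((B * N : ℕ) : ℝ) ≤ c * (J : ℝ) ^ (α - 1) :=
            mul_le_mul_of_nonneg_left hJr hc.le
          have h4 : (3:ℝ) * N ≤ c * ((B * N : ℕ) : ℝ) := by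
            have h := mul_le_mul_of_nonneg_right hcB (show (0:ℝ) ≤ (N:ℝ) by positivity)
            push_cast
            linarith [h]
          have h5 : (N : ℝ) + 2 ≤ 3 * (N : ℝ) := by linarith
          linarith
        have habs : (1:ℝ) ≤ |lam j - lam i + μ| := by
          have : lam j - lam i + μ ≤ -1 := by linarith
          rw [abs_of_nonpos (by linarith)]
          linarith
        linarith
    · -- j ≤ i: value is at least μ ≥ 1
      have hpos : 0 ≤ lam j - lam i := by
        rcases eq_or_lt_of_le hij with heq | hlt
        · rw [heq]; simp
        · have := (hloc j i hj hlt).1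
          have hii : (1:ℝ) ≤ (i : ℝ) - (j : ℝ) := by
            have : j + 1 ≤ i := hlt
            have : ((j:ℝ) + 1) ≤ (i:ℝ) := by exact_mod_cast this
            linarith
          have h0 : (0:ℝ) < (i : ℝ) ^ (α - 1) := by
            have : (0:ℝ) < (i : ℝ) := by
              have : (1:ℝ) ≤ (i:ℝ) := by exact_mod_cast le_trans hj hij
              linarith
            positivity
          nlinarith [mul_pos (mul_pos hc (show (0:ℝ) < (i:ℝ) - (j:ℝ) by linarith)) h0]
      have : (1:ℝ) ≤ lam j - lam i + μ := by linarith
      calc 1 / (3 * (M : ℝ)) ≤ 1 := hr1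
        _ ≤ lam j - lam i + μ := this
        _ ≤ |lam j - lam i + μ| := le_abs_self _
  -- the exponential is below 1/(3M)
  have hexp : 1 / (3 * (k.factorial : ℝ) * (B : ℝ) ^ (2 * a)) * Real.exp (-(1 * μ ^ (1 / α)))
      ≤ 1 / (3 * (M : ℝ)) := by
    have hμ1 : (1:ℝ) ≤ μ := le_trans hN1 hμlb
    have hNr : (N : ℝ) ^ ((1:ℝ) / α) ≤ μ ^ (1 / α) :=
      Real.rpow_le_rpow (by positivity) hμlb (by positivity)
    have hNrnn : (0:ℝ) ≤ (N : ℝ) ^ ((1:ℝ) / α) := by positivity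
    -- N^{2a} ≤ k! * exp(μ^{1/α})
    have hpow : ((N : ℝ) ^ ((1:ℝ) / α)) ^ k = (N : ℝ) ^ ((1 / α) * (k : ℝ)) := by
      rw [← Real.rpow_natCast ((N : ℝ) ^ ((1:ℝ) / α)) k, ← Real.rpow_mul (by positivity)]
    have hexpo : (2 * a : ℝ) ≤ (1 / α) * (k : ℝ) := by
      rw [one_div, inv_mul_eq_div, le_div_iff₀ hα0]
      linarith
    have hNN : (N : ℝ) ^ (2 * a : ℕ) ≤ (N : ℝ) ^ ((1 / α) * (k : ℝ)) := by
      calc (N : ℝ) ^ (2 * a : ℕ) = (N : ℝ) ^ ((2 * a : ℕ) : ℝ) :=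
            (Real.rpow_natCast _ _).symm
        _ ≤ (N : ℝ) ^ ((1 / α) * (k : ℝ)) := by
            apply Real.rpow_le_rpow_of_exponent_le hN1
            push_cast
            push_cast at hexpo
            linarith
    have hfact : (N : ℝ) ^ (2 * a : ℕ) ≤ (k.factorial : ℝ) * Real.exp (μ ^ (1 / α)) := by
      have h1 : ((N : ℝ) ^ ((1:ℝ) / α)) ^ k / k.factorial ≤ Real.exp ((N : ℝ) ^ ((1:ℝ) / α)) :=
        pow_div_factorial_le_exp hNrnn k
      have h2 : Real.exp ((N : ℝ) ^ ((1:ℝ) / α)) ≤ Real.exp (μ ^ (1 / α)) :=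
        Real.exp_le_exp.mpr hNr
      have hfpos : (0:ℝ) < (k.factorial : ℝ) := by
        exact_mod_cast k.factorial_pos
      rw [div_le_iff₀ hfpos] at h1
      calc (N : ℝ) ^ (2 * a : ℕ) ≤ (N : ℝ) ^ ((1 / α) * (k : ℝ)) := hNN
        _ = ((N : ℝ) ^ ((1:ℝ) / α)) ^ k := hpow.symm
        _ ≤ Real.exp ((N : ℝ) ^ ((1:ℝ) / α)) * k.factorial := h1
        _ ≤ Real.exp (μ ^ (1 / α)) * k.factorial := by
            apply mul_le_mul_of_nonneg_right h2 hfpos.le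
        _ = (k.factorial : ℝ) * Real.exp (μ ^ (1 / α)) := by ring
    have hMc : (M : ℝ) = (B : ℝ) ^ (2 * a) * (N : ℝ) ^ (2 * a) := by
      rw [hM_def, hJ_def]
      push_cast
      rw [← pow_mul, mul_comm a 2, mul_pow]
    rw [one_mul, Real.exp_neg]
    rw [div_mul_eq_mul_div, one_mul, div_le_div_iff₀ (by positivity) (by positivity)]
    rw [hMc]
    have hepos : (0:ℝ) < Real.exp (μ ^ (1 / α)) := Real.exp_pos _
    have hBpos : (0:ℝ) < (B : ℝ) ^ (2 * a) := by
      have : (0:ℝ) < (B:ℝ) := by exact_mod_cast hB1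
      positivity
    have key : 3 * ((B : ℝ) ^ (2 * a) * (N : ℝ) ^ (2 * a))
        ≤ 3 * ((B : ℝ) ^ (2 * a) * ((k.factorial : ℝ) * Real.exp (μ ^ (1 / α)))) := by
      apply mul_le_mul_of_nonneg_left _ (by norm_num)
      exact mul_le_mul_of_nonneg_left hfact hBpos.le
    calc (Real.exp (μ ^ (1 / α)))⁻¹ * (3 * ((B : ℝ) ^ (2 * a) * (N : ℝ) ^ (2 * a)))
        ≤ (Real.exp (μ ^ (1 / α)))⁻¹ *
            (3 * ((B : ℝ) ^ (2 * a) * ((k.factorial : ℝ) * Real.exp (μ ^ (1 / α))))) := by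
          apply mul_le_mul_of_nonneg_left key (by positivity)
      _ = 3 * (k.factorial : ℝ) * (B : ℝ) ^ (2 * a) := by
          field_simp
      _ = 1 * (3 * (k.factorial : ℝ) * (B : ℝ) ^ (2 * a)) := by ring
  exact le_trans hexp hdist
end
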